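/- arXiv:1504.03129 — 5 statements merged into one kernel-verified Lean document; each statement's English description precedes it below -/
import Mathlib

section
/- Suppose u,v ∈ Z belong to distinct connected components C_u and C_v of Z, and F_u ∩ F_v ≠ ∅. If |C_u| > 3 and |C_v| > 3, then |C_u| = |C_v| =: m and, up to swapping u and v, there are distinct elements f_1,…,f_{2m} ∈ F such that, with indices taken mod 2m (so f_{2m+1} = f_1 and f_{2m+2} = f_2), C_u = { f_{2i-1} - f_{2i} - f_{2i+1} : i = 1,…,m } and C_v = { f_{2i} - f_{2i+1} - f_{2i+2} : i = 1,…,m }. -/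
open Finset

/-- The standard negative definite bilinear form on `ℤ^N`:
`x·y = -∑ i, x i * y i`. -/
def negForm (N : ℕ) (u v : Fin N → ℤ) : ℤ := -∑ i, u i * v i

/-- A canonical basis of `ℤ^N`: a set of `N` vectors with `e·e = -1` and
distinct elements pairwise orthogonal. -/
def IsCanonicalBasis (N : ℕ) (E : Finset (Fin N → ℤ)) : Prop :=
  E.card = N ∧ (∀ e ∈ E, negForm N e e = -1) ∧
    ∀ e ∈ E, ∀ f ∈ E, e ≠ f → negForm N e f = 0

/-- The equivalence relation on `ℤ^N` generated by `u ~ v` iff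
`u, v ∈ V` and `u·v ≠ 0`. -/
def Conn (N : ℕ) (V : Finset (Fin N → ℤ)) : (Fin N → ℤ) → (Fin N → ℤ) → Prop :=
  Relation.EqvGen fun u v => u ∈ V ∧ v ∈ V ∧ negForm N u v ≠ 0

open scoped Classical in
/-- The connected component of `v` in `V`. -/
noncomputable def compOf (N : ℕ) (V : Finset (Fin N → ℤ)) (v : Fin N → ℤ) :
    Finset (Fin N → ℤ) :=
  V.filter fun u => Conn N V u v

/-- A circular subset of `ℤ^N`. -/
def IsCircular (N : ℕ) (V : Finset (Fin N → ℤ)) : Prop :=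
  (∀ v ∈ V, 3 ≤ (compOf N V v).card) ∧
  (∀ u ∈ V, ∀ v ∈ V, u ≠ v →
    negForm N u v = -1 ∨ negForm N u v = 0 ∨ negForm N u v = 1) ∧
  (∀ v ∈ V,
    (V.filter fun u => u ≠ v ∧ (negForm N u v = 1 ∨ negForm N u v = -1)).card = 2)

/-- `E` is a canonical basis adapted to `V`:  `∑_{v ∈ V} v = -∑_{e ∈ E} e`. -/
def IsAdaptedBasis (N : ℕ) (E V : Finset (Fin N → ℤ)) : Prop :=
  IsCanonicalBasis N E ∧ (∑ v ∈ V, v) = -∑ e ∈ E, e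

open scoped Classical in
/-- A semipositive circular subset: each connected component contains exactly one
(unordered) pair of distinct vectors `u, v` with `u·v = -1`. -/
def IsSemipositive (N : ℕ) (V : Finset (Fin N → ℤ)) : Prop :=
  IsCircular N V ∧ ∀ v₀ ∈ V,
    (((compOf N V v₀) ×ˢ (compOf N V v₀)).filter fun p =>
      p.1 ≠ p.2 ∧ negForm N p.1 p.2 = -1).card = 2

/-- A positive circular subset: `u·v ≥ 0` for all distinct `u, v ∈ V`. -/
def IsPositive (N : ℕ) (V : Finset (Fin N → ℤ)) : Prop :=
  IsCircular N V ∧ ∀ u ∈ V, ∀ v ∈ V, u ≠ v → 0 ≤ negForm N u v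

/-- A single blowup of a string of nonnegative integers. -/
inductive IsBlowup : List ℕ → List ℕ → Prop
  | left (a b : ℕ) (m : List ℕ) :
      IsBlowup (a :: (m ++ [b])) (1 :: (a + 1) :: (m ++ [b + 1]))
  | middle (a b : ℕ) (p s : List ℕ) :
      IsBlowup (p ++ a :: b :: s) (p ++ (a + 1) :: 1 :: (b + 1) :: s)
  | right (a b : ℕ) (m : List ℕ) :
      IsBlowup (a :: (m ++ [b])) ((a + 1) :: (m ++ [b + 1, 1]))

/-- An iterated blowup of `(0,0)`. -/
def IsIteratedBlowup (s : List ℕ) : Prop :=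
  Relation.ReflTransGen IsBlowup [0, 0] s

/-- A `(-2)`-expansion of a string of negative integers. -/
inductive IsNeg2Expansion : List ℤ → List ℤ → Prop
  | first (l : List ℤ) (a : ℤ) :
      IsNeg2Expansion (-2 :: (l ++ [a])) (-2 :: -2 :: (l ++ [a - 1]))
  | second (a : ℤ) (l : List ℤ) :
      IsNeg2Expansion (-2 :: a :: l) (-2 :: (a - 1) :: (l ++ [-2]))

/-- A cyclic listing of (the elements of) a connected component `C` of a circular
subset: a cyclically indexed enumeration of `C` in which consecutive elements
pair to `±1`. -/
def IsCyclicListing (N : ℕ) (C : Finset (Fin N → ℤ)) (m : ℕ)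
    (w : ZMod m → (Fin N → ℤ)) : Prop :=
  C.card = m ∧ Function.Injective w ∧ (∀ i, w i ∈ C) ∧ (∀ c ∈ C, ∃ i, w i = c) ∧
    ∀ i : ZMod m, negForm N (w i) (w (i + 1)) = 1 ∨ negForm N (w i) (w (i + 1)) = -1

/-- The index in the cyclic string at which the `i`-th block starts. -/
def blockStart {t : ℕ} (y : Fin t → ℕ) (i : Fin t) : ℕ := ∑ i' ∈ Finset.Iio i, y i'

/-- The string of squares `(-x₁-2, -2,…,-2, …, -xₜ-2, -2,…,-2)` of the lattice
`Λ_Γ`, as a function on `Fin n` (where `n = ∑ yᵢ`). -/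
def sqOf {t : ℕ} (x y : Fin t → ℕ) (n : ℕ) (j : Fin n) : ℤ :=
  -2 - ∑ i : Fin t, if (j : ℕ) = blockStart y i then (x i : ℤ) else 0

/-- The Gram matrix of the lattice `Λ_Γ`: diagonal given by `sq`, consecutive
vertices pair to `1`, the last and first vertices pair to `(-1)^d`, all other
pairs are orthogonal. -/
def gramOf (n : ℕ) (sq : Fin n → ℤ) (d : ℕ) (i j : Fin n) : ℤ :=
  if i = j then sq i
  else if (j : ℕ) = (i : ℕ) + 1 ∨ (i : ℕ) = (j : ℕ) + 1 then 1
  else if ((i : ℕ) = 0 ∧ (j : ℕ) = n - 1) ∨ ((j : ℕ) = 0 ∧ (i : ℕ) = n - 1)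
    then (-1) ^ d
  else 0

namespace Stmt4Aux

/-- `z = a - b - c` with `a,b,c` distinct elements of `F`. -/
def IsDecomp (N : ℕ) (F : Finset (Fin N → ℤ)) (z a b c : Fin N → ℤ) : Prop :=
  a ∈ F ∧ b ∈ F ∧ c ∈ F ∧ a ≠ b ∧ a ≠ c ∧ b ≠ c ∧ z = a - b - c

/-- Master hypothesis bundle. -/
def Good (N : ℕ) (Z F : Finset (Fin N → ℤ)) : Prop :=
  IsPositive N Z ∧ IsCanonicalBasis N F ∧
    (∀ z ∈ Z, ∃ a b c, IsDecomp N F z a b c) ∧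
    (∀ f ∈ F, (Z.filter fun z => negForm N z f = -1).card = 1) ∧
    (∀ f ∈ F, (Z.filter fun z => negForm N z f = 1).card = 2)

variable {N : ℕ} {Z F : Finset (Fin N → ℤ)}

theorem negForm_comm (x y : Fin N → ℤ) : negForm N x y = negForm N y x := by
  unfold negForm
  congr 1
  exact Finset.sum_congr rfl fun i _ => mul_comm _ _

theorem negForm_sub_right (z x y : Fin N → ℤ) :
    negForm N z (x - y) = negForm N z x - negForm N z y := by
  unfold negForm
  have : ∀ i, z i * (x - y) i = z i * x i - z i * y i := by
    intro i; simp [Pi.sub_apply, mul_sub]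
  rw [Finset.sum_congr rfl fun i _ => this i, Finset.sum_sub_distrib]
  ring

theorem negForm_sub_left (z x y : Fin N → ℤ) :
    negForm N (x - y) z = negForm N x z - negForm N y z := by
  rw [negForm_comm, negForm_sub_right, negForm_comm x z, negForm_comm y z]

theorem coeff_eq (hB : IsCanonicalBasis N F) (hd : IsDecomp N F z a b c)
    {f : Fin N → ℤ} (hf : f ∈ F) :
    negForm N z f = (if a = f then -1 else 0) + (if b = f then 1 else 0) +
      (if c = f then 1 else 0) := by
  obtain ⟨ha, hb, hc, -, -, -, hz⟩ := hd
  have key : ∀ e ∈ F, negForm N e f = if e = f then -1 else 0 := by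
    intro e he
    by_cases h : e = f
    · simp [h, hB.2.1 f hf]
    · simp [h, hB.2.2 e he f hf h]
  rw [hz, negForm_sub_left, negForm_sub_left, key a ha, key b hb, key c hc]
  by_cases h1 : a = f <;> by_cases h2 : b = f <;> by_cases h3 : c = f <;>
    simp [h1, h2, h3] <;> ring

theorem coeff_a (hB : IsCanonicalBasis N F) (hd : IsDecomp N F z a b c) :
    negForm N z a = -1 := by
  rw [coeff_eq hB hd hd.1]
  have h1 : a ≠ b := hd.2.2.2.1
  have h2 : a ≠ c := hd.2.2.2.2.1
  simp [h1.symm, h2.symm]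

theorem coeff_b (hB : IsCanonicalBasis N F) (hd : IsDecomp N F z a b c) :
    negForm N z b = 1 := by
  rw [coeff_eq hB hd hd.2.1]
  have h1 : a ≠ b := hd.2.2.2.1
  have h2 : b ≠ c := hd.2.2.2.2.2.1
  simp [h1, h2.symm]

theorem coeff_c (hB : IsCanonicalBasis N F) (hd : IsDecomp N F z a b c) :
    negForm N z c = 1 := by
  rw [coeff_eq hB hd hd.2.2.1]
  have h1 : a ≠ c := hd.2.2.2.2.1
  have h2 : b ≠ c := hd.2.2.2.2.2.1
  simp [h1, h2]

theorem coeff_other (hB : IsCanonicalBasis N F) (hd : IsDecomp N F z a b c)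
    {f : Fin N → ℤ} (hf : f ∈ F) (h1 : f ≠ a) (h2 : f ≠ b) (h3 : f ≠ c) :
    negForm N z f = 0 := by
  rw [coeff_eq hB hd hf]
  simp [Ne.symm h1, Ne.symm h2, Ne.symm h3]

theorem eq_a_of_coeff (hB : IsCanonicalBasis N F) (hd : IsDecomp N F z a b c)
    {f : Fin N → ℤ} (hf : f ∈ F) (h : negForm N z f = -1) : f = a := by
  by_contra hfa
  by_cases h2 : f = b
  · rw [h2, coeff_b hB hd] at h; omega
  by_cases h3 : f = c
  · rw [h3, coeff_c hB hd] at h; omega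
  rw [coeff_other hB hd hf hfa h2 h3] at h; omega

theorem eq_b_or_c_of_coeff (hB : IsCanonicalBasis N F) (hd : IsDecomp N F z a b c)
    {f : Fin N → ℤ} (hf : f ∈ F) (h : negForm N z f = 1) : f = b ∨ f = c := by
  by_contra hor
  push_neg at hor
  by_cases h1 : f = a
  · rw [h1, coeff_a hB hd] at h; omega
  rw [coeff_other hB hd hf h1 hor.1 hor.2] at h; omega

theorem coeff_mem (hB : IsCanonicalBasis N F) (hd : IsDecomp N F z a b c)
    {f : Fin N → ℤ} (hf : f ∈ F) :
    negForm N z f = -1 ∨ negForm N z f = 0 ∨ negForm N z f = 1 := by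
  have h12 := hd.2.2.2.1
  have h13 := hd.2.2.2.2.1
  have h23 := hd.2.2.2.2.2.1
  rw [coeff_eq hB hd hf]
  by_cases h1 : a = f <;> by_cases h2 : b = f <;> by_cases h3 : c = f <;>
    simp only [h1, h2, h3, if_true, if_false] <;> simp_all <;> omega

theorem pair_formula (hd' : IsDecomp N F z' a' b' c') (z : Fin N → ℤ) :
    negForm N z z' = negForm N z a' - negForm N z b' - negForm N z c' := by
  rw [hd'.2.2.2.2.2.2, negForm_sub_right, negForm_sub_right]

theorem ne_letters (hB : IsCanonicalBasis N F) (hd : IsDecomp N F z a b c)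
    {f : Fin N → ℤ} (hf : f ∈ F) (h : negForm N z f = 0) :
    f ≠ a ∧ f ≠ b ∧ f ≠ c := by
  refine ⟨fun he => ?_, fun he => ?_, fun he => ?_⟩
  · rw [he, coeff_a hB hd] at h; omega
  · rw [he, coeff_b hB hd] at h; omega
  · rw [he, coeff_c hB hd] at h; omega

/-- swap the two subtracted entries of a decomposition -/
theorem IsDecomp.swap (hd : IsDecomp N F z a b c) : IsDecomp N F z a c b := by
  obtain ⟨ha, hb, hc, h1, h2, h3, hz⟩ := hd
  exact ⟨ha, hc, hb, h2, h1, h3.symm, by rw [hz]; ring⟩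

end Stmt4Aux
namespace Stmt4Aux
open scoped Classical

variable {N : ℕ} {Z F : Finset (Fin N → ℤ)}

/-- adjacency in `Z` -/
def Adj (N : ℕ) (Z : Finset (Fin N → ℤ)) (x y : Fin N → ℤ) : Prop :=
  x ∈ Z ∧ y ∈ Z ∧ x ≠ y ∧ negForm N x y = 1

theorem Adj.symm {x y : Fin N → ℤ} (h : Adj N Z x y) : Adj N Z y x :=
  ⟨h.2.1, h.1, h.2.2.1.symm, by rw [negForm_comm]; exact h.2.2.2⟩

theorem Adj.conn {x y : Fin N → ℤ} (h : Adj N Z x y) : Conn N Z x y :=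
  Relation.EqvGen.rel _ _ ⟨h.1, h.2.1, by rw [h.2.2.2]; norm_num⟩

theorem conn_symm {x y : Fin N → ℤ} (h : Conn N Z x y) : Conn N Z y x :=
  Relation.EqvGen.symm _ _ h

theorem conn_trans {x y w : Fin N → ℤ} (h : Conn N Z x y) (h' : Conn N Z y w) :
    Conn N Z x w := Relation.EqvGen.trans _ _ _ h h'

theorem conn_refl (x : Fin N → ℤ) : Conn N Z x x := Relation.EqvGen.refl x

theorem form_val (hG : Good N Z F) {x y : Fin N → ℤ} (hx : x ∈ Z) (hy : y ∈ Z)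
    (hne : x ≠ y) : negForm N x y = 0 ∨ negForm N x y = 1 := by
  have h1 := hG.1.1.2.1 x hx y hy hne
  have h2 := hG.1.2 x hx y hy hne
  omega

theorem adj_of_ne_of_form (hG : Good N Z F) {x y : Fin N → ℤ} (hx : x ∈ Z)
    (hy : y ∈ Z) (hne : x ≠ y) (h : negForm N x y ≠ 0) : Adj N Z x y := by
  rcases form_val hG hx hy hne with h0 | h1
  · exact absurd h0 h
  · exact ⟨hx, hy, hne, h1⟩

/-- degree-two property, in `Adj` form -/
theorem deg2 (hG : Good N Z F) {z : Fin N → ℤ} (hz : z ∈ Z) :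
    (Z.filter fun y => Adj N Z y z).card = 2 := by
  classical
  have h := hG.1.1.2.2 z hz
  rw [← h]
  congr 1
  apply Finset.filter_congr
  intro u hu
  constructor
  · rintro ⟨-, -, hne, hform⟩
    exact ⟨hne, Or.inl hform⟩
  · rintro ⟨hne, hform⟩
    refine adj_of_ne_of_form hG hu hz hne ?_
    rcases hform with h1 | h1 <;> omega

theorem nbhd_eq (hG : Good N Z F) {x y z : Fin N → ℤ} (hz : z ∈ Z)
    (hx : Adj N Z x z) (hy : Adj N Z y z) (hxy : x ≠ y) :
    Z.filter (fun w => Adj N Z w z) = {x, y} := by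
  classical
  symm
  apply Finset.eq_of_subset_of_card_le
  · intro w hw
    simp only [Finset.mem_insert, Finset.mem_singleton] at hw
    rcases hw with rfl | rfl
    · exact Finset.mem_filter.2 ⟨hx.1, hx⟩
    · exact Finset.mem_filter.2 ⟨hy.1, hy⟩
  · rw [deg2 hG hz, Finset.card_insert_of_notMem (by simp [hxy]),
      Finset.card_singleton]

theorem nbhd_pair (hG : Good N Z F) {x y z w : Fin N → ℤ} (hz : z ∈ Z)
    (hx : Adj N Z x z) (hy : Adj N Z y z) (hxy : x ≠ y) (hw : Adj N Z w z) :
    w = x ∨ w = y := by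
  have := nbhd_eq hG hz hx hy hxy
  have hwm : w ∈ Z.filter (fun w => Adj N Z w z) := Finset.mem_filter.2 ⟨hw.1, hw⟩
  rw [this] at hwm
  simpa using hwm

theorem other_nbhd (hG : Good N Z F) {x z : Fin N → ℤ} (hz : z ∈ Z)
    (hx : Adj N Z x z) : ∃ y, Adj N Z y z ∧ y ≠ x := by
  classical
  have h2 := deg2 hG hz
  have hxm : x ∈ Z.filter (fun w => Adj N Z w z) := Finset.mem_filter.2 ⟨hx.1, hx⟩
  have : ¬ (Z.filter (fun w => Adj N Z w z)) ⊆ {x} := by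
    intro hsub
    have := Finset.card_le_card hsub
    rw [h2, Finset.card_singleton] at this
    omega
  obtain ⟨y, hy, hyx⟩ := Finset.not_subset.1 this
  rw [Finset.mem_filter] at hy
  exact ⟨y, hy.2, by simpa using hyx⟩

theorem compOf_subset_closed (hG : Good N Z F) {T : Finset (Fin N → ℤ)}
    {x : Fin N → ℤ} (hx : x ∈ T)
    (hclosed : ∀ a ∈ T, ∀ b, Adj N Z a b → b ∈ T) :
    compOf N Z x ⊆ T := by
  classical
  intro y hy
  rw [compOf, Finset.mem_filter] at hy
  obtain ⟨hyZ, hconn⟩ := hy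
  have key : ∀ p q : Fin N → ℤ, Conn N Z p q → (p ∈ T ↔ q ∈ T) := by
    intro p q h
    induction h with
    | rel p q hpq =>
      by_cases hne : p = q
      · rw [hne]
      · have hadj : Adj N Z p q := adj_of_ne_of_form hG hpq.1 hpq.2.1 hne hpq.2.2
        exact ⟨fun hp => hclosed p hp q hadj, fun hq => hclosed q hq p hadj.symm⟩
    | refl p => rfl
    | symm p q _ ih => exact ih.symm
    | trans p q r _ _ ih1 ih2 => exact ih1.trans ih2
  exact (key y x hconn).2 hx

theorem triangle_small (hG : Good N Z F) {x y w : Fin N → ℤ} (h1 : Adj N Z x y)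
    (h2 : Adj N Z y w) (h3 : Adj N Z x w) : (compOf N Z x).card ≤ 3 := by
  classical
  have hsub : compOf N Z x ⊆ {x, y, w} := by
    apply compOf_subset_closed hG (by simp)
    intro a ha b hb
    simp only [Finset.mem_insert, Finset.mem_singleton] at ha ⊢
    rcases ha with rfl | rfl | rfl
    · rcases nbhd_pair hG hb.1 h1.symm h3.symm h2.2.2.1 hb.symm with rfl | rfl
      · exact Or.inr (Or.inl rfl)
      · exact Or.inr (Or.inr rfl)
    · rcases nbhd_pair hG hb.1 h1 h2.symm h3.2.2.1 hb.symm with rfl | rfl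
      · exact Or.inl rfl
      · exact Or.inr (Or.inr rfl)
    · rcases nbhd_pair hG hb.1 h3 h2 h1.2.2.1 hb.symm with rfl | rfl
      · exact Or.inl rfl
      · exact Or.inr (Or.inl rfl)
  have hb3 : ({x, y, w} : Finset (Fin N → ℤ)).card ≤ 3 := by
    apply (Finset.card_insert_le _ _).trans
    have := Finset.card_insert_le y ({w} : Finset (Fin N → ℤ))
    simp only [Finset.card_singleton] at this ⊢
    omega
  exact (Finset.card_le_card hsub).trans hb3

theorem compOf_eq_of_conn {x y : Fin N → ℤ} (h : Conn N Z x y) :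
    compOf N Z x = compOf N Z y := by
  classical
  unfold compOf
  apply Finset.filter_congr
  intro u _
  exact ⟨fun h' => conn_trans h' h, fun h' => conn_trans h' (conn_symm h)⟩

/-- uniqueness of the element leading a given `f` -/
theorem lead_unique (hG : Good N Z F) {f z z' : Fin N → ℤ} (hf : f ∈ F)
    (hz : z ∈ Z) (hz' : z' ∈ Z) (h1 : negForm N z f = -1)
    (h2 : negForm N z' f = -1) : z = z' := by
  classical
  have hc := hG.2.2.2.1 f hf
  rw [Finset.card_eq_one] at hc
  obtain ⟨w, hw⟩ := hc
  have m1 : z ∈ Z.filter fun z => negForm N z f = -1 := Finset.mem_filter.2 ⟨hz, h1⟩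
  have m2 : z' ∈ Z.filter fun z => negForm N z f = -1 := Finset.mem_filter.2 ⟨hz', h2⟩
  rw [hw] at m1 m2
  simp at m1 m2
  rw [m1, m2]

theorem lead_exists (hG : Good N Z F) {f : Fin N → ℤ} (hf : f ∈ F) :
    ∃ z ∈ Z, negForm N z f = -1 := by
  classical
  have hc := hG.2.2.2.1 f hf
  rw [Finset.card_eq_one] at hc
  obtain ⟨w, hw⟩ := hc
  have : w ∈ Z.filter fun z => negForm N z f = -1 := by rw [hw]; simp
  rw [Finset.mem_filter] at this
  exact ⟨w, this.1, this.2⟩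

/-- the two subtracters of `f` -/
theorem sub_pair (hG : Good N Z F) {f z₁ z₂ z₃ : Fin N → ℤ} (hf : f ∈ F)
    (h1 : z₁ ∈ Z) (h2 : z₂ ∈ Z) (h3 : z₃ ∈ Z) (hne : z₁ ≠ z₂)
    (c1 : negForm N z₁ f = 1) (c2 : negForm N z₂ f = 1)
    (c3 : negForm N z₃ f = 1) : z₃ = z₁ ∨ z₃ = z₂ := by
  classical
  have hc := hG.2.2.2.2 f hf
  have hsub : ({z₁, z₂} : Finset _) ⊆ Z.filter fun z => negForm N z f = 1 := by
    intro w hw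
    simp only [Finset.mem_insert, Finset.mem_singleton] at hw
    rcases hw with rfl | rfl
    · exact Finset.mem_filter.2 ⟨h1, c1⟩
    · exact Finset.mem_filter.2 ⟨h2, c2⟩
  have heq : ({z₁, z₂} : Finset _) = Z.filter fun z => negForm N z f = 1 := by
    apply Finset.eq_of_subset_of_card_le hsub
    rw [hc, Finset.card_insert_of_notMem (by simp [hne]), Finset.card_singleton]
  have : z₃ ∈ ({z₁, z₂} : Finset _) := by
    rw [heq]; exact Finset.mem_filter.2 ⟨h3, c3⟩
  simpa using this

theorem sub_other (hG : Good N Z F) {f z : Fin N → ℤ} (hf : f ∈ F) (hz : z ∈ Z)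
    (c : negForm N z f = 1) : ∃ z' ∈ Z, z' ≠ z ∧ negForm N z' f = 1 := by
  classical
  have hc := hG.2.2.2.2 f hf
  have hzm : z ∈ Z.filter fun z => negForm N z f = 1 := Finset.mem_filter.2 ⟨hz, c⟩
  have : ¬ (Z.filter fun z => negForm N z f = 1) ⊆ {z} := by
    intro hsub
    have := Finset.card_le_card hsub
    rw [hc, Finset.card_singleton] at this
    omega
  obtain ⟨y, hy, hyz⟩ := Finset.not_subset.1 this
  rw [Finset.mem_filter] at hy
  exact ⟨y, hy.1, by simpa using hyz, hy.2⟩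

end Stmt4Aux
namespace Stmt4Aux
open scoped Classical

variable {N : ℕ} {Z F : Finset (Fin N → ℤ)}

set_option maxHeartbeats 1000000 in
/-- Two adjacent elements of a component of size `> 3` cannot have the same
support triple. -/
theorem share3 (hG : Good N Z F) {z z' a b c : Fin N → ℤ}
    (hadj : Adj N Z z z') (hbig : 3 < (compOf N Z z).card)
    (hd : IsDecomp N F z a b c) (hd' : IsDecomp N F z' b c a) : False := by
  have hB := hG.2.1
  obtain ⟨z₀, hadj₀, hne₀⟩ := other_nbhd hG hadj.1 hadj.symm
  obtain ⟨a₀, b₀, c₀, hd₀⟩ := hG.2.2.1 z₀ hadj₀.1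
  have E : negForm N z z₀ = negForm N z a₀ - negForm N z b₀ - negForm N z c₀ :=
    pair_formula hd₀ z
  have E1 : negForm N z z₀ = 1 := by rw [negForm_comm]; exact hadj₀.2.2.2
  rw [E1] at E
  -- helper: if `z'` and `z₀` are adjacent we get a triangle, contradiction
  have htri : negForm N z' z₀ ≠ 1 := by
    intro hone
    have hA : Adj N Z z' z₀ := ⟨hadj.2.1, hadj₀.1, fun h => hne₀ h.symm, hone⟩
    exact absurd (triangle_small hG hadj hA hadj₀.symm) (by omega)
  have hnn : 0 ≤ negForm N z' z₀ := by
    refine hG.1.2 z' hadj.2.1 z₀ hadj₀.1 fun h => hne₀ h.symm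
  have E' : negForm N z' z₀ =
      negForm N z' a₀ - negForm N z' b₀ - negForm N z' c₀ := pair_formula hd₀ z'
  -- coefficients of z' on its letters
  have pb : negForm N z' b = -1 := coeff_a hB hd'
  have pc : negForm N z' c = 1 := coeff_b hB hd'
  have pa : negForm N z' a = 1 := coeff_c hB hd'
  -- main case analysis on the coefficients of z at a₀, b₀, c₀
  obtain va | va | va := coeff_mem hB hd hd₀.1 <;>
    obtain vb | vb | vb := coeff_mem hB hd hd₀.2.1 <;>
      obtain vc | vc | vc := coeff_mem hB hd hd₀.2.2.1 <;>
        rw [va, vb, vc] at E <;> try omega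
  -- survivors in order: (-1,-1,-1), (0,-1,0), (0,0,-1), (1,-1,1), (1,0,0), (1,1,-1)
  · -- (-1,-1,-1): b₀ = a = c₀, contradiction with distinctness
    have h1 : b₀ = a := eq_a_of_coeff hB hd hd₀.2.1 vb
    have h2 : c₀ = a := eq_a_of_coeff hB hd hd₀.2.2.1 vc
    exact hd₀.2.2.2.2.2.1 (h1.trans h2.symm)
  · -- (0,-1,0): b₀ = a, a₀ and c₀ fresh, z'·z₀ = -1 < 0
    have h1 : b₀ = a := eq_a_of_coeff hB hd hd₀.2.1 vb
    obtain ⟨na1, na2, na3⟩ := ne_letters hB hd hd₀.1 va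
    obtain ⟨nc1, nc2, nc3⟩ := ne_letters hB hd hd₀.2.2.1 vc
    rw [coeff_other hB hd' hd₀.1 na2 na3 na1, h1, pa,
      coeff_other hB hd' hd₀.2.2.1 nc2 nc3 nc1] at E'
    omega
  · -- (0,0,-1)
    have h1 : c₀ = a := eq_a_of_coeff hB hd hd₀.2.2.1 vc
    obtain ⟨na1, na2, na3⟩ := ne_letters hB hd hd₀.1 va
    obtain ⟨nb1, nb2, nb3⟩ := ne_letters hB hd hd₀.2.1 vb
    rw [coeff_other hB hd' hd₀.1 na2 na3 na1,
      coeff_other hB hd' hd₀.2.1 nb2 nb3 nb1, h1, pa] at E'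
    omega
  · -- (1,-1,1): b₀ = a, {a₀,c₀} = {b,c}
    have h1 : b₀ = a := eq_a_of_coeff hB hd hd₀.2.1 vb
    obtain ha₀ | ha₀ := eq_b_or_c_of_coeff hB hd hd₀.1 va
    · exact hne₀ (lead_unique hG hd.2.1 hadj₀.1 hadj.2.1
        (ha₀ ▸ coeff_a hB hd₀) pb)
    · obtain hc₀ | hc₀ := eq_b_or_c_of_coeff hB hd hd₀.2.2.1 vc
      · rw [ha₀, h1, hc₀, pc, pa, pb] at E'
        omega
      · exact hd₀.2.2.2.2.1 (ha₀.trans hc₀.symm)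
  · -- (1,0,0): a₀ ∈ {b,c}, b₀ c₀ fresh
    obtain ha₀ | ha₀ := eq_b_or_c_of_coeff hB hd hd₀.1 va
    · exact hne₀ (lead_unique hG hd.2.1 hadj₀.1 hadj.2.1
        (ha₀ ▸ coeff_a hB hd₀) pb)
    · obtain ⟨nb1, nb2, nb3⟩ := ne_letters hB hd hd₀.2.1 vb
      obtain ⟨nc1, nc2, nc3⟩ := ne_letters hB hd hd₀.2.2.1 vc
      rw [ha₀, pc, coeff_other hB hd' hd₀.2.1 nb2 nb3 nb1,
        coeff_other hB hd' hd₀.2.2.1 nc2 nc3 nc1] at E'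
      omega
  · -- (1,1,-1): c₀ = a, {a₀,b₀} = {b,c}
    have h1 : c₀ = a := eq_a_of_coeff hB hd hd₀.2.2.1 vc
    obtain ha₀ | ha₀ := eq_b_or_c_of_coeff hB hd hd₀.1 va
    · exact hne₀ (lead_unique hG hd.2.1 hadj₀.1 hadj.2.1
        (ha₀ ▸ coeff_a hB hd₀) pb)
    · obtain hb₀ | hb₀ := eq_b_or_c_of_coeff hB hd hd₀.2.1 vb
      · rw [ha₀, hb₀, h1, pc, pb, pa] at E'
        omega
      · exact hd₀.2.2.2.1 (ha₀.trans hb₀.symm)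

end Stmt4Aux
namespace Stmt4Aux
open scoped Classical

variable {N : ℕ} {Z F : Finset (Fin N → ℤ)}

set_option maxHeartbeats 1000000 in
/-- The shape of an adjacent pair in a component of size `> 3`: they share
exactly one basis vector, which is the lead of one and subtracted in the
other. -/
theorem adj_shape (hG : Good N Z F) {z z' a b c a' b' c' : Fin N → ℤ}
    (hadj : Adj N Z z z') (hbig : 3 < (compOf N Z z).card)
    (hd : IsDecomp N F z a b c) (hd' : IsDecomp N F z' a' b' c') :
    (negForm N z a' = 1 ∧ negForm N z b' = 0 ∧ negForm N z c' = 0 ∧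
      negForm N z' a = 0) ∨
    (negForm N z' a = 1 ∧ negForm N z' b = 0 ∧ negForm N z' c = 0 ∧
      negForm N z a' = 0) := by
  have hB := hG.2.1
  have E : negForm N z z' = negForm N z a' - negForm N z b' - negForm N z c' :=
    pair_formula hd' z
  rw [hadj.2.2.2] at E
  obtain va | va | va := coeff_mem hB hd hd'.1 <;>
    obtain vb | vb | vb := coeff_mem hB hd hd'.2.1 <;>
      obtain vc | vc | vc := coeff_mem hB hd hd'.2.2.1 <;>
        rw [va, vb, vc] at E <;> try omega
  -- survivors: (-1,-1,-1), (0,-1,0), (0,0,-1), (1,-1,1), (1,0,0), (1,1,-1)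
  · -- (-1,-1,-1): a' = a gives z = z'
    exfalso
    have h1 : b' = a := eq_a_of_coeff hB hd hd'.2.1 vb
    have h2 : c' = a := eq_a_of_coeff hB hd hd'.2.2.1 vc
    exact hd'.2.2.2.2.2.1 (h1.trans h2.symm)
  · -- (0,-1,0): b' = a: right branch
    right
    have h1 : b' = a := eq_a_of_coeff hB hd hd'.2.1 vb
    obtain ⟨na1, na2, na3⟩ := ne_letters hB hd hd'.1 va
    obtain ⟨nc1, nc2, nc3⟩ := ne_letters hB hd hd'.2.2.1 vc
    have hza : negForm N z' a = 1 := h1 ▸ coeff_b hB hd'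
    refine ⟨hza, ?_, ?_, va⟩
    · refine coeff_other hB hd' hd.2.1 ?_ ?_ ?_
      · intro he; rw [← he, coeff_b hB hd] at va; omega
      · intro he; rw [← he] at h1; exact hd.2.2.2.1 h1.symm
      · intro he; rw [← he, coeff_b hB hd] at vc; omega
    · refine coeff_other hB hd' hd.2.2.1 ?_ ?_ ?_
      · intro he; rw [← he, coeff_c hB hd] at va; omega
      · intro he; rw [← he] at h1; exact hd.2.2.2.2.1 h1.symm
      · intro he; rw [← he, coeff_c hB hd] at vc; omega
  · -- (0,0,-1): c' = a: right branch
    right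
    have h1 : c' = a := eq_a_of_coeff hB hd hd'.2.2.1 vc
    obtain ⟨na1, na2, na3⟩ := ne_letters hB hd hd'.1 va
    obtain ⟨nb1, nb2, nb3⟩ := ne_letters hB hd hd'.2.1 vb
    have hza : negForm N z' a = 1 := h1 ▸ coeff_c hB hd'
    refine ⟨hza, ?_, ?_, va⟩
    · refine coeff_other hB hd' hd.2.1 ?_ ?_ ?_
      · intro he; rw [← he, coeff_b hB hd] at va; omega
      · intro he; rw [← he, coeff_b hB hd] at vb; omega
      · intro he; rw [← he] at h1; exact hd.2.2.2.1 h1.symm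
    · refine coeff_other hB hd' hd.2.2.1 ?_ ?_ ?_
      · intro he; rw [← he, coeff_c hB hd] at va; omega
      · intro he; rw [← he, coeff_c hB hd] at vb; omega
      · intro he; rw [← he] at h1; exact hd.2.2.2.2.1 h1.symm
  · -- (1,-1,1): b' = a, {a',c'} = {b,c}: share-3, contradiction
    exfalso
    have h1 : b' = a := eq_a_of_coeff hB hd hd'.2.1 vb
    obtain ha' | ha' := eq_b_or_c_of_coeff hB hd hd'.1 va <;>
      obtain hc' | hc' := eq_b_or_c_of_coeff hB hd hd'.2.2.1 vc
    · exact hd'.2.2.2.2.1 (ha'.trans hc'.symm)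
    · -- z' = b - a - c = b - c - a
      refine share3 hG hadj hbig hd ⟨hd.2.1, hd.2.2.1, hd.1, hd.2.2.2.2.2.1,
        (Ne.symm hd.2.2.2.1), (Ne.symm hd.2.2.2.2.1), ?_⟩
      rw [hd'.2.2.2.2.2.2, ha', h1, hc']; ring
    · -- z' = c - a - b : use swapped decomposition of z
      refine share3 hG hadj hbig hd.swap ⟨hd.2.2.1, hd.2.1, hd.1,
        (Ne.symm hd.2.2.2.2.2.1), (Ne.symm hd.2.2.2.2.1), (Ne.symm hd.2.2.2.1), ?_⟩
      rw [hd'.2.2.2.2.2.2, ha', h1, hc']; ring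
    · exact hd'.2.2.2.2.1 (ha'.trans hc'.symm)
  · -- (1,0,0): left branch
    left
    have hza : negForm N z' a = 0 := by
      obtain ha' | ha' := eq_b_or_c_of_coeff hB hd hd'.1 va
      · refine coeff_other hB hd' hd.1 ?_ ?_ ?_
        · intro he; exact hd.2.2.2.1 (he.trans ha')
        · intro he; rw [← he, coeff_a hB hd] at vb; omega
        · intro he; rw [← he, coeff_a hB hd] at vc; omega
      · refine coeff_other hB hd' hd.1 ?_ ?_ ?_
        · intro he; exact hd.2.2.2.2.1 (he.trans ha')
        · intro he; rw [← he, coeff_a hB hd] at vb; omega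
        · intro he; rw [← he, coeff_a hB hd] at vc; omega
    exact ⟨va, vb, vc, hza⟩
  · -- (1,1,-1): c' = a, {a',b'} = {b,c}: share-3, contradiction
    exfalso
    have h1 : c' = a := eq_a_of_coeff hB hd hd'.2.2.1 vc
    obtain ha' | ha' := eq_b_or_c_of_coeff hB hd hd'.1 va <;>
      obtain hb' | hb' := eq_b_or_c_of_coeff hB hd hd'.2.1 vb
    · exact hd'.2.2.2.1 (ha'.trans hb'.symm)
    · refine share3 hG hadj hbig hd ⟨hd.2.1, hd.2.2.1, hd.1, hd.2.2.2.2.2.1,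
        (Ne.symm hd.2.2.2.1), (Ne.symm hd.2.2.2.2.1), ?_⟩
      rw [hd'.2.2.2.2.2.2, ha', hb', h1]
    · refine share3 hG hadj hbig hd.swap ⟨hd.2.2.1, hd.2.1, hd.1,
        (Ne.symm hd.2.2.2.2.2.1), (Ne.symm hd.2.2.2.2.1), (Ne.symm hd.2.2.2.1), ?_⟩
      rw [hd'.2.2.2.2.2.2, ha', hb', h1]
    · exact hd'.2.2.2.1 (ha'.trans hb'.symm)

end Stmt4Aux
namespace Stmt4Aux
open scoped Classical

variable {N : ℕ} {Z F : Finset (Fin N → ℤ)}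

/-- The interleaving configuration: `z = a - b - c`, `w = b - c - d`, `z` and
`w` in distinct components of size `> 3`. -/
def Config (N : ℕ) (Z F : Finset (Fin N → ℤ)) (z w a b c d : Fin N → ℤ) : Prop :=
  ¬ Conn N Z z w ∧ 3 < (compOf N Z z).card ∧ 3 < (compOf N Z w).card ∧
  z ∈ Z ∧ w ∈ Z ∧ IsDecomp N F z a b c ∧ IsDecomp N F w b c d ∧
  negForm N z d = 0 ∧ negForm N w a = 0

theorem Config.ne {z w a b c d : Fin N → ℤ} (h : Config N Z F z w a b c d) :
    z ≠ w := fun he => h.1 (he ▸ conn_refl z)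

set_option maxHeartbeats 1000000 in
/-- The propagation step. -/
theorem step (hG : Good N Z F) {z w a b c d : Fin N → ℤ}
    (h : Config N Z F z w a b c d) :
    ∃ e z₁, Config N Z F w z₁ b c d e ∧ Adj N Z z z₁ ∧ e ≠ a := by
  obtain ⟨hnc, hbz, hbw, hz, hw, dz, dw, zd, wa⟩ := h
  have hB := hG.2.1
  obtain ⟨z₁, hz₁, hlead⟩ := lead_exists hG dz.2.2.1
  have hz₁z : z₁ ≠ z := by
    intro he; rw [he, coeff_c hB dz] at hlead; omega
  have hz₁w : z₁ ≠ w := by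
    intro he; rw [he, coeff_b hB dw] at hlead; omega
  obtain ⟨a₁, b₁, c₁, hd₁⟩ := hG.2.2.1 z₁ hz₁
  have ha₁ : c = a₁ := eq_a_of_coeff hB hd₁ dz.2.2.1 hlead
  rw [← ha₁] at hd₁
  -- hd₁ : IsDecomp z₁ c b₁ c₁
  obtain h0 | h1 := form_val hG hz hz₁ hz₁z.symm
  · -- z·z₁ = 0 : impossible
    exfalso
    have E := pair_formula hd₁ z
    rw [h0, coeff_c hB dz] at E
    have inner : ∀ p q : Fin N → ℤ, IsDecomp N F z₁ c p q →
        negForm N z p = 1 → negForm N z q = 0 → False := by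
      intro p q hdpq vp vq
      have hpb : p = b := by
        rcases eq_b_or_c_of_coeff hB dz hdpq.2.1 vp with h' | h'
        · exact h'
        · exact absurd h'.symm hdpq.2.2.2.1
      have E2 := pair_formula hdpq w
      rw [coeff_b hB dw, hpb, coeff_a hB dw] at E2
      have hwz₁ : w ≠ z₁ := hz₁w.symm
      obtain hv | hv := form_val hG hw hz₁ hwz₁ <;> rw [hv] at E2 <;>
        obtain vq' | vq' | vq' := coeff_mem hB dw hdpq.2.2.1 <;>
          rw [vq'] at E2 <;> try omega
      -- surviving: form w z₁ = 1 and negForm w q = 1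
      have hadj : Adj N Z w z₁ := ⟨hw, hz₁, hwz₁, hv⟩
      have hqd : q = d := by
        rcases eq_b_or_c_of_coeff hB dw hdpq.2.2.1 vq' with h' | h'
        · exact absurd h'.symm hdpq.2.2.2.2.1
        · exact h'
      refine share3 hG hadj hbw dw ⟨dw.2.1, dw.2.2.1, dw.1, dw.2.2.2.2.2.1,
        (Ne.symm dw.2.2.2.1), (Ne.symm dw.2.2.2.2.1), ?_⟩
      rw [hdpq.2.2.2.2.2.2, hpb, hqd]; ring
    obtain vb | vb | vb := coeff_mem hB dz hd₁.2.1 <;>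
      obtain vc | vc | vc := coeff_mem hB dz hd₁.2.2.1 <;>
        rw [vb, vc] at E <;> try omega
    · exact inner c₁ b₁ hd₁.swap vc vb
    · exact inner b₁ c₁ hd₁ vb vc
  · -- z·z₁ = 1 : the real step
    have hadj : Adj N Z z z₁ := ⟨hz, hz₁, hz₁z.symm, h1⟩
    obtain hsh | hsh := adj_shape hG hadj hbz dz hd₁
    swap
    · exfalso; have := hsh.2.2.2; rw [coeff_c hB dz] at this; omega
    obtain ⟨-, vb₁, vc₁, za⟩ := hsh
    -- z₁ is not connected to w
    have hwz₁ : w ≠ z₁ := hz₁w.symm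
    have hconn : ¬ Conn N Z w z₁ := by
      intro hc
      exact hnc (conn_trans hadj.conn (conn_symm hc))
    have hform0 : negForm N w z₁ = 0 := by
      by_contra hne
      exact hconn (Relation.EqvGen.rel _ _ ⟨hw, hz₁, hne⟩)
    have E2 := pair_formula hd₁ w
    rw [hform0, coeff_b hB dw] at E2
    have inner : ∀ p q : Fin N → ℤ, IsDecomp N F z₁ c p q →
        negForm N w p = 1 → negForm N w q = 0 →
        negForm N z p = 0 → negForm N z q = 0 →
        ∃ e z₂, Config N Z F w z₂ b c d e ∧ Adj N Z z z₂ ∧ e ≠ a := by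
      intro p q hdpq wp wq zp zq
      have hpd : p = d := by
        rcases eq_b_or_c_of_coeff hB dw hdpq.2.1 wp with h' | h'
        · exact absurd h'.symm hdpq.2.2.2.1
        · exact h'
      rw [hpd] at hdpq
      refine ⟨q, z₁, ⟨hconn, hbw, ?_, hw, hz₁, dw, hdpq, wq, ?_⟩, hadj, ?_⟩
      · rw [← compOf_eq_of_conn hadj.conn]; exact hbz
      · refine coeff_other hB hdpq dw.1 ?_ ?_ ?_
        · exact dw.2.2.2.1
        · exact dw.2.2.2.2.1
        · intro he
          rw [← he] at zq
          rw [coeff_b hB dz] at zq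
          omega
      · intro he
        have h' := coeff_c hB hdpq
        rw [he, za] at h'
        omega
    obtain wb | wb | wb := coeff_mem hB dw hd₁.2.1 <;>
      obtain wc | wc | wc := coeff_mem hB dw hd₁.2.2.1 <;>
        rw [wb, wc] at E2 <;> try omega
    · exact inner c₁ b₁ hd₁.swap wc wb vc₁ vb₁
    · exact inner b₁ c₁ hd₁ wb wc vb₁ vc₁

end Stmt4Aux
namespace Stmt4Aux
open scoped Classical

variable {N : ℕ} {Z F : Finset (Fin N → ℤ)}

set_option maxHeartbeats 1000000 in
theorem mk_config (hG : Good N Z F) {u v au av s2 s3 t2 t3 : Fin N → ℤ}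
    (hu : u ∈ Z) (hv : v ∈ Z) (hdist : ¬ Conn N Z u v)
    (hcu : 3 < (compOf N Z u).card) (hcv : 3 < (compOf N Z v).card)
    (hdu : IsDecomp N F u au s2 s3) (hdv : IsDecomp N F v av t2 t3)
    (hlead : negForm N u av = 1) :
    ∃ b c d, Config N Z F u v au b c d := by
  have hB := hG.2.1
  have hform0 : negForm N u v = 0 := by
    by_contra hne
    exact hdist (Relation.EqvGen.rel _ _ ⟨hu, hv, hne⟩)
  have E := pair_formula hdv u
  rw [hform0, hlead] at E
  have inner : ∀ p q : Fin N → ℤ, IsDecomp N F v av p q →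
      negForm N u p = 1 → negForm N u q = 0 →
      ∃ b c d, Config N Z F u v au b c d := by
    intro p q hdpq up uq
    have hav : av = s2 ∨ av = s3 := eq_b_or_c_of_coeff hB hdu hdpq.1 hlead
    have hp : p = s2 ∨ p = s3 := eq_b_or_c_of_coeff hB hdu hdpq.2.1 up
    have havp : av ≠ p := hdpq.2.2.2.1
    have nau1 : au ≠ av := by
      intro he; rw [← he, coeff_a hB hdu] at hlead; omega
    have nau2 : au ≠ p := by
      intro he; rw [← he, coeff_a hB hdu] at up; omega
    have nau3 : au ≠ q := by
      intro he; rw [← he, coeff_a hB hdu] at uq; omega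
    have hdu' : IsDecomp N F u au av p := by
      refine ⟨hdu.1, hdpq.1, hdpq.2.1, nau1, nau2, havp, ?_⟩
      rw [hdu.2.2.2.2.2.2]
      rcases hav with rfl | rfl <;> rcases hp with rfl | rfl
      · exact absurd rfl havp
      · rfl
      · ring
      · exact absurd rfl havp
    refine ⟨av, p, q, hdist, hcu, hcv, hu, hv, hdu', hdpq, uq, ?_⟩
    exact coeff_other hB hdpq hdu.1 nau1 nau2 nau3
  obtain v2 | v2 | v2 := coeff_mem hB hdu hdv.2.1 <;>
    obtain v3 | v3 | v3 := coeff_mem hB hdu hdv.2.2.1 <;>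
      rw [v2, v3] at E <;> try omega
  · exact inner t3 t2 hdv.swap v3 v2
  · exact inner t2 t3 hdv v2 v3

set_option maxHeartbeats 1000000 in
/-- Initial configuration: up to swapping `u` and `v`. -/
theorem init_config (hG : Good N Z F) {u v : Fin N → ℤ}
    (hu : u ∈ Z) (hv : v ∈ Z) (hdist : ¬ Conn N Z u v)
    (hmeet : ∃ f ∈ F, negForm N u f ≠ 0 ∧ negForm N v f ≠ 0)
    (hcu : 3 < (compOf N Z u).card) (hcv : 3 < (compOf N Z v).card) :
    (∃ a b c d, Config N Z F u v a b c d) ∨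
    (∃ a b c d, Config N Z F v u a b c d) := by
  have hB := hG.2.1
  have huv : u ≠ v := fun he => hdist (he ▸ conn_refl u)
  obtain ⟨au, s2, s3, hdu⟩ := hG.2.2.1 u hu
  obtain ⟨av, t2, t3, hdv⟩ := hG.2.2.1 v hv
  have hform0 : negForm N u v = 0 := by
    by_contra hne
    exact hdist (Relation.EqvGen.rel _ _ ⟨hu, hv, hne⟩)
  have E := pair_formula hdv u
  rw [hform0] at E
  have hdist' : ¬ Conn N Z v u := fun h => hdist (conn_symm h)
  obtain va | va | va := coeff_mem hB hdu hdv.1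
  · -- av = au : lead clash
    exfalso
    exact huv (lead_unique hG hdv.1 hu hv va (coeff_a hB hdv))
  · -- u·av = 0
    rw [va] at E
    -- cases on coefficients at t2, t3
    obtain v2 | v2 | v2 := coeff_mem hB hdu hdv.2.1 <;>
      obtain v3 | v3 | v3 := coeff_mem hB hdu hdv.2.2.1 <;>
        rw [v2, v3] at E <;> try omega
    · -- (-1, 1) : t2 = au, case B
      right
      have h2 : t2 = au := eq_a_of_coeff hB hdu hdv.2.1 v2
      exact ⟨av, mk_config hG hv hu hdist' hcv hcu hdv hdu
        (by rw [← h2]; exact coeff_b hB hdv)⟩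
    · -- (0, 0) : contradiction with hmeet
      exfalso
      obtain ⟨f, hf, huf, hvf⟩ := hmeet
      by_cases h1 : f = av
      · rw [h1, va] at huf; exact huf rfl
      by_cases h2 : f = t2
      · rw [h2, v2] at huf; exact huf rfl
      by_cases h3 : f = t3
      · rw [h3, v3] at huf; exact huf rfl
      exact hvf (coeff_other hB hdv hf h1 h2 h3)
    · -- (1, -1) : t3 = au, case B
      right
      have h3 : t3 = au := eq_a_of_coeff hB hdu hdv.2.2.1 v3
      exact ⟨av, mk_config hG hv hu hdist' hcv hcu hdv hdu
        (by rw [← h3]; exact coeff_c hB hdv)⟩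
  · -- u·av = 1 : case A
    left
    exact ⟨au, mk_config hG hu hv hdist hcu hcv hdu hdv va⟩

end Stmt4Aux
namespace Stmt4Aux
open scoped Classical

variable {N : ℕ} {Z F : Finset (Fin N → ℤ)}

/-- A bundled configuration. -/
structure Cfg (N : ℕ) (Z F : Finset (Fin N → ℤ)) where
  z : Fin N → ℤ
  w : Fin N → ℤ
  a : Fin N → ℤ
  b : Fin N → ℤ
  c : Fin N → ℤ
  d : Fin N → ℤ
  prop : Config N Z F z w a b c d

noncomputable def stepC (hG : Good N Z F) (s : Cfg N Z F) : Cfg N Z F :=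
  ⟨s.w, (step hG s.prop).choose_spec.choose, s.b, s.c, s.d,
    (step hG s.prop).choose, (step hG s.prop).choose_spec.choose_spec.1⟩

theorem stepC_adj (hG : Good N Z F) (s : Cfg N Z F) :
    Adj N Z s.z (stepC hG s).w := (step hG s.prop).choose_spec.choose_spec.2.1

theorem stepC_fresh (hG : Good N Z F) (s : Cfg N Z F) :
    (stepC hG s).d ≠ s.a := (step hG s.prop).choose_spec.choose_spec.2.2

section Orbit

variable (hG : Good N Z F) (s0 : Cfg N Z F)

noncomputable def orb (n : ℕ) : Cfg N Z F := (stepC hG)^[n] s0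

noncomputable def tseq (n : ℕ) : Fin N → ℤ := (orb hG s0 n).z

noncomputable def hseq (n : ℕ) : Fin N → ℤ := (orb hG s0 n).a

theorem orb_succ (n : ℕ) : orb hG s0 (n + 1) = stepC hG (orb hG s0 n) :=
  Function.iterate_succ_apply' _ _ _

theorem orb_w (n : ℕ) : (orb hG s0 n).w = tseq hG s0 (n + 1) := by
  rw [tseq, orb_succ]; rfl

theorem orb_b (n : ℕ) : (orb hG s0 n).b = hseq hG s0 (n + 1) := by
  rw [hseq, orb_succ]; rfl

theorem orb_c (n : ℕ) : (orb hG s0 n).c = hseq hG s0 (n + 2) := by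
  rw [hseq, show n + 2 = (n+1) + 1 from rfl, orb_succ, orb_succ]; rfl

theorem orb_d (n : ℕ) : (orb hG s0 n).d = hseq hG s0 (n + 3) := by
  rw [hseq, show n + 3 = ((n+1)+1) + 1 from rfl, orb_succ, orb_succ, orb_succ]; rfl

theorem config_t (n : ℕ) : Config N Z F (tseq hG s0 n) (tseq hG s0 (n + 1))
    (hseq hG s0 n) (hseq hG s0 (n + 1)) (hseq hG s0 (n + 2))
    (hseq hG s0 (n + 3)) := by
  have h := (orb hG s0 n).prop
  rwa [orb_w, orb_b, orb_c, orb_d] at h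

theorem adj_t (n : ℕ) : Adj N Z (tseq hG s0 n) (tseq hG s0 (n + 2)) := by
  have h := stepC_adj hG (orb hG s0 n)
  rw [← orb_succ] at h
  rw [show n + 2 = (n+1)+1 from rfl, ← orb_w]
  exact h

theorem fresh_t (n : ℕ) : hseq hG s0 (n + 4) ≠ hseq hG s0 n := by
  have h := stepC_fresh hG (orb hG s0 n)
  rw [← orb_succ] at h
  have e1 : (orb hG s0 (n+1)).d = hseq hG s0 (n + 4) := orb_d hG s0 (n+1)
  rw [e1, hseq] at h
  exact h

theorem tseq_mem (n : ℕ) : tseq hG s0 n ∈ Z := (config_t hG s0 n).2.2.2.1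

theorem decomp_t (n : ℕ) : IsDecomp N F (tseq hG s0 n) (hseq hG s0 n)
    (hseq hG s0 (n + 1)) (hseq hG s0 (n + 2)) := (config_t hG s0 n).2.2.2.2.2.1

theorem hseq_mem (n : ℕ) : hseq hG s0 n ∈ F := (decomp_t hG s0 n).1

/-- any five consecutive letters are distinct -/
theorem hdiff (n : ℕ) {k : ℕ} (h0 : 0 < k) (h4 : k ≤ 4) :
    hseq hG s0 n ≠ hseq hG s0 (n + k) := by
  have hB := hG.2.1
  have cfg := config_t hG s0 n
  have dz := cfg.2.2.2.2.2.1
  have dw := cfg.2.2.2.2.2.2.1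
  have zd := cfg.2.2.2.2.2.2.2.1
  interval_cases k
  · exact dz.2.2.2.1
  · exact dz.2.2.2.2.1
  · -- a ≠ d since coeff of z at a is -1 but at d is 0
    intro he
    rw [← he, coeff_a hB dz] at zd
    omega
  · exact fun he => fresh_t hG s0 n he.symm

/-- lead of `tseq n` is `hseq n` -/
theorem lead_t (n : ℕ) : negForm N (tseq hG s0 n) (hseq hG s0 n) = -1 :=
  coeff_a hG.2.1 (decomp_t hG s0 n)

/-- equal elements have equal leads -/
theorem hseq_eq_of_t_eq {n m : ℕ} (h : tseq hG s0 n = tseq hG s0 m) :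
    hseq hG s0 n = hseq hG s0 m := by
  have h1 := lead_t hG s0 m
  rw [← h] at h1
  exact (eq_a_of_coeff hG.2.1 (decomp_t hG s0 n) (hseq_mem hG s0 m) h1).symm

theorem t_ne (n : ℕ) {k : ℕ} (h0 : 0 < k) (h4 : k ≤ 4) :
    tseq hG s0 n ≠ tseq hG s0 (n + k) :=
  fun he => hdiff hG s0 n h0 h4 (hseq_eq_of_t_eq hG s0 he)

end Orbit

theorem config_determined (hG : Good N Z F) {z w a b c d a' b' c' d' : Fin N → ℤ}
    (h : Config N Z F z w a b c d) (h' : Config N Z F z w a' b' c' d') :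
    a = a' ∧ b = b' ∧ c = c' ∧ d = d' := by
  have hB := hG.2.1
  have dz := h.2.2.2.2.2.1
  have dw := h.2.2.2.2.2.2.1
  have dz' := h'.2.2.2.2.2.1
  have dw' := h'.2.2.2.2.2.2.1
  have ha : a = a' := eq_a_of_coeff hB dz' dz.1 (coeff_a hB dz)
  have hb : b = b' := eq_a_of_coeff hB dw' dw.1 (coeff_a hB dw)
  have hc : c = c' := by
    have e1 := dz.2.2.2.2.2.2
    have e2 := dz'.2.2.2.2.2.2
    rw [ha, hb] at e1
    have e3 : a' - b' - c = a' - b' - c' := e1.symm.trans e2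
    exact sub_right_injective e3
  have hd : d = d' := by
    have e1 := dw.2.2.2.2.2.2
    have e2 := dw'.2.2.2.2.2.2
    rw [hb, hc] at e1
    have e3 : b' - c' - d = b' - c' - d' := e1.symm.trans e2
    exact sub_right_injective e3
  exact ⟨ha, hb, hc, hd⟩

theorem cfg_ext (hG : Good N Z F) {s s' : Cfg N Z F} (hz : s.z = s'.z)
    (hw : s.w = s'.w) : s = s' := by
  obtain ⟨z, w, a, b, c, d, hp⟩ := s
  obtain ⟨z', w', a', b', c', d', hp'⟩ := s'
  dsimp at hz hw
  subst hz; subst hw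
  obtain ⟨h1, h2, h3, h4⟩ := config_determined hG hp hp'
  subst h1; subst h2; subst h3; subst h4
  rfl

end Stmt4Aux
namespace Stmt4Aux
open scoped Classical

variable {N : ℕ} {Z F : Finset (Fin N → ℤ)}

section Orbit2
variable (hG : Good N Z F) (s0 : Cfg N Z F)

theorem t_ne_succ (n : ℕ) : tseq hG s0 n ≠ tseq hG s0 (n + 1) :=
  (config_t hG s0 n).ne

theorem coeff_t_c (n : ℕ) :
    negForm N (tseq hG s0 n) (hseq hG s0 (n + 2)) = 1 :=
  coeff_c hG.2.1 (decomp_t hG s0 n)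

theorem coeff_t_b (n : ℕ) :
    negForm N (tseq hG s0 (n + 1)) (hseq hG s0 (n + 2)) = 1 :=
  coeff_b hG.2.1 (decomp_t hG s0 (n + 1))

theorem orb_eq_of_t {n m : ℕ} (h0 : tseq hG s0 n = tseq hG s0 m)
    (h1 : tseq hG s0 (n + 1) = tseq hG s0 (m + 1)) :
    orb hG s0 n = orb hG s0 m := by
  apply cfg_ext hG
  · exact h0
  · rw [orb_w, orb_w]; exact h1

/-- forward two-step determinism -/
theorem orb_eq_of_t2 {n m : ℕ} (h0 : tseq hG s0 n = tseq hG s0 m)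
    (h2 : tseq hG s0 (n + 2) = tseq hG s0 (m + 2)) :
    orb hG s0 n = orb hG s0 m := by
  have hh : hseq hG s0 (n + 2) = hseq hG s0 (m + 2) := hseq_eq_of_t_eq hG s0 h2
  have hsp := sub_pair hG (hseq_mem hG s0 (n + 2)) (tseq_mem hG s0 n)
    (tseq_mem hG s0 (n + 1)) (tseq_mem hG s0 (m + 1)) (t_ne_succ hG s0 n)
    (coeff_t_c hG s0 n) (coeff_t_b hG s0 n)
    (by rw [hh]; exact coeff_t_b hG s0 m)
  rcases hsp with he | he
  · exfalso
    rw [h0] at he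
    exact t_ne_succ hG s0 m he.symm
  · exact orb_eq_of_t hG s0 h0 he.symm

/-- backward determinism -/
theorem orb_back {n m : ℕ} (h : orb hG s0 (n + 1) = orb hG s0 (m + 1)) :
    orb hG s0 n = orb hG s0 m := by
  have ht1 : tseq hG s0 (n + 1) = tseq hG s0 (m + 1) := congrArg Cfg.z h
  have hh : hseq hG s0 (n + 2) = hseq hG s0 (m + 2) := by
    rw [← orb_b, ← orb_b, h]
  have hsp := sub_pair hG (hseq_mem hG s0 (n + 2)) (tseq_mem hG s0 m)
    (tseq_mem hG s0 (m + 1)) (tseq_mem hG s0 n) (t_ne_succ hG s0 m)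
    (by rw [hh]; exact coeff_t_c hG s0 m)
    (by rw [hh]; exact coeff_t_b hG s0 m)
    (coeff_t_c hG s0 n)
  rcases hsp with he | he
  · exact orb_eq_of_t hG s0 he ht1
  · exfalso
    rw [← ht1] at he
    exact t_ne_succ hG s0 n he
theorem orb_back_iter (k : ℕ) :
    ∀ n m, orb hG s0 (n + k) = orb hG s0 (m + k) → orb hG s0 n = orb hG s0 m := by
  induction k with
  | zero => intro n m h; simpa using h
  | succ k ih =>
    intro n m h
    rw [show n + (k+1) = (n + k) + 1 from rfl, show m + (k+1) = (m + k) + 1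
      from rfl] at h
    exact ih n m (orb_back hG s0 h)

def HasPeriod (P : ℕ) : Prop := ∀ n, orb hG s0 (n + P) = orb hG s0 n

theorem hasPeriod_of_orb0 {d : ℕ} (h : orb hG s0 d = orb hG s0 0) :
    HasPeriod hG s0 d := by
  intro n
  rw [orb, orb, Function.iterate_add_apply]
  rw [show (stepC hG)^[d] s0 = s0 from h]

theorem exists_period : ∃ P, 0 < P ∧ HasPeriod hG s0 P := by
  have hmap : ∀ n ∈ Finset.range (Z.card * Z.card + 1),
      ((tseq hG s0 n, tseq hG s0 (n+1)) : (Fin N → ℤ) × (Fin N → ℤ)) ∈ Z ×ˢ Z := by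
    intro n _
    exact Finset.mem_product.2 ⟨tseq_mem hG s0 n, tseq_mem hG s0 (n+1)⟩
  have hcard : (Z ×ˢ Z).card < (Finset.range (Z.card * Z.card + 1)).card := by
    rw [Finset.card_product, Finset.card_range]
    omega
  obtain ⟨i, hi, j, hj, hij, heq⟩ :=
    Finset.exists_ne_map_eq_of_card_lt_of_maps_to hcard hmap
  have heq' : orb hG s0 i = orb hG s0 j := by
    have h1 : tseq hG s0 i = tseq hG s0 j := congrArg Prod.fst heq
    have h2 : tseq hG s0 (i+1) = tseq hG s0 (j+1) := congrArg Prod.snd heq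
    exact orb_eq_of_t hG s0 h1 h2
  rcases Nat.lt_or_ge i j with hlt | hge
  · refine ⟨j - i, by omega, hasPeriod_of_orb0 hG s0 ?_⟩
    apply orb_back_iter hG s0 i
    rw [Nat.zero_add, Nat.sub_add_cancel (by omega)]
    exact heq'.symm
  · have hlt : j < i := by omega
    refine ⟨i - j, by omega, hasPeriod_of_orb0 hG s0 ?_⟩
    apply orb_back_iter hG s0 j
    rw [Nat.zero_add, Nat.sub_add_cancel (by omega)]
    exact heq'

theorem hasPeriod_mul {P : ℕ} (h : HasPeriod hG s0 P) (s : ℕ) :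
    HasPeriod hG s0 (P * s) := by
  induction s with
  | zero => intro n; simp
  | succ s ih =>
    intro n
    rw [Nat.mul_succ, ← Nat.add_assoc, h (n + P * s), ih n]

noncomputable def P0 : ℕ := Nat.find (exists_period hG s0)

theorem P0_pos : 0 < P0 hG s0 := (Nat.find_spec (exists_period hG s0)).1

theorem P0_period : HasPeriod hG s0 (P0 hG s0) :=
  (Nat.find_spec (exists_period hG s0)).2

theorem P0_dvd {q : ℕ} (hq : HasPeriod hG s0 q) : P0 hG s0 ∣ q := by
  have hPpos := P0_pos hG s0
  have hr : HasPeriod hG s0 (q % P0 hG s0) := by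
    intro n
    have h1 := hasPeriod_mul hG s0 (P0_period hG s0) (q / (P0 hG s0))
      (n + q % P0 hG s0)
    have h2 : n + q % P0 hG s0 + P0 hG s0 * (q / P0 hG s0) = n + q := by
      have := Nat.div_add_mod q (P0 hG s0)
      omega
    rw [h2] at h1
    rw [← h1, hq n]
  by_cases h0 : q % P0 hG s0 = 0
  · exact Nat.dvd_of_mod_eq_zero h0
  · exfalso
    have hlt : q % P0 hG s0 < P0 hG s0 := Nat.mod_lt q hPpos
    exact Nat.find_min (exists_period hG s0) hlt ⟨Nat.pos_of_ne_zero h0, hr⟩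

end Orbit2
end Stmt4Aux
namespace Stmt4Aux
open scoped Classical

variable {N : ℕ} {Z F : Finset (Fin N → ℤ)}

section Orbit3
variable (hG : Good N Z F) (s0 : Cfg N Z F)

theorem conn_t (n k : ℕ) : Conn N Z (tseq hG s0 n) (tseq hG s0 (n + 2 * k)) := by
  induction k with
  | zero => exact conn_refl _
  | succ k ih =>
    refine conn_trans ih ?_
    rw [show n + 2 * (k+1) = (n + 2*k) + 2 from by omega]
    exact (adj_t hG s0 (n + 2*k)).conn

theorem t_period (n : ℕ) : tseq hG s0 (n + P0 hG s0) = tseq hG s0 n :=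
  congrArg Cfg.z (P0_period hG s0 n)

theorem h_period (n : ℕ) : hseq hG s0 (n + P0 hG s0) = hseq hG s0 n :=
  congrArg Cfg.a (P0_period hG s0 n)

theorem P0_even : ∃ p, 0 < p ∧ P0 hG s0 = 2 * p := by
  rcases Nat.even_or_odd (P0 hG s0) with ⟨p, hp⟩ | ⟨r, hr⟩
  · refine ⟨p, ?_, by omega⟩
    have := P0_pos hG s0
    omega
  · exfalso
    have h1 : Conn N Z (tseq hG s0 1) (tseq hG s0 (1 + 2 * r)) := conn_t hG s0 1 r
    have h2 : tseq hG s0 (1 + 2 * r) = tseq hG s0 0 := by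
      rw [show 1 + 2 * r = 0 + P0 hG s0 from by omega]
      exact t_period hG s0 0
    rw [h2] at h1
    exact (config_t hG s0 0).1 (conn_symm h1)

theorem nbhd_t (n : ℕ) {y : Fin N → ℤ} (hy : Adj N Z y (tseq hG s0 (n + 2))) :
    y = tseq hG s0 n ∨ y = tseq hG s0 (n + 4) := by
  refine nbhd_pair hG (tseq_mem hG s0 (n+2)) (adj_t hG s0 n)
    ((adj_t hG s0 (n+2)).symm) ?_ hy
  exact t_ne hG s0 n (by omega) (by omega)

set_option maxHeartbeats 1000000 in
/-- The key rigidity: a same-parity repetition forces a full period. -/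
theorem t_rigid (n k : ℕ) (hk : 0 < k)
    (h : tseq hG s0 n = tseq hG s0 (n + 2 * k)) : P0 hG s0 ∣ 2 * k := by
  have hAdj : Adj N Z (tseq hG s0 (n + 2)) (tseq hG s0 (n + 2 * k)) := by
    rw [← h]; exact (adj_t hG s0 n).symm
  have hsplit := nbhd_t hG s0 (n + 2 * k - 2) (by
    rw [show n + 2*k - 2 + 2 = n + 2*k from by omega]; exact hAdj)
  rcases hsplit with hrefl | hfwd
  · -- reflection: derive a contradiction
    exfalso
    have claim : ∀ r, r ≤ k → tseq hG s0 (n + 2 * r) = tseq hG s0 (n + 2 * (k - r)) := by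
      intro r
      induction r using Nat.strong_induction_on with
      | _ r ih =>
        match r with
        | 0 => intro _; simpa using h
        | 1 =>
          intro h1k
          rw [show n + 2 * 1 = n + 2 from by omega, hrefl,
            show n + 2*k - 2 = n + 2 * (k - 1) from by omega]
        | (r+2) =>
          intro hrk
          have Qr := ih r (by omega) (by omega)
          have Qr1 := ih (r+1) (by omega) (by omega)
          have hAdj2 : Adj N Z (tseq hG s0 (n + 2 * (r + 2)))
              (tseq hG s0 (n + 2 * (k - r - 1))) := by
            rw [show n + 2 * (k - r - 1) = n + 2 * (k - (r+1)) from by omega, ← Qr1]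
            have := (adj_t hG s0 (n + 2 * (r+1))).symm
            rw [show n + 2 * (r+1) + 2 = n + 2 * (r + 2) from by omega] at this
            exact this
          have hsp := nbhd_t hG s0 (n + 2 * (k - r - 2)) (by
            rw [show n + 2 * (k - r - 2) + 2 = n + 2 * (k - r - 1) from by omega]
            exact hAdj2)
          rcases hsp with h' | h'
          · rw [h', show n + 2 * (k - r - 2) = n + 2 * (k - (r + 2)) from by omega]
          · exfalso
            rw [show n + 2 * (k - r - 2) + 4 = n + 2 * (k - r) from by omega,
              show n + 2 * (k - r) = n + 2 * (k - r) from rfl, ← Qr] at h'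
            have := t_ne hG s0 (n + 2 * r) (k := 4) (by omega) (by omega)
            rw [show n + 2 * r + 4 = n + 2 * (r + 2) from by omega] at this
            exact this (h'.symm)
    rcases Nat.even_or_odd k with ⟨s, hs⟩ | ⟨s, hs⟩
    · -- k = 2s, s ≥ 1 : claim (s-1) gives a gap-4 repetition
      have hs1 : 1 ≤ s := by omega
      have hQ := claim (s - 1) (by omega)
      rw [show n + 2 * (k - (s - 1)) = n + 2 * (s - 1) + 4 from by omega] at hQ
      exact t_ne hG s0 (n + 2 * (s-1)) (k := 4) (by omega) (by omega) hQ
    · -- k = 2s + 1 : claim s gives a gap-2 repetition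
      have hQ := claim s (by omega)
      rw [show n + 2 * (k - s) = n + 2 * s + 2 from by omega] at hQ
      exact t_ne hG s0 (n + 2 * s) (k := 2) (by omega) (by omega) hQ
  · -- forward merge: full determinism gives a period
    rw [show n + 2*k - 2 + 4 = (n + 2*k) + 2 from by omega] at hfwd
    have horb : orb hG s0 n = orb hG s0 (n + 2 * k) :=
      orb_eq_of_t2 hG s0 h hfwd
    have h0 : orb hG s0 0 = orb hG s0 (2 * k) := by
      apply orb_back_iter hG s0 n
      rw [Nat.zero_add, Nat.add_comm (2*k) n]
      exact horb
    exact P0_dvd hG s0 (hasPeriod_of_orb0 hG s0 h0.symm)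

end Orbit3
end Stmt4Aux
namespace Stmt4Aux
open scoped Classical

variable {N : ℕ} {Z F : Finset (Fin N → ℤ)}

section Orbit4
variable (hG : Good N Z F) (s0 : Cfg N Z F)

theorem t_inj (o : ℕ) {p : ℕ} (hp : P0 hG s0 = 2 * p) :
    Function.Injective (fun i : Fin p => tseq hG s0 (o + 2 * i)) := by
  have key : ∀ i j : Fin p, (i : ℕ) < (j : ℕ) →
      tseq hG s0 (o + 2 * i) ≠ tseq hG s0 (o + 2 * j) := by
    intro i j hij he
    rw [show o + 2 * (j:ℕ) = (o + 2 * (i:ℕ)) + 2 * ((j:ℕ) - (i:ℕ)) from by omega]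
      at he
    have := t_rigid hG s0 (o + 2 * i) ((j:ℕ) - (i:ℕ)) (by omega) he
    have hj := j.2
    rcases this with ⟨c, hc⟩
    rcases Nat.eq_zero_or_pos c with rfl | hcpos
    · omega
    · have h2 : P0 hG s0 * 1 ≤ P0 hG s0 * c := Nat.mul_le_mul_left _ hcpos
      omega
  intro i j he
  by_contra hne
  rcases Nat.lt_or_ge (i:ℕ) (j:ℕ) with h | h
  · exact key i j h he
  · have : (j:ℕ) < (i:ℕ) := by
      rcases Nat.lt_or_ge (j:ℕ) (i:ℕ) with h' | h'
      · exact h'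
      · exact absurd (Fin.ext (by omega)) hne
    exact key j i this he.symm

theorem cover (o : ℕ) {p : ℕ} (hp : P0 hG s0 = 2 * p) (hppos : 0 < p) :
    compOf N Z (tseq hG s0 o) =
      Finset.image (fun i : Fin p => tseq hG s0 (o + 2 * i)) Finset.univ := by
  have hP2 : 2 ≤ P0 hG s0 := by
    have := P0_pos hG s0; omega
  apply Finset.Subset.antisymm
  · -- component is inside the image, by closure
    apply compOf_subset_closed hG (T := Finset.image _ _)
    · refine Finset.mem_image.2 ⟨⟨0, hppos⟩, Finset.mem_univ _, ?_⟩
      simp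
    · intro a ha b hb
      obtain ⟨i, -, hi⟩ := Finset.mem_image.1 ha
      subst hi
      -- b is adjacent to t (o + 2i) = t (o + 2i + P0)
      have hb' : Adj N Z b (tseq hG s0 ((o + 2 * i + P0 hG s0 - 2) + 2)) := by
        rw [show o + 2 * (i:ℕ) + P0 hG s0 - 2 + 2 = (o + 2 * i) + P0 hG s0
          from by omega, t_period]
        exact hb.symm
      rcases nbhd_t hG s0 _ hb' with h' | h'
      · -- previous element
        rcases Nat.eq_zero_or_pos (i : ℕ) with hi0 | hipos
        · refine Finset.mem_image.2 ⟨⟨p - 1, by omega⟩, Finset.mem_univ _, ?_⟩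
          rw [h']
          have e : o + 2 * (i:ℕ) + P0 hG s0 - 2 = o + 2 * (p - 1) := by omega
          rw [e]
        · refine Finset.mem_image.2 ⟨⟨(i:ℕ) - 1, by omega⟩, Finset.mem_univ _, ?_⟩
          rw [h']
          rw [show o + 2 * (i:ℕ) + P0 hG s0 - 2 =
            (o + 2 * ((i:ℕ) - 1)) + P0 hG s0 from by omega, t_period]
      · -- next element
        rcases Nat.lt_or_ge ((i:ℕ) + 1) p with hlt | hge
        · refine Finset.mem_image.2 ⟨⟨(i:ℕ) + 1, hlt⟩, Finset.mem_univ _, ?_⟩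
          rw [h']
          rw [show o + 2 * (i:ℕ) + P0 hG s0 - 2 + 4 =
            (o + 2 * ((i:ℕ) + 1)) + P0 hG s0 from by omega, t_period]
        · have hieq : (i:ℕ) + 1 = p := by have := i.2; omega
          refine Finset.mem_image.2 ⟨⟨0, hppos⟩, Finset.mem_univ _, ?_⟩
          rw [h']
          rw [show o + 2 * (i:ℕ) + P0 hG s0 - 2 + 4 =
            (o + 2 * 0) + 2 * P0 hG s0 from by omega,
            show (o + 2 * 0) + 2 * P0 hG s0 =
              ((o + 2 * 0) + P0 hG s0) + P0 hG s0 from by omega,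
            t_period, t_period]
  · -- image is inside the component
    intro y hy
    obtain ⟨i, -, hi⟩ := Finset.mem_image.1 hy
    subst hi
    rw [compOf, Finset.mem_filter]
    exact ⟨tseq_mem hG s0 _, conn_symm (conn_t hG s0 o i)⟩

theorem comp_card (o : ℕ) {p : ℕ} (hp : P0 hG s0 = 2 * p) (hppos : 0 < p) :
    (compOf N Z (tseq hG s0 o)).card = p := by
  rw [cover hG s0 o hp hppos,
    Finset.card_image_of_injective _ (t_inj hG s0 o hp), Finset.card_univ,
    Fintype.card_fin]

theorem h_mod (n : ℕ) : hseq hG s0 (n % P0 hG s0) = hseq hG s0 n := by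
  induction n using Nat.strong_induction_on with
  | _ n ih =>
    rcases Nat.lt_or_ge n (P0 hG s0) with h | h
    · rw [Nat.mod_eq_of_lt h]
    · have hpos := P0_pos hG s0
      have e1 : n = (n - P0 hG s0) + P0 hG s0 := by omega
      rw [e1, Nat.add_mod_right, h_period]
      exact ih (n - P0 hG s0) (by omega)

end Orbit4
end Stmt4Aux
namespace Stmt4Aux
open scoped Classical

variable {N : ℕ} {Z F : Finset (Fin N → ℤ)}

set_option maxHeartbeats 1000000 in
theorem final_master (hG : Good N Z F) {x y a b c d : Fin N → ℤ}
    (hcfg : Config N Z F x y a b c d) :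
    ∃ m : ℕ, (compOf N Z x).card = m ∧ (compOf N Z y).card = m ∧
      ∃ f : ZMod (2 * m) → (Fin N → ℤ), Function.Injective f ∧ (∀ j, f j ∈ F) ∧
        compOf N Z y =
          Finset.image (fun i : Fin m =>
            f ((2 * (i : ℕ) + 1 : ℕ)) - f ((2 * (i : ℕ) + 2 : ℕ)) -
              f ((2 * (i : ℕ) + 3 : ℕ))) Finset.univ ∧
        compOf N Z x =
          Finset.image (fun i : Fin m =>
            f ((2 * (i : ℕ) : ℕ)) - f ((2 * (i : ℕ) + 1 : ℕ)) -
              f ((2 * (i : ℕ) + 2 : ℕ))) Finset.univ := by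
  set s0 : Cfg N Z F := ⟨x, y, a, b, c, d, hcfg⟩ with hs0
  obtain ⟨p, hppos, hp⟩ := P0_even hG s0
  haveI : NeZero (2 * p) := ⟨by omega⟩
  have ht0 : tseq hG s0 0 = x := rfl
  have ht1 : tseq hG s0 1 = y := rfl
  have hf_eval : ∀ n : ℕ, hseq hG s0 ((n : ZMod (2*p)).val) = hseq hG s0 n := by
    intro n
    rw [ZMod.val_natCast, ← hp, h_mod]
  refine ⟨p, ?_, ?_, fun i => hseq hG s0 i.val, ?_, fun j => hseq_mem hG s0 _,
    ?_, ?_⟩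
  · rw [← ht0]; exact comp_card hG s0 0 hp hppos
  · rw [← ht1]; exact comp_card hG s0 1 hp hppos
  · -- injectivity
    intro i j he
    dsimp at he
    have hte : tseq hG s0 i.val = tseq hG s0 j.val := by
      apply lead_unique hG (hseq_mem hG s0 j.val) (tseq_mem hG s0 i.val)
        (tseq_mem hG s0 j.val)
      · rw [← he]; exact lead_t hG s0 i.val
      · exact lead_t hG s0 j.val
    -- same parity
    have hpar : i.val % 2 = j.val % 2 := by
      by_contra hne
      have hconn : Conn N Z x y := by
        have c1 : Conn N Z (tseq hG s0 (i.val % 2)) (tseq hG s0 i.val) := by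
          have := conn_t hG s0 (i.val % 2) (i.val / 2)
          rwa [show i.val % 2 + 2 * (i.val / 2) = i.val from by omega] at this
        have c2 : Conn N Z (tseq hG s0 (j.val % 2)) (tseq hG s0 j.val) := by
          have := conn_t hG s0 (j.val % 2) (j.val / 2)
          rwa [show j.val % 2 + 2 * (j.val / 2) = j.val from by omega] at this
        have h01 : (i.val % 2 = 0 ∧ j.val % 2 = 1) ∨
            (i.val % 2 = 1 ∧ j.val % 2 = 0) := by omega
        rcases h01 with ⟨e1, e2⟩ | ⟨e1, e2⟩
        · rw [e1, ht0] at c1; rw [e2, ht1] at c2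
          rw [hte] at c1
          exact conn_trans c1 (conn_symm c2)
        · rw [e1, ht1] at c1; rw [e2, ht0] at c2
          rw [hte] at c1
          exact conn_trans c2 (conn_symm c1)
      exact hcfg.1 hconn
    -- same parity and equal implies equal index
    have hvals : i.val = j.val := by
      by_contra hne
      rcases Nat.lt_or_ge i.val j.val with hlt | hge
      · have hk : j.val = i.val + 2 * ((j.val - i.val) / 2) := by omega
        rw [hk] at hte
        have := t_rigid hG s0 i.val _ (by omega) hte
        obtain ⟨c', hc'⟩ := this
        have hjlt := ZMod.val_lt j
        rcases Nat.eq_zero_or_pos c' with rfl | hcpos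
        · omega
        · have h2 : P0 hG s0 * 1 ≤ P0 hG s0 * c' := Nat.mul_le_mul_left _ hcpos
          omega
      · have hlt : j.val < i.val := by omega
        have hk : i.val = j.val + 2 * ((i.val - j.val) / 2) := by omega
        rw [hk] at hte
        have := t_rigid hG s0 j.val _ (by omega) hte.symm
        obtain ⟨c', hc'⟩ := this
        have hilt := ZMod.val_lt i
        rcases Nat.eq_zero_or_pos c' with rfl | hcpos
        · omega
        · have h2 : P0 hG s0 * 1 ≤ P0 hG s0 * c' := Nat.mul_le_mul_left _ hcpos
          omega
    exact ZMod.val_injective _ hvals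
  · -- odd component
    rw [← ht1, cover hG s0 1 hp hppos]
    apply Finset.image_congr
    intro i _
    have hd := (decomp_t hG s0 (1 + 2 * i.val)).2.2.2.2.2.2
    dsimp only
    rw [hf_eval, hf_eval, hf_eval]
    have e1 : 1 + 2 * (i:ℕ) = 2 * (i:ℕ) + 1 := by omega
    have e2 : 2 * (i:ℕ) + 1 + 1 = 2 * (i:ℕ) + 2 := by omega
    have e3 : 2 * (i:ℕ) + 1 + 2 = 2 * (i:ℕ) + 3 := by omega
    rw [e1, e2, e3] at hd
    rw [e1]
    exact hd
  · -- even component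
    rw [← ht0, cover hG s0 0 hp hppos]
    apply Finset.image_congr
    intro i _
    have hd := (decomp_t hG s0 (0 + 2 * i.val)).2.2.2.2.2.2
    dsimp only
    rw [hf_eval, hf_eval, hf_eval]
    have e1 : 0 + 2 * (i:ℕ) = 2 * (i:ℕ) := by omega
    rw [e1] at hd
    rw [show (0:ℕ) + 2 * (i:ℕ) = 2 * (i:ℕ) from e1]
    exact hd

end Stmt4Aux
/-- if `u, v ∈ Z` lie in distinct connected components, both of
cardinality `> 3`, and `F_u ∩ F_v ≠ ∅`, then the two components have the same
cardinality `m` and, up to swapping `u` and `v`, they have the stated form in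
terms of `2m` distinct elements of `F` (indices mod `2m`). -/
theorem stmt_4 (N : ℕ) (Z F : Finset (Fin N → ℤ))
    (hpos : IsPositive N Z) (hcard : Z.card = N)
    (hF : IsAdaptedBasis N F Z)
    (hform : ∀ z ∈ Z, ∃ f1 ∈ F, ∃ f2 ∈ F, ∃ f3 ∈ F,
      f1 ≠ f2 ∧ f1 ≠ f3 ∧ f2 ≠ f3 ∧ z = f1 - f2 - f3)
    (hhit1 : ∀ f ∈ F, (Z.filter fun z => negForm N z f = -1).card = 1)
    (hhit2 : ∀ f ∈ F, (Z.filter fun z => negForm N z f = 1).card = 2)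
    (u v : Fin N → ℤ) (hu : u ∈ Z) (hv : v ∈ Z)
    (hdist : ¬ Conn N Z u v)
    (hmeet : ∃ f ∈ F, negForm N u f ≠ 0 ∧ negForm N v f ≠ 0)
    (hcu : 3 < (compOf N Z u).card) (hcv : 3 < (compOf N Z v).card) :
    ∃ m : ℕ, (compOf N Z u).card = m ∧ (compOf N Z v).card = m ∧
      ∃ p q : Fin N → ℤ, ((p, q) = (u, v) ∨ (p, q) = (v, u)) ∧
        ∃ f : ZMod (2 * m) → (Fin N → ℤ), Function.Injective f ∧ (∀ j, f j ∈ F) ∧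
          compOf N Z p =
            Finset.image (fun i : Fin m =>
              f ((2 * (i : ℕ) + 1 : ℕ)) - f ((2 * (i : ℕ) + 2 : ℕ)) -
                f ((2 * (i : ℕ) + 3 : ℕ))) Finset.univ ∧
          compOf N Z q =
            Finset.image (fun i : Fin m =>
              f ((2 * (i : ℕ) : ℕ)) - f ((2 * (i : ℕ) + 1 : ℕ)) -
                f ((2 * (i : ℕ) + 2 : ℕ))) Finset.univ := by
  have hG : Stmt4Aux.Good N Z F := by
    refine ⟨hpos, hF.1, ?_, hhit1, hhit2⟩
    intro z hz
    obtain ⟨f1, h1, f2, h2, f3, h3, n12, n13, n23, he⟩ := hform z hz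
    exact ⟨f1, f2, f3, h1, h2, h3, n12, n13, n23, he⟩
  rcases Stmt4Aux.init_config hG hu hv hdist hmeet hcu hcv with
    ⟨a, b, c, d, hcfg⟩ | ⟨a, b, c, d, hcfg⟩
  · obtain ⟨m, hcx, hcy, f, hinj, hmem, hodd, heven⟩ :=
      Stmt4Aux.final_master hG hcfg
    exact ⟨m, hcx, hcy, v, u, Or.inr rfl, f, hinj, hmem, hodd, heven⟩
  · obtain ⟨m, hcx, hcy, f, hinj, hmem, hodd, heven⟩ :=
      Stmt4Aux.final_master hG hcfg
    exact ⟨m, hcy, hcx, u, v, Or.inl rfl, f, hinj, hmem, hodd, heven⟩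
end

section
/- Let C ⊂ Z be a connected component of Z such that, for each u ∈ C and v ∈ Z, F_u ∩ F_v ≠ ∅ implies v ∈ C. Then |C| is odd, say |C| = 2m+1, and there exist elements f_j ∈ F indexed by j ∈ Z/(2m+1)Z such that C = { f_{2i-1} - f_{2i} - f_{2i+1} : i ∈ Z/(2m+1)Z }. -/
open Finset

lemma aux_negForm_symm {N : ℕ} (u v : Fin N → ℤ) : negForm N u v = negForm N v u := by
  unfold negForm; congr 1; exact Finset.sum_congr rfl fun i _ => mul_comm _ _

lemma aux_negForm_sub_right {N : ℕ} (u x y : Fin N → ℤ) :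
    negForm N u (x - y) = negForm N u x - negForm N u y := by
  simp [negForm, mul_sub, Finset.sum_sub_distrib]; ring

lemma aux_negForm_sub_left {N : ℕ} (x y u : Fin N → ℤ) :
    negForm N (x - y) u = negForm N x u - negForm N y u := by
  simp [negForm, sub_mul, Finset.sum_sub_distrib]; ring

lemma aux_zmod_nz {p : ℕ} (k : ℕ) (h1 : 0 < k) (h2 : k < p)
    (h : ((k : ℕ) : ZMod p) = 0) : False := by
  rw [ZMod.natCast_eq_zero_iff] at h
  have := Nat.le_of_dvd h1 h
  omega

lemma aux_zmod_reach {p : ℕ} [NeZero p] (P : ZMod p → Prop) (i0 : ZMod p)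
    (h0 : P i0) (hs : ∀ i, P i → P (i + 1)) : ∀ i, P i := by
  have key : ∀ k : ℕ, P (i0 + (k : ZMod p)) := by
    intro k
    induction k with
    | zero => simpa using h0
    | succ n ih =>
      have e : i0 + ((n + 1 : ℕ) : ZMod p) = (i0 + (n : ZMod p)) + 1 := by push_cast; ring
      rw [e]; exact hs _ ih
  intro i
  have := key ((i - i0).val)
  rw [ZMod.natCast_zmod_val] at this
  have e : i0 + (i - i0) = i := by ring
  rwa [e] at this

lemma aux_pair {α : Type*} {a b x y : α} (hab : a ≠ b) (hxy : x ≠ y)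
    (hx : x = a ∨ x = b) (hy : y = a ∨ y = b) :
    (a = x ∧ b = y) ∨ (a = y ∧ b = x) := by
  rcases hx with h | h <;> rcases hy with h' | h' <;> subst h <;> subst h' <;> tauto

lemma aux_G {p : ℕ} (k : ℕ) (h1 : 0 < k) (h2 : k < p) (x : ZMod p) :
    x + ((k : ℕ) : ZMod p) ≠ x := by
  intro h
  exact aux_zmod_nz k h1 h2 (by linear_combination h)

lemma aux_cycle {α : Type*} [DecidableEq α] (C : Finset α) (adj : α → α → Prop)
    (hsym : ∀ x y, adj x y → adj y x)
    (hirr : ∀ x, ¬ adj x x)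
    (hCmem : ∀ x y, adj x y → y ∈ C)
    (htwo : ∀ x ∈ C, ∃ p q, p ≠ q ∧ adj x p ∧ adj x q ∧ ∀ y, adj x y → y = p ∨ y = q)
    (z₀ : α) (hz₀ : z₀ ∈ C)
    (hconn : ∀ x ∈ C, Relation.ReflTransGen adj z₀ x) :
    ∃ (p : ℕ) (v : ZMod p → α), C.card = p ∧ 3 ≤ p ∧ Function.Injective v ∧
      (∀ i, v i ∈ C) ∧ (∀ x ∈ C, ∃ i, v i = x) ∧
      (∀ i, adj (v i) (v (i + 1))) ∧
      (∀ i y, adj (v i) y → y = v (i + 1) ∨ y = v (i - 1)) := by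
  classical
  choose! nb1 nb2 hnbne hnb1 hnb2 hnball using htwo
  set nxt : α → α → α := fun pr cu => if nb1 cu = pr then nb2 cu else nb1 cu with hnxtdef
  have hnxt : ∀ pr cu, cu ∈ C → adj cu (nxt pr cu) ∧ nxt pr cu ≠ pr := by
    intro pr cu hcu
    by_cases h : nb1 cu = pr
    · simp only [hnxtdef, if_pos h]
      exact ⟨hnb2 cu hcu, fun he => (hnbne cu hcu) (h ▸ he ▸ rfl)⟩
    · simp only [hnxtdef, if_neg h]
      exact ⟨hnb1 cu hcu, h⟩
  set W : ℕ → α × α := fun n => Nat.rec (z₀, nb1 z₀) (fun _ pc => (pc.2, nxt pc.1 pc.2)) n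
    with hWdef
  set w : ℕ → α := fun n => (W n).1 with hwdef
  have hw0 : w 0 = z₀ := rfl
  have hwrec : ∀ n, w (n + 2) = nxt (w n) (w (n + 1)) := fun n => rfl
  have Hadj : ∀ n, adj (w n) (w (n + 1)) := by
    intro n
    induction n with
    | zero => exact hnb1 z₀ hz₀
    | succ n ih =>
      have hc : w (n + 1) ∈ C := hCmem _ _ ih
      rw [hwrec n]
      exact (hnxt (w n) (w (n + 1)) hc).1
  have HwC : ∀ n, w n ∈ C := by
    intro n
    cases n with
    | zero => exact hz₀
    | succ n => exact hCmem _ _ (Hadj n)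
  have Hne2 : ∀ n, w (n + 2) ≠ w n := by
    intro n
    rw [hwrec n]
    exact (hnxt (w n) (w (n + 1)) (HwC (n + 1))).2
  have Hne1 : ∀ n, w (n + 1) ≠ w n := by
    intro n h
    exact hirr (w n) (h ▸ Hadj n)
  have Hbdet : ∀ a b, w (a + 1) = w (b + 1) → w (a + 2) = w (b + 2) → w a = w b := by
    intro a b h1 h2
    have hx : w (a + 1) ∈ C := HwC (a + 1)
    have m1 : adj (w (a + 1)) (w a) := hsym _ _ (Hadj a)
    have m2 : adj (w (a + 1)) (w b) := by rw [h1]; exact hsym _ _ (Hadj b)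
    have m3 : adj (w (a + 1)) (w (a + 2)) := Hadj (a + 1)
    have hb2 : w (b + 2) ≠ w b := Hne2 b
    have ha2 : w (a + 2) ≠ w a := Hne2 a
    rcases hnball _ hx _ m1 with c1 | c1 <;> rcases hnball _ hx _ m2 with c2 | c2 <;>
      rcases hnball _ hx _ m3 with c3 | c3
    · rw [c1, c2]
    · rw [c1, c2]
    · exact absurd (c3.trans c1.symm) ha2
    · exact absurd (h2.symm.trans (c3.trans c2.symm)) hb2
    · exact absurd (h2.symm.trans (c3.trans c2.symm)) hb2
    · exact absurd (c3.trans c1.symm) ha2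
    · rw [c1, c2]
    · rw [c1, c2]
  -- find a repeated pair
  have hmaps : ∀ k ∈ Finset.range (C.card * C.card + 1), (w k, w (k + 1)) ∈ C ×ˢ C :=
    fun k _ => Finset.mem_product.2 ⟨HwC k, HwC (k + 1)⟩
  have hlt : (C ×ˢ C).card < (Finset.range (C.card * C.card + 1)).card := by
    rw [Finset.card_product, Finset.card_range]; omega
  obtain ⟨a, -, b, -, hab, heq⟩ := Finset.exists_ne_map_eq_of_card_lt_of_maps_to hlt hmaps
  have hkey : ∃ a b : ℕ, a < b ∧ w a = w b ∧ w (a + 1) = w (b + 1) := by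
    rcases Prod.mk.injEq _ _ _ _ ▸ heq with ⟨e1, e2⟩
    rcases lt_or_gt_of_ne hab with h | h
    · exact ⟨a, b, h, e1, e2⟩
    · exact ⟨b, a, h, e1.symm, e2.symm⟩
  obtain ⟨a, b, hlt', e1, e2⟩ := hkey
  have down : ∀ j, j ≤ a → w (a - j) = w (b - j) ∧ w (a - j + 1) = w (b - j + 1) := by
    intro j
    induction j with
    | zero => intro _; simpa using ⟨e1, e2⟩
    | succ j ih =>
      intro hj
      obtain ⟨d1, d2⟩ := ih (by omega)
      have ea : a - j = a - (j + 1) + 1 := by omega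
      have eb : b - j = b - (j + 1) + 1 := by omega
      have ea2 : a - j + 1 = a - (j + 1) + 2 := by omega
      have eb2 : b - j + 1 = b - (j + 1) + 2 := by omega
      constructor
      · exact Hbdet _ _ (by rw [← ea, ← eb]; exact d1) (by rw [← ea2, ← eb2]; exact d2)
      · rw [← ea, ← eb]; exact d1
  obtain ⟨dA, dB⟩ := down a le_rfl
  simp only [Nat.sub_self] at dA dB
  have hE : ∃ t, 0 < t ∧ w t = w 0 ∧ w (t + 1) = w 1 := by
    refine ⟨b - a, by omega, ?_, ?_⟩
    · rw [← dA]
    · rw [← dB]; norm_num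
  set per := Nat.find hE with hperdef
  obtain ⟨hper0, hperA, hperB⟩ : 0 < per ∧ w per = w 0 ∧ w (per + 1) = w 1 := Nat.find_spec hE
  have hmin : ∀ t, 0 < t → t < per → ¬(w t = w 0 ∧ w (t + 1) = w 1) := by
    intro t ht htper hcontra
    exact Nat.find_min hE htper ⟨ht, hcontra⟩
  have Hper : ∀ k, w (k + per) = w k ∧ w (k + per + 1) = w (k + 1) := by
    intro k
    induction k with
    | zero => simpa using ⟨hperA, hperB⟩
    | succ k ih =>
      constructor
      · have e : k + 1 + per = k + per + 1 := by omega
        rw [e]; exact ih.2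
      · have e : k + 1 + per + 1 = (k + per) + 2 := by omega
        rw [e, hwrec, ih.1, ih.2, ← hwrec]
  have Hp1 : ∀ k, w (k + per) = w k := fun k => (Hper k).1
  have hper3 : 3 ≤ per := by
    have hne1 : per ≠ 1 := by
      intro h
      rw [h] at hperA
      exact Hne1 0 hperA
    have hne2 : per ≠ 2 := by
      intro h
      rw [h] at hperA
      exact Hne2 0 hperA
    omega
  haveI : NeZero per := ⟨by omega⟩
  have Hmod : ∀ k, w (k % per) = w k := by
    intro k
    induction k using Nat.strong_induction_on with
    | _ k ih =>
      by_cases h : k < per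
      · rw [Nat.mod_eq_of_lt h]
      · rw [Nat.mod_eq_sub_mod (le_of_not_gt h), ih _ (by omega)]
        have e : k = k - per + per := by omega
        conv_rhs => rw [e]
        exact (Hp1 _).symm
  set v : ZMod per → α := fun i => w i.val with hvdef
  have vnat : ∀ k : ℕ, v ((k : ℕ) : ZMod per) = w k := by
    intro k
    show w _ = w k
    rw [ZMod.val_natCast]
    exact Hmod k
  have castval : ∀ i : ZMod per, ((i.val : ℕ) : ZMod per) = i := fun i => ZMod.natCast_zmod_val i
  have vsh : ∀ (i : ZMod per) (c : ℕ), v (i + ((c : ℕ) : ZMod per)) = w (i.val + c) := by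
    intro i c
    have e : i + ((c : ℕ) : ZMod per) = (((i.val + c : ℕ)) : ZMod per) := by
      push_cast [castval]; ring
    rw [e, vnat]
  have vsh1 : ∀ i : ZMod per, v (i + 1) = w (i.val + 1) := by
    intro i
    have := vsh i 1
    simpa using this
  have vsh2 : ∀ i : ZMod per, v (i + 2) = w (i.val + 2) := by
    intro i
    have := vsh i 2
    simpa using this
  have vadj : ∀ i, adj (v i) (v (i + 1)) := by
    intro i
    rw [vsh1]
    exact Hadj i.val
  have vC : ∀ i, v i ∈ C := fun i => HwC i.val
  have vne1 : ∀ i : ZMod per, v (i + 1) ≠ v i := by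
    intro i
    rw [vsh1]
    exact Hne1 i.val
  have vne2 : ∀ i : ZMod per, v (i + 2) ≠ v i := by
    intro i
    rw [vsh2]
    exact Hne2 i.val
  have zdet : ∀ i : ZMod per, v (i + 2) = nxt (v i) (v (i + 1)) := by
    intro i
    rw [vsh2, vsh1]
  have vadjm : ∀ i : ZMod per, adj (v (i - 1)) (v i) := by
    intro i
    have := vadj (i - 1)
    have e : i - 1 + 1 = i := by ring
    rwa [e] at this
  have vne11 : ∀ i : ZMod per, v (i + 1) ≠ v (i - 1) := by
    intro i
    have e : i + 1 = (i - 1) + 2 := by ring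
    rw [e]
    exact vne2 (i - 1)
  have nbrs : ∀ (i : ZMod per) (y : α), adj (v i) y → y = v (i + 1) ∨ y = v (i - 1) := by
    intro i y hy
    have h1 := vadj i
    have h2 := hsym _ _ (vadjm i)
    have hC := vC i
    rcases hnball _ hC _ hy with h | h <;> rcases hnball _ hC _ h1 with h1' | h1' <;>
      rcases hnball _ hC _ h2 with h2' | h2'
    · exact Or.inl (h.trans h1'.symm)
    · exact Or.inl (h.trans h1'.symm)
    · exact Or.inr (h.trans h2'.symm)
    · exact absurd (h1'.trans h2'.symm) (vne11 i)
    · exact absurd (h1'.trans h2'.symm) (vne11 i)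
    · exact Or.inr (h.trans h2'.symm)
    · exact Or.inl (h.trans h1'.symm)
    · exact Or.inr (h.trans h2'.symm)
  have rdet : ∀ i : ZMod per, nxt (v (i + 1)) (v i) = v (i - 1) := by
    intro i
    obtain ⟨hadj', hne'⟩ := hnxt (v (i + 1)) (v i) (vC i)
    rcases nbrs i _ hadj' with h | h
    · exact absurd h hne'
    · exact h
  have natsucc : ∀ (x : ZMod per) (k : ℕ), x + (((k + 1 : ℕ)) : ZMod per)
      = (x + ((k : ℕ) : ZMod per)) + 1 := by
    intro x k; push_cast; ring
  have vinj : Function.Injective v := by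
    intro a b hab
    by_contra hne'
    have hadjb : adj (v a) (v (b + 1)) := by rw [hab]; exact vadj b
    have tpos : (b - a) ≠ 0 := fun h => hne' (by
      have : b = a := by
        have := sub_eq_zero.mp h
        exact this.symm ▸ rfl
      exact this ▸ rfl)
    rcases nbrs a _ hadjb with hcase | hcase
    · -- forward propagation
      have prop : ∀ k : ℕ, v (a + ((k : ℕ) : ZMod per)) = v (b + ((k : ℕ) : ZMod per)) ∧
          v ((a + ((k : ℕ) : ZMod per)) + 1) = v ((b + ((k : ℕ) : ZMod per)) + 1) := by
        intro k
        induction k with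
        | zero => simpa using ⟨hab, hcase.symm⟩
        | succ k ih =>
          constructor
          · rw [natsucc, natsucc]; exact ih.2
          · rw [natsucc, natsucc]
            have e1 : (a + ((k : ℕ) : ZMod per)) + 1 + 1 = (a + ((k : ℕ) : ZMod per)) + 2 := by
              ring
            have e2 : (b + ((k : ℕ) : ZMod per)) + 1 + 1 = (b + ((k : ℕ) : ZMod per)) + 2 := by
              ring
            rw [e1, e2, zdet, zdet, ih.1, ih.2]
      have key := prop ((0 - a).val)
      rw [castval] at key
      have ea : a + (0 - a) = 0 := by ring
      rw [ea] at key
      set t := (b - a).val with htdef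
      have htlt : t < per := ZMod.val_lt _
      have htpos : 0 < t := by
        rcases Nat.eq_zero_or_pos t with h | h
        · exfalso
          apply tpos
          have : ((t : ℕ) : ZMod per) = b - a := castval _
          rw [h] at this
          simpa using this.symm
        · exact h
      apply hmin t htpos htlt
      have eb : b + (0 - a) = ((t : ℕ) : ZMod per) := by rw [castval]; ring
      rw [eb] at key
      have v0 : v (0 : ZMod per) = w 0 := by
        show w (0 : ZMod per).val = w 0
        rw [ZMod.val_zero]
      constructor
      · calc w t = v ((t : ℕ) : ZMod per) := (vnat t).symm
          _ = v 0 := key.1.symm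
          _ = w 0 := v0
      · have k1 := key.2
        have e01 : ((0 : ZMod per) + 1) = ((1 : ℕ) : ZMod per) := by push_cast; ring
        have et1 : (((t : ℕ) : ZMod per) + 1) = (((t + 1 : ℕ)) : ZMod per) := by push_cast; ring
        rw [e01, et1] at k1
        rw [vnat, vnat] at k1
        exact k1.symm
    · -- reflection
      have Q : ∀ k : ℕ, v (b + ((k : ℕ) : ZMod per)) = v (a - ((k : ℕ) : ZMod per)) ∧
          v ((b + ((k : ℕ) : ZMod per)) + 1) = v ((a - ((k : ℕ) : ZMod per)) - 1) := by
        intro k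
        induction k with
        | zero => simpa using ⟨hab.symm, hcase⟩
        | succ k ih =>
          have natsub : a - (((k + 1 : ℕ)) : ZMod per) = (a - ((k : ℕ) : ZMod per)) - 1 := by
            push_cast; ring
          constructor
          · rw [natsucc, natsub]; exact ih.2
          · rw [natsucc, natsub]
            have e1 : (b + ((k : ℕ) : ZMod per)) + 1 + 1 = (b + ((k : ℕ) : ZMod per)) + 2 := by
              ring
            rw [e1, zdet, ih.1, ih.2]
            have hr := rdet ((a - ((k : ℕ) : ZMod per)) - 1)
            have e2 : (a - ((k : ℕ) : ZMod per)) - 1 + 1 = a - ((k : ℕ) : ZMod per) := by ring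
            rw [e2] at hr
            exact hr
      set t := (a - b).val with htdef
      have hcast : ((t : ℕ) : ZMod per) = a - b := castval _
      have htlt : t < per := ZMod.val_lt _
      have htpos : 0 < t := by
        rcases Nat.eq_zero_or_pos t with h | h
        · exfalso
          apply hne'
          have : ((t : ℕ) : ZMod per) = a - b := castval _
          rw [h] at this
          have h2 : a - b = 0 := by simpa using this.symm
          have := sub_eq_zero.mp h2
          exact this
        · exact h
      rcases Nat.even_or_odd t with ⟨s, hs⟩ | ⟨s, hs⟩
      · -- t = 2s, s ≥ 1
        have hs1 : 1 ≤ s := by omega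
        obtain ⟨q1, -⟩ := Q (s - 1)
        have ecast : (((s - 1 : ℕ)) : ZMod per) = ((s : ℕ) : ZMod per) - 1 := by
          push_cast [Nat.cast_sub hs1]; ring
        rw [ecast] at q1
        have ia : a - (((s : ℕ) : ZMod per) - 1) = (b + (((s : ℕ) : ZMod per) - 1)) + 2 := by
          have : a = b + ((t : ℕ) : ZMod per) := by rw [hcast]; ring
          rw [this]
          have : ((t : ℕ) : ZMod per) = ((s : ℕ) : ZMod per) + ((s : ℕ) : ZMod per) := by
            rw [hs]; push_cast; ring
          rw [this]; ring
        rw [ia] at q1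
        exact absurd q1.symm (vne2 _)
      · -- t = 2s + 1
        obtain ⟨q1, -⟩ := Q s
        have ia : a - ((s : ℕ) : ZMod per) = (b + ((s : ℕ) : ZMod per)) + 1 := by
          have : a = b + ((t : ℕ) : ZMod per) := by rw [hcast]; ring
          rw [this]
          have : ((t : ℕ) : ZMod per) = ((s : ℕ) : ZMod per) + ((s : ℕ) : ZMod per) + 1 := by
            rw [hs]; push_cast; ring
          rw [this]; ring
        rw [ia] at q1
        exact absurd q1.symm (vne1 _)
  have vsurj : ∀ x ∈ C, ∃ i, v i = x := by
    intro x hx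
    have h := hconn x hx
    clear hx
    induction h with
    | refl =>
      refine ⟨0, ?_⟩
      show w (0 : ZMod per).val = z₀
      rw [ZMod.val_zero, hw0]
    | tail hbc hadj ih =>
      obtain ⟨i, hi⟩ := ih
      rcases nbrs i _ (hi ▸ hadj) with h | h
      · exact ⟨i + 1, h.symm⟩
      · exact ⟨i - 1, h.symm⟩
  have himg : Finset.image v Finset.univ = C := by
    apply Finset.Subset.antisymm
    · intro x hx
      obtain ⟨i, -, rfl⟩ := Finset.mem_image.1 hx
      exact vC i
    · intro x hx
      obtain ⟨i, hi⟩ := vsurj x hx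
      exact Finset.mem_image.2 ⟨i, Finset.mem_univ i, hi⟩
  have hcardeq : C.card = per := by
    rw [← himg, Finset.card_image_of_injective _ vinj, Finset.card_univ, ZMod.card]
  exact ⟨per, v, hcardeq, hper3, vinj, vC, vsurj, vadj, nbrs⟩

lemma aux_final {N p : ℕ} [NeZero p] (hp4 : 4 ≤ p) {Z F : Finset (Fin N → ℤ)}
    (v a : ZMod p → (Fin N → ℤ))
    (hvZ : ∀ i, v i ∈ Z)
    (hvinj : Function.Injective v)
    (hainj : Function.Injective a)
    (haF : ∀ l, a l ∈ F)
    (hNE : ∀ i k : ZMod p, i ≠ k → negForm N (v i) (v k) =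
      (if k = i + 1 then 1 else 0) + (if k = i - 1 then 1 else 0))
    (hDEC : ∀ i : ZMod p, ∃ j : ZMod p, j ≠ i ∧ j ≠ i + 1 ∧
      v i = a i - a (i + 1) - a j ∧
      (∀ l : ZMod p, negForm N (v i) (a l) =
        (if l = i then -1 else 0) + (if l = i + 1 then 1 else 0) + (if l = j then 1 else 0)))
    (husers : ∀ f ∈ F, (Z.filter fun z => negForm N z f = 1).card = 2) :
    ∃ m : ℕ, p = 2 * m + 1 ∧ ∃ f : ZMod p → (Fin N → ℤ), Function.Injective f ∧
      (∀ j, f j ∈ F) ∧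
      Finset.image v Finset.univ =
        Finset.image (fun i : ZMod p => f (2 * i - 1) - f (2 * i) - f (2 * i + 1))
          Finset.univ := by
  classical
  choose τ hτ1 hτ2 hτ3 hτ4 using hDEC
  have dA : ∀ i : ZMod p, i + 1 ≠ i := by
    intro i h
    exact aux_G 1 (by omega) (by omega) i (by push_cast; linear_combination h)
  have PF : ∀ i k : ZMod p, negForm N (v i) (v k) =
      ((if k = i then (-1 : ℤ) else 0) + (if k = i + 1 then 1 else 0)
        + (if k = τ i then 1 else 0))
      - ((if k + 1 = i then (-1 : ℤ) else 0) + (if k + 1 = i + 1 then 1 else 0)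
        + (if k + 1 = τ i then 1 else 0))
      - ((if τ k = i then (-1 : ℤ) else 0) + (if τ k = i + 1 then 1 else 0)
        + (if τ k = τ i then 1 else 0)) := by
    intro i k
    rw [hτ3 k, aux_negForm_sub_right, aux_negForm_sub_right, hτ4 i k, hτ4 i (k + 1),
      hτ4 i (τ k)]
  have τinj : Function.Injective τ := by
    intro i k hik
    by_contra hne
    have hji : i ≠ τ i - 1 := by
      intro h
      exact hτ2 i (by linear_combination -h)
    have hjk : k ≠ τ i - 1 := by
      intro h
      exact hτ2 k (by linear_combination -hik - h)
    have e1 : negForm N (v i) (a (τ i)) = 1 := by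
      rw [hτ4 i (τ i), if_neg (hτ1 i), if_neg (hτ2 i), if_pos rfl]
      ring
    have e2 : negForm N (v k) (a (τ i)) = 1 := by
      rw [hτ4 k (τ i), if_neg (show τ i ≠ k from fun hh => hτ1 k (hik.symm.trans hh)),
        if_neg (show τ i ≠ k + 1 from fun hh => hτ2 k (hik.symm.trans hh)), if_pos hik]
      ring
    have e3 : negForm N (v (τ i - 1)) (a (τ i)) = 1 := by
      rw [hτ4 (τ i - 1) (τ i)]
      rw [if_neg (show τ i ≠ τ i - 1 by
        intro h
        exact dA (τ i - 1) (by linear_combination h))]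
      rw [if_pos (show τ i = (τ i - 1) + 1 by ring)]
      rw [if_neg (show τ i ≠ τ (τ i - 1) by
        intro h
        exact hτ2 (τ i - 1) (by rw [← h]; ring))]
      ring
    have hd1 : v i ≠ v k := fun h => hne (hvinj h)
    have hd2 : v i ≠ v (τ i - 1) := fun h => hji (hvinj h)
    have hd3 : v k ≠ v (τ i - 1) := fun h => hjk (hvinj h)
    have hsub : ({v i, v k, v (τ i - 1)} : Finset (Fin N → ℤ)) ⊆
        Z.filter (fun z => negForm N z (a (τ i)) = 1) := by
      intro x hx
      simp only [Finset.mem_insert, Finset.mem_singleton] at hx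
      rcases hx with rfl | rfl | rfl
      · exact Finset.mem_filter.2 ⟨hvZ i, e1⟩
      · exact Finset.mem_filter.2 ⟨hvZ k, e2⟩
      · exact Finset.mem_filter.2 ⟨hvZ (τ i - 1), e3⟩
    have hcard : ({v i, v k, v (τ i - 1)} : Finset (Fin N → ℤ)).card = 3 := by
      rw [Finset.card_insert_of_notMem (by simp [hd1, hd2]),
        Finset.card_insert_of_notMem (by simp [hd3]), Finset.card_singleton]
    have hle := Finset.card_le_card hsub
    rw [hcard, husers (a (τ i)) (haF (τ i))] at hle
    omega
  have star : ∀ i : ZMod p, τ (i + 1) = i ↔ τ i = i + 2 := by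
    intro i
    have h := PF i (i + 1)
    rw [hNE i (i + 1) (Ne.symm (dA i))] at h
    rw [if_pos (rfl : (i + 1 : ZMod p) = i + 1)] at h
    rw [if_neg (show (i + 1 : ZMod p) ≠ i - 1 by
      intro hh
      exact aux_G 2 (by omega) (by omega) (i - 1) (by push_cast; linear_combination hh))] at h
    rw [if_neg (dA i)] at h
    rw [if_neg (Ne.symm (hτ2 i))] at h
    rw [if_neg (show (i + 1 + 1 : ZMod p) ≠ i by
      intro hh
      exact aux_G 2 (by omega) (by omega) i (by push_cast; linear_combination hh))] at h
    rw [if_neg (show (i + 1 + 1 : ZMod p) ≠ i + 1 by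
      intro hh
      exact dA (i + 1) hh)] at h
    rw [if_neg (show τ (i + 1) ≠ i + 1 from hτ1 (i + 1))] at h
    rw [if_neg (show τ (i + 1) ≠ τ i from fun hh => dA i (τinj hh))] at h
    constructor
    · intro hc
      rw [if_pos hc] at h
      by_contra hnc
      rw [if_neg (show (i + 1 + 1 : ZMod p) ≠ τ i from
        fun hh => hnc (by linear_combination -hh))] at h
      norm_num at h
    · intro hc
      rw [if_pos (show (i + 1 + 1 : ZMod p) = τ i by linear_combination -hc)] at h
      by_contra hnc
      rw [if_neg hnc] at h
      norm_num at h
  have rule : ∀ i : ZMod p, τ i ≠ i - 1 → τ (τ i) = i + 1 := by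
    intro i hyp
    have h := PF i (τ i)
    rw [hNE i (τ i) (Ne.symm (hτ1 i))] at h
    rw [if_neg (hτ2 i), if_neg hyp, if_neg (hτ1 i), if_pos (rfl : τ i = τ i)] at h
    rw [if_neg (show (τ i + 1 : ZMod p) ≠ i from
      fun hh => hyp (by linear_combination hh))] at h
    rw [if_neg (show (τ i + 1 : ZMod p) ≠ i + 1 from
      fun hh => hτ1 i (by linear_combination hh))] at h
    rw [if_neg (dA (τ i))] at h
    rw [if_neg (show τ (τ i) ≠ τ i from fun hh => hτ1 i (τinj hh))] at h
    by_cases c2 : τ (τ i) = i + 1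
    · exact c2
    exfalso
    rw [if_neg c2] at h
    by_cases c1 : τ (τ i) = i
    · rw [if_pos c1] at h; norm_num at h
    · rw [if_neg c1] at h; norm_num at h
  have noI2 : ∀ i : ZMod p, τ i ≠ i + 2 := by
    intro i hc
    have hr : τ (τ i) = i + 1 := rule i (by
      intro hh
      rw [hc] at hh
      exact aux_G 3 (by omega) (by omega) (i - 1) (by push_cast; linear_combination hh))
    rw [hc] at hr
    have s1 : τ (i + 1) = i + 1 + 2 := by
      apply (star (i + 1)).1
      rw [show (i + 1 + 1 : ZMod p) = i + 2 by ring]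
      exact hr
    have s0 : τ (i + 1) = i := (star i).2 hc
    rw [s0] at s1
    exact aux_G 3 (by omega) (by omega) i (by push_cast; linear_combination s1.symm)
  have noM1 : ∀ i : ZMod p, τ i ≠ i - 1 := by
    intro i hc
    apply noI2 (i - 1)
    apply (star (i - 1)).1
    rw [show (i - 1 + 1 : ZMod p) = i by ring]
    exact hc
  have rule' : ∀ i : ZMod p, τ (τ i) = i + 1 := fun i => rule i (noM1 i)
  have stepτ : ∀ i : ZMod p, τ (i + 1) = τ i + 1 := by
    intro i
    have h1 := rule' i
    have h2 := rule' (τ i)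
    rw [← h1]
    exact h2
  have shift : ∀ i : ZMod p, τ i = i + τ 0 := by
    apply aux_zmod_reach (fun i => τ i = i + τ 0) 0
    · rw [zero_add]
    · intro i hi
      rw [stepτ i, hi]
      ring
  have hd : τ 0 + τ 0 = 1 := by
    have h := rule' 0
    rw [shift (τ 0)] at h
    linear_combination h
  have podd : p % 2 = 1 := by
    by_contra h2
    have hdvd : 2 ∣ p := by omega
    have := congrArg (ZMod.castHom hdvd (ZMod 2)) hd
    rw [map_add, map_one] at this
    have hall : ∀ x : ZMod 2, x + x ≠ 1 := by decide
    exact hall _ this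
  have k2 : ∀ j : ZMod p, τ 0 * (2 * j) = j := by
    intro j
    linear_combination j * hd
  have hvec : ∀ j : ZMod p,
      a (τ 0 * (2 * j - 1)) - a (τ 0 * (2 * j)) - a (τ 0 * (2 * j + 1)) = v (j - τ 0) := by
    intro j
    have hτjd : τ (j - τ 0) = j := by rw [shift (j - τ 0)]; ring
    rw [hτ3 (j - τ 0), hτjd]
    rw [show τ 0 * (2 * j - 1) = j - τ 0 by linear_combination j * hd]
    rw [k2 j]
    rw [show τ 0 * (2 * j + 1) = j - τ 0 + 1 by linear_combination (j + 1) * hd]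
    exact (sub_right_comm _ _ _).symm
  refine ⟨p / 2, by omega, fun j => a (τ 0 * j), ?_, fun j => haF _, ?_⟩
  · intro x y hxy
    have e := hainj hxy
    linear_combination 2 * e - (x - y) * hd
  · ext x
    simp only [Finset.mem_image, Finset.mem_univ, true_and]
    constructor
    · rintro ⟨i, rfl⟩
      refine ⟨i + τ 0, ?_⟩
      have := hvec (i + τ 0)
      rw [show i + τ 0 - τ 0 = i by ring] at this
      exact this
    · rintro ⟨j, rfl⟩
      exact ⟨j - τ 0, (hvec j).symm⟩


/-- a connected component `C` of `Z` which is closed under the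
relation `F_u ∩ F_v ≠ ∅` has odd cardinality `2m+1`, and has the stated form in
terms of elements `f_j ∈ F` indexed by `j ∈ ℤ/(2m+1)ℤ`. -/
theorem stmt_5 (N : ℕ) (Z F : Finset (Fin N → ℤ))
    (hpos : IsPositive N Z) (hcard : Z.card = N)
    (hF : IsAdaptedBasis N F Z)
    (hform : ∀ z ∈ Z, ∃ f1 ∈ F, ∃ f2 ∈ F, ∃ f3 ∈ F,
      f1 ≠ f2 ∧ f1 ≠ f3 ∧ f2 ≠ f3 ∧ z = f1 - f2 - f3)
    (hhit1 : ∀ f ∈ F, (Z.filter fun z => negForm N z f = -1).card = 1)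
    (hhit2 : ∀ f ∈ F, (Z.filter fun z => negForm N z f = 1).card = 2)
    (z₀ : Fin N → ℤ) (hz₀ : z₀ ∈ Z)
    (hclosed : ∀ u ∈ compOf N Z z₀, ∀ v ∈ Z,
      (∃ f ∈ F, negForm N u f ≠ 0 ∧ negForm N v f ≠ 0) → v ∈ compOf N Z z₀) :
    ∃ m : ℕ, (compOf N Z z₀).card = 2 * m + 1 ∧
      ∃ f : ZMod (2 * m + 1) → (Fin N → ℤ), Function.Injective f ∧ (∀ j, f j ∈ F) ∧
        compOf N Z z₀ =
          Finset.image (fun i : ZMod (2 * m + 1) =>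
            f (2 * i - 1) - f (2 * i) - f (2 * i + 1)) Finset.univ := by
  classical
  obtain ⟨⟨hcirc1, hcirc2, hcirc3⟩, hposv⟩ := hpos
  obtain ⟨⟨hFcard, hFself, hForth⟩, hFsum⟩ := hF
  choose! e1 he1 e2 he2 e3 he3 hne12 hne13 hne23 hzdec using hform
  set C := compOf N Z z₀ with hCdef
  have hmemC : ∀ x, x ∈ C ↔ x ∈ Z ∧ Conn N Z x z₀ := by
    intro x; simp [hCdef, compOf, Finset.mem_filter]
  have CsubZ : ∀ x ∈ C, x ∈ Z := fun x hx => ((hmemC x).1 hx).1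
  have hz₀C : z₀ ∈ C := (hmemC z₀).2 ⟨hz₀, Relation.EqvGen.refl z₀⟩
  -- basic values of the form on basis elements
  have VF : ∀ u ∈ F, ∀ g ∈ F, negForm N u g = if g = u then -1 else 0 := by
    intro u hu g hg
    by_cases h : g = u
    · rw [if_pos h, h]; exact hFself u hu
    · rw [if_neg h]; exact hForth u hu g hg (fun hh => h hh.symm)
  have VL : ∀ z ∈ Z, ∀ f ∈ F, negForm N z f =
      (if f = e1 z then -1 else 0) + (if f = e2 z then 1 else 0)
        + (if f = e3 z then 1 else 0) := by
    intro z hz f hf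
    conv_lhs => rw [hzdec z hz]
    rw [aux_negForm_sub_left, aux_negForm_sub_left, VF _ (he1 z hz) f hf,
      VF _ (he2 z hz) f hf, VF _ (he3 z hz) f hf]
    split_ifs <;> ring
  have VL1 : ∀ z ∈ Z, negForm N z (e1 z) = -1 := by
    intro z hz
    rw [VL z hz _ (he1 z hz), if_pos rfl, if_neg (hne12 z hz), if_neg (hne13 z hz)]
    ring
  have VL2 : ∀ z ∈ Z, negForm N z (e2 z) = 1 := by
    intro z hz
    rw [VL z hz _ (he2 z hz), if_neg (fun h => hne12 z hz h.symm), if_pos rfl,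
      if_neg (hne23 z hz)]
    ring
  have VL3 : ∀ z ∈ Z, negForm N z (e3 z) = 1 := by
    intro z hz
    rw [VL z hz _ (he3 z hz), if_neg (fun h => hne13 z hz h.symm),
      if_neg (fun h => hne23 z hz h.symm), if_pos rfl]
    ring
  have VLneg : ∀ z ∈ Z, ∀ f ∈ F, negForm N z f = -1 → f = e1 z := by
    intro z hz f hf h
    by_cases c1 : f = e1 z
    · exact c1
    exfalso
    rw [VL z hz f hf, if_neg c1] at h
    split_ifs at h <;> omega
  have VLpos : ∀ z ∈ Z, ∀ f ∈ F, negForm N z f = 1 → f = e2 z ∨ f = e3 z := by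
    intro z hz f hf h
    by_cases c2 : f = e2 z
    · exact Or.inl c2
    by_cases c3 : f = e3 z
    · exact Or.inr c3
    exfalso
    rw [VL z hz f hf, if_neg c2, if_neg c3] at h
    split_ifs at h <;> omega
  have VLrange : ∀ z ∈ Z, ∀ f ∈ F,
      negForm N z f = -1 ∨ negForm N z f = 0 ∨ negForm N z f = 1 := by
    intro z hz f hf
    by_cases c1 : f = e1 z
    · rw [c1, VL1 z hz]; norm_num
    by_cases c2 : f = e2 z
    · rw [c2, VL2 z hz]; norm_num
    by_cases c3 : f = e3 z
    · rw [c3, VL3 z hz]; norm_num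
    rw [VL z hz f hf, if_neg c1, if_neg c2, if_neg c3]
    norm_num
  have VLself : ∀ z ∈ Z, negForm N z z = -3 := by
    intro z hz
    nth_rewrite 2 [hzdec z hz]
    rw [aux_negForm_sub_right, aux_negForm_sub_right, VL1 z hz, VL2 z hz, VL3 z hz]
    ring
  have e1inj : ∀ u ∈ Z, ∀ w ∈ Z, e1 u = e1 w → u = w := by
    intro u hu w hw heq
    have h1 : u ∈ Z.filter (fun z => negForm N z (e1 u) = -1) :=
      Finset.mem_filter.2 ⟨hu, VL1 u hu⟩
    have h2 : w ∈ Z.filter (fun z => negForm N z (e1 u) = -1) :=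
      Finset.mem_filter.2 ⟨hw, by rw [heq]; exact VL1 w hw⟩
    exact Finset.card_le_one.1 (le_of_eq (hhit1 (e1 u) (he1 u hu))) u h1 w h2
  have pexists : ∀ f ∈ F, ∃ w, w ∈ Z ∧ negForm N w f = -1 ∧ e1 w = f := by
    intro f hf
    obtain ⟨x, hx⟩ := Finset.card_eq_one.1 (hhit1 f hf)
    have hmem : x ∈ Z.filter (fun z => negForm N z f = -1) := by
      rw [hx]; exact Finset.mem_singleton_self x
    obtain ⟨hxZ, hxval⟩ := Finset.mem_filter.1 hmem
    exact ⟨x, hxZ, hxval, (VLneg x hxZ f hf hxval).symm⟩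
  have users2 : ∀ f ∈ F, ∀ x ∈ Z, ∀ y ∈ Z, x ≠ y →
      negForm N x f = 1 → negForm N y f = 1 →
      ∀ z ∈ Z, negForm N z f = 1 → z = x ∨ z = y := by
    intro f hf x hx y hy hxy hxv hyv z hz hzv
    obtain ⟨u1, u2, hu12, hset⟩ := Finset.card_eq_two.1 (hhit2 f hf)
    have hxm : x = u1 ∨ x = u2 := by
      have : x ∈ Z.filter (fun z => negForm N z f = 1) := Finset.mem_filter.2 ⟨hx, hxv⟩
      rw [hset] at this; simpa using this
    have hym : y = u1 ∨ y = u2 := by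
      have : y ∈ Z.filter (fun z => negForm N z f = 1) := Finset.mem_filter.2 ⟨hy, hyv⟩
      rw [hset] at this; simpa using this
    have hzm : z = u1 ∨ z = u2 := by
      have : z ∈ Z.filter (fun z => negForm N z f = 1) := Finset.mem_filter.2 ⟨hz, hzv⟩
      rw [hset] at this; simpa using this
    rcases aux_pair hu12 hxy hxm hym with ⟨ha, hb⟩ | ⟨ha, hb⟩
    · rcases hzm with h | h
      · exact Or.inl (h.trans ha)
      · exact Or.inr (h.trans hb)
    · rcases hzm with h | h
      · exact Or.inr (h.trans ha)
      · exact Or.inl (h.trans hb)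
  have PZ : ∀ u ∈ Z, ∀ w ∈ Z, u ≠ w → negForm N u w = 0 ∨ negForm N u w = 1 := by
    intro u hu w hw hne
    have h0 := hposv u hu w hw hne
    rcases hcirc2 u hu w hw hne with h | h | h
    · omega
    · exact Or.inl h
    · exact Or.inr h
  have Cclose : ∀ x ∈ C, ∀ y ∈ Z, negForm N x y ≠ 0 → y ∈ C := by
    intro x hx y hy h
    obtain ⟨hxZ, hxconn⟩ := (hmemC x).1 hx
    refine (hmemC y).2 ⟨hy, Relation.EqvGen.trans _ _ _ ?_ hxconn⟩
    exact Relation.EqvGen.rel _ _ ⟨hy, hxZ, by rw [aux_negForm_symm]; exact h⟩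
  have hclosed' : ∀ u ∈ C, ∀ z ∈ Z, ∀ f ∈ F,
      negForm N u f ≠ 0 → negForm N z f ≠ 0 → z ∈ C := by
    intro u hu z hz f hf h1 h2
    exact hclosed u hu z hz ⟨f, hf, h1, h2⟩
  -- the adjacency relation
  set adj : (Fin N → ℤ) → (Fin N → ℤ) → Prop :=
    fun x y => x ∈ C ∧ y ∈ C ∧ negForm N x y = 1 with hadjdef
  have hadjsym : ∀ x y, adj x y → adj y x := by
    rintro x y ⟨h1, h2, h3⟩
    exact ⟨h2, h1, by rw [aux_negForm_symm]; exact h3⟩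
  have hadjirr : ∀ x, ¬ adj x x := by
    rintro x ⟨h1, -, h3⟩
    have := VLself x (CsubZ x h1)
    omega
  have hCmem' : ∀ x y, adj x y → y ∈ C := fun x y h => h.2.1
  have htwo : ∀ x ∈ C, ∃ P Q, P ≠ Q ∧ adj x P ∧ adj x Q ∧
      ∀ y, adj x y → y = P ∨ y = Q := by
    intro x hx
    have hxZ := CsubZ x hx
    obtain ⟨P, Q, hPQ, hset⟩ := Finset.card_eq_two.1 (hcirc3 x hxZ)
    have hPm : P ∈ Z.filter (fun u => u ≠ x ∧ (negForm N u x = 1 ∨ negForm N u x = -1)) := by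
      rw [hset]; simp
    have hQm : Q ∈ Z.filter (fun u => u ≠ x ∧ (negForm N u x = 1 ∨ negForm N u x = -1)) := by
      rw [hset]; simp
    obtain ⟨hPZ, hPne, hPval⟩ := Finset.mem_filter.1 hPm
    obtain ⟨hQZ, hQne, hQval⟩ := Finset.mem_filter.1 hQm
    have hPval1 : negForm N P x = 1 := by
      rcases PZ P hPZ x hxZ hPne with h | h <;> rcases hPval with h' | h' <;> omega
    have hQval1 : negForm N Q x = 1 := by
      rcases PZ Q hQZ x hxZ hQne with h | h <;> rcases hQval with h' | h' <;> omega
    have hPC : P ∈ C := Cclose x hx P hPZ (by rw [aux_negForm_symm]; omega)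
    have hQC : Q ∈ C := Cclose x hx Q hQZ (by rw [aux_negForm_symm]; omega)
    refine ⟨P, Q, hPQ, ⟨hx, hPC, by rw [aux_negForm_symm]; exact hPval1⟩,
      ⟨hx, hQC, by rw [aux_negForm_symm]; exact hQval1⟩, ?_⟩
    rintro y ⟨-, hyC, hyval⟩
    have hyZ := CsubZ y hyC
    have hyne : y ≠ x := by
      intro h
      rw [h] at hyval
      have := VLself x hxZ
      omega
    have : y ∈ Z.filter (fun u => u ≠ x ∧ (negForm N u x = 1 ∨ negForm N u x = -1)) :=
      Finset.mem_filter.2 ⟨hyZ, hyne, Or.inl (by rw [aux_negForm_symm]; exact hyval)⟩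
    rw [hset] at this
    simpa using this
  have hconn : ∀ x ∈ C, Relation.ReflTransGen adj z₀ x := by
    have key : ∀ x y, Relation.EqvGen (fun u v => u ∈ Z ∧ v ∈ Z ∧ negForm N u v ≠ 0) x y →
        x = y ∨ (x ∈ Z ∧ y ∈ Z ∧
          (x ∈ C → y ∈ C ∧ Relation.ReflTransGen adj x y) ∧
          (y ∈ C → x ∈ C ∧ Relation.ReflTransGen adj y x)) := by
      intro x y h
      induction h with
      | rel x y hr =>
        obtain ⟨hxZ, hyZ, hval⟩ := hr
        by_cases hxy : x = y
        · exact Or.inl hxy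
        right
        refine ⟨hxZ, hyZ, ?_, ?_⟩
        · intro hxC
          have hyC : y ∈ C := Cclose x hxC y hyZ hval
          have hval1 : negForm N x y = 1 := by
            rcases PZ x hxZ y hyZ hxy with h | h <;> omega
          exact ⟨hyC, Relation.ReflTransGen.single ⟨hxC, hyC, hval1⟩⟩
        · intro hyC
          have hxC : x ∈ C := Cclose y hyC x hxZ
            (by rw [aux_negForm_symm]; exact hval)
          have hval1 : negForm N y x = 1 := by
            have : negForm N y x ≠ 0 := by rw [aux_negForm_symm]; exact hval
            rcases PZ y hyZ x hxZ (fun h => hxy h.symm) with h | h <;> omega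
          exact ⟨hxC, Relation.ReflTransGen.single ⟨hyC, hxC, hval1⟩⟩
      | refl x => exact Or.inl rfl
      | symm x y _ ih =>
        rcases ih with h | ⟨h1, h2, h3, h4⟩
        · exact Or.inl h.symm
        · exact Or.inr ⟨h2, h1, h4, h3⟩
      | trans x y z _ _ ih1 ih2 =>
        rcases ih1 with h | ⟨h1, h2, h3, h4⟩
        · rw [h]; exact ih2
        rcases ih2 with h | ⟨h1', h2', h3', h4'⟩
        · rw [← h]; exact Or.inr ⟨h1, h2, h3, h4⟩
        right
        refine ⟨h1, h2', ?_, ?_⟩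
        · intro hxC
          obtain ⟨hyC, hr1⟩ := h3 hxC
          obtain ⟨hzC, hr2⟩ := h3' hyC
          exact ⟨hzC, hr1.trans hr2⟩
        · intro hzC
          obtain ⟨hyC, hr1⟩ := h4' hzC
          obtain ⟨hxC, hr2⟩ := h4 hyC
          exact ⟨hxC, hr1.trans hr2⟩
    intro x hx
    obtain ⟨hxZ, hxconn⟩ := (hmemC x).1 hx
    rcases key x z₀ hxconn with h | ⟨-, -, -, h4⟩
    · rw [← h]
    · exact (h4 hz₀C).2
  obtain ⟨p, v, hpcard, hp3, hvinj, hvC, hvsurj, hvadj, hnbrs⟩ :=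
    aux_cycle C adj hadjsym hadjirr hCmem' htwo z₀ hz₀C hconn
  haveI : NeZero p := ⟨by omega⟩
  have hvZ : ∀ i, v i ∈ Z := fun i => CsubZ _ (hvC i)
  set a : ZMod p → (Fin N → ℤ) := fun i => e1 (v i) with hadef
  have hainj : Function.Injective a := by
    intro x y h
    exact hvinj (e1inj _ (hvZ x) _ (hvZ y) h)
  have haF : ∀ l, a l ∈ F := fun l => he1 _ (hvZ l)
  have hCimg : C = Finset.image v Finset.univ := by
    apply Finset.Subset.antisymm
    · intro x hx
      obtain ⟨i, hi⟩ := hvsurj x hx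
      exact Finset.mem_image.2 ⟨i, Finset.mem_univ i, hi⟩
    · intro x hx
      obtain ⟨i, -, rfl⟩ := Finset.mem_image.1 hx
      exact hvC i
  have hNE : ∀ i k : ZMod p, i ≠ k → negForm N (v i) (v k) =
      (if k = i + 1 then 1 else 0) + (if k = i - 1 then 1 else 0) := by
    intro i k hik
    by_cases h1 : k = i + 1
    · subst h1
      rw [if_pos rfl, if_neg (show (i + 1 : ZMod p) ≠ i - 1 by
        intro hh
        exact aux_G 2 (by omega) (by omega) (i - 1) (by push_cast; linear_combination hh))]
      have := (hvadj i).2.2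
      omega
    · rw [if_neg h1]
      by_cases h2 : k = i - 1
      · subst h2
        rw [if_pos rfl]
        have := (hvadj (i - 1)).2.2
        rw [show (i - 1 + 1 : ZMod p) = i by ring] at this
        rw [aux_negForm_symm] at this
        omega
      · rw [if_neg h2]
        have hvv : v i ≠ v k := fun h => hik (hvinj h)
        rcases PZ (v i) (hvZ i) (v k) (hvZ k) hvv with h | h
        · omega
        · exfalso
          have hadjik : adj (v i) (v k) := ⟨hvC i, hvC k, h⟩
          rcases hnbrs i (v k) hadjik with hh | hh
          · exact h1 (hvinj hh)
          · exact h2 (hvinj hh)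
  have EXP : ∀ u ∈ Z, ∀ x : Fin N → ℤ, negForm N x u =
      negForm N x (e1 u) - negForm N x (e2 u) - negForm N x (e3 u) := by
    intro u hu x
    nth_rewrite 1 [hzdec u hu]
    rw [aux_negForm_sub_right, aux_negForm_sub_right]
  by_cases hp' : p = 3
  · subst hp'
    have d3ne : ∀ i j : ZMod 3, i ≠ j → j = i + 1 ∨ j = i + 2 := by decide
    have d31 : ∀ j : ZMod 3, j ≠ j + 1 := by decide
    have d32 : ∀ j : ZMod 3, j ≠ j + 2 := by decide
    have d312 : ∀ j : ZMod 3, (j + 1 : ZMod 3) ≠ j + 2 := by decide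
    have key3 : ∀ i j : ZMod 3, i ≠ j → negForm N (v j) (e1 (v i)) = 1 := by
      intro i j hij
      have hvival : negForm N (v i) (e1 (v i)) = -1 := VL1 (v i) (hvZ i)
      have hSsub : Z.filter (fun z => negForm N z (e1 (v i)) = 1) ⊆ {v (i+1), v (i+2)} := by
        intro z hz
        obtain ⟨hzZ, hzval⟩ := Finset.mem_filter.1 hz
        have hzC : z ∈ C := hclosed' (v i) (hvC i) z hzZ (e1 (v i)) (he1 _ (hvZ i))
          (by rw [hvival]; norm_num) (by rw [hzval]; norm_num)
        obtain ⟨k, rfl⟩ := hvsurj z hzC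
        have hki : i ≠ k := by
          intro h
          rw [← h, hvival] at hzval
          omega
        rcases d3ne i k hki with h | h <;> rw [h] <;> simp
      have heqS : Z.filter (fun z => negForm N z (e1 (v i)) = 1) = {v (i+1), v (i+2)} := by
        apply Finset.eq_of_subset_of_card_le hSsub
        rw [hhit2 (e1 (v i)) (he1 _ (hvZ i))]
        exact le_trans (Finset.card_insert_le _ _) (by simp)
      have hvj : v j ∈ Z.filter (fun z => negForm N z (e1 (v i)) = 1) := by
        rw [heqS]
        rcases d3ne i j hij with h | h <;> rw [h] <;> simp
      exact (Finset.mem_filter.1 hvj).2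
    have hvec3 : ∀ j : ZMod 3, v j = e1 (v j) - e1 (v (j + 1)) - e1 (v (j + 2)) := by
      intro j
      have h1 : negForm N (v j) (e1 (v (j + 1))) = 1 := key3 (j + 1) j (Ne.symm (d31 j))
      have h2 : negForm N (v j) (e1 (v (j + 2))) = 1 := key3 (j + 2) j (Ne.symm (d32 j))
      have hm1 := VLpos (v j) (hvZ j) _ (he1 _ (hvZ (j+1))) h1
      have hm2 := VLpos (v j) (hvZ j) _ (he1 _ (hvZ (j+2))) h2
      have hne : e1 (v (j+1)) ≠ e1 (v (j+2)) :=
        fun h => d312 j (hvinj (e1inj _ (hvZ (j+1)) _ (hvZ (j+2)) h))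
      have hd := hzdec (v j) (hvZ j)
      rcases aux_pair (hne23 (v j) (hvZ j)) hne hm1 hm2 with ⟨p1, p2⟩ | ⟨p1, p2⟩
      · rw [p1, p2] at hd
        exact hd
      · rw [p1, p2] at hd
        exact hd.trans (sub_right_comm _ _ _)
    have hsur3 : ∀ jj : ZMod 3, ∃ i : ZMod 3, 2 * i - 1 = jj := by decide
    have himg3 : C = Finset.image
        (fun i : ZMod 3 => e1 (v (2*i - 1)) - e1 (v (2*i)) - e1 (v (2*i + 1)))
        Finset.univ := by
      rw [hCimg]
      apply Finset.Subset.antisymm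
      · intro x hx
        obtain ⟨j, -, rfl⟩ := Finset.mem_image.1 hx
        obtain ⟨i, hi⟩ := hsur3 j
        refine Finset.mem_image.2 ⟨i, Finset.mem_univ i, ?_⟩
        have hv := hvec3 (2*i - 1)
        rw [show (2*i - 1 + 1 : ZMod 3) = 2*i by ring,
          show (2*i - 1 + 2 : ZMod 3) = 2*i + 1 by ring] at hv
        rw [← hi]
        exact hv.symm
      · intro x hx
        obtain ⟨i, -, rfl⟩ := Finset.mem_image.1 hx
        refine Finset.mem_image.2 ⟨2*i - 1, Finset.mem_univ _, ?_⟩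
        have hv := hvec3 (2*i - 1)
        rw [show (2*i - 1 + 1 : ZMod 3) = 2*i by ring,
          show (2*i - 1 + 2 : ZMod 3) = 2*i + 1 by ring] at hv
        exact hv
    exact ⟨1, by omega, fun l => e1 (v l), hainj, haF, himg3⟩
  · have hp4 : 4 ≤ p := by omega
    -- single-share impossibility
    have SS : ∀ i : ZMod p, ∀ f ∈ F, ∀ g ∈ F, f ≠ g →
        negForm N (v i) f ≠ 0 → negForm N (v (i+1)) f ≠ 0 →
        negForm N (v i) g ≠ 0 → negForm N (v (i+1)) g ≠ 0 → False := by
      have core : ∀ i : ZMod p, negForm N (v i) (e1 (v (i+1))) = 1 →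
          negForm N (v (i+1)) (e1 (v i)) = 1 →
          ∀ hh ∈ F, negForm N (v i) hh = 1 → negForm N (v (i+1)) hh = 1 → False := by
        intro i hfull hB hh hhF h1 h2
        obtain ⟨w, hwZ, hwval, hwe1⟩ := pexists hh hhF
        have hmem1 := VLpos (v i) (hvZ i) _ (he1 _ (hvZ (i+1))) hfull
        have hmem2 := VLpos (v i) (hvZ i) hh hhF h1
        have hne1 : e1 (v (i+1)) ≠ hh := by
          intro h
          rw [← h] at h2
          have := VL1 (v (i+1)) (hvZ (i+1))
          omega
        have hs1 : negForm N w (v i) = negForm N w (e1 (v i))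
            - negForm N w (e1 (v (i+1))) - negForm N w hh := by
          rcases aux_pair (hne23 (v i) (hvZ i)) hne1 hmem1 hmem2 with ⟨p1, p2⟩ | ⟨p1, p2⟩ <;>
            rw [EXP (v i) (hvZ i) w, p1, p2] <;> ring
        have hmem1' := VLpos (v (i+1)) (hvZ (i+1)) _ (he1 _ (hvZ i)) hB
        have hmem2' := VLpos (v (i+1)) (hvZ (i+1)) hh hhF h2
        have hne2 : e1 (v i) ≠ hh := by
          intro h
          rw [← h] at h1
          have := VL1 (v i) (hvZ i)
          omega
        have hs2 : negForm N w (v (i+1)) = negForm N w (e1 (v (i+1)))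
            - negForm N w (e1 (v i)) - negForm N w hh := by
          rcases aux_pair (hne23 (v (i+1)) (hvZ (i+1))) hne2 hmem1' hmem2' with
            ⟨p1, p2⟩ | ⟨p1, p2⟩ <;>
            rw [EXP (v (i+1)) (hvZ (i+1)) w, p1, p2] <;> ring
        have hwne1 : w ≠ v i := by
          intro h
          rw [h] at hwval
          omega
        have hwne2 : w ≠ v (i+1) := by
          intro h
          rw [h] at hwval
          omega
        have hr1 := PZ w hwZ (v i) (hvZ i) hwne1
        have hr2 := PZ w hwZ (v (i+1)) (hvZ (i+1)) hwne2
        have hv1 : negForm N w (v i) = 1 := by omega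
        have hv2 : negForm N w (v (i+1)) = 1 := by omega
        have hwC : w ∈ C := Cclose (v i) (hvC i) w hwZ
          (by rw [aux_negForm_symm, hv1]; norm_num)
        obtain ⟨k, rfl⟩ := hvsurj w hwC
        have hk1 : i ≠ k := fun h => hwne1 (congrArg v h.symm)
        have hk2 : (i+1 : ZMod p) ≠ k := fun h => hwne2 (congrArg v h.symm)
        have hn1 := hNE i k hk1
        have hn2 := hNE (i+1) k hk2
        have hv1' : negForm N (v i) (v k) = 1 := by rw [aux_negForm_symm]; exact hv1
        have hv2' : negForm N (v (i+1)) (v k) = 1 := by rw [aux_negForm_symm]; exact hv2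
        have hd1 : k = i + 1 ∨ k = i - 1 := by
          by_cases c1 : k = i + 1
          · exact Or.inl c1
          by_cases c2 : k = i - 1
          · exact Or.inr c2
          · rw [if_neg c1, if_neg c2] at hn1; omega
        have hd2 : k = i + 1 + 1 ∨ k = i + 1 - 1 := by
          by_cases c1 : k = i + 1 + 1
          · exact Or.inl c1
          by_cases c2 : k = i + 1 - 1
          · exact Or.inr c2
          · rw [if_neg c1, if_neg c2] at hn2; omega
        rcases hd1 with h1 | h1
        · exact hk2 h1.symm
        rcases hd2 with h2 | h2
        · exact aux_zmod_nz (p := p) 3 (by omega) (by omega)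
            (by push_cast; linear_combination h1 - h2)
        · exact hk1 (show i = k by rw [h2]; ring)
      intro i f hf g hg hfg huf huf' hug hug'
      have hposf : f = e1 (v (i+1)) ∨ f = e2 (v (i+1)) ∨ f = e3 (v (i+1)) := by
        by_contra hcon
        push_neg at hcon
        obtain ⟨c1, c2, c3⟩ := hcon
        apply huf'
        rw [VL (v (i+1)) (hvZ (i+1)) f hf, if_neg c1, if_neg c2, if_neg c3]
        ring
      have hposg : g = e1 (v (i+1)) ∨ g = e2 (v (i+1)) ∨ g = e3 (v (i+1)) := by
        by_contra hcon
        push_neg at hcon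
        obtain ⟨c1, c2, c3⟩ := hcon
        apply hug'
        rw [VL (v (i+1)) (hvZ (i+1)) g hg, if_neg c1, if_neg c2, if_neg c3]
        ring
      have h2nz : (negForm N (v i) (e1 (v (i+1))) ≠ 0 ∧ negForm N (v i) (e2 (v (i+1))) ≠ 0)
          ∨ (negForm N (v i) (e1 (v (i+1))) ≠ 0 ∧ negForm N (v i) (e3 (v (i+1))) ≠ 0)
          ∨ (negForm N (v i) (e2 (v (i+1))) ≠ 0 ∧ negForm N (v i) (e3 (v (i+1))) ≠ 0) := by
        rcases hposf with rfl | rfl | rfl <;> rcases hposg with rfl | rfl | rfl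
        · exact absurd rfl hfg
        · exact Or.inl ⟨huf, hug⟩
        · exact Or.inr (Or.inl ⟨huf, hug⟩)
        · exact Or.inl ⟨hug, huf⟩
        · exact absurd rfl hfg
        · exact Or.inr (Or.inr ⟨huf, hug⟩)
        · exact Or.inr (Or.inl ⟨hug, huf⟩)
        · exact Or.inr (Or.inr ⟨hug, huf⟩)
        · exact absurd rfl hfg
      have hne_vv : v i ≠ v (i+1) := by
        intro h
        have := hvinj h
        exact aux_G 1 (by omega) (by omega) i (by push_cast; linear_combination -this)
      have hA_ne : negForm N (v i) (e1 (v (i+1))) ≠ -1 := by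
        intro h
        have heq := VLneg (v i) (hvZ i) _ (he1 _ (hvZ (i+1))) h
        exact hne_vv (e1inj _ (hvZ i) _ (hvZ (i+1)) heq.symm)
      have hAr := VLrange (v i) (hvZ i) _ (he1 _ (hvZ (i+1)))
      have hBr := VLrange (v i) (hvZ i) _ (he2 _ (hvZ (i+1)))
      have hCr := VLrange (v i) (hvZ i) _ (he3 _ (hvZ (i+1)))
      have h1 := (hvadj i).2.2
      have hEq := EXP (v (i+1)) (hvZ (i+1)) (v i)
      have hsol : negForm N (v i) (e1 (v (i+1))) = 1 ∧
          ((negForm N (v i) (e2 (v (i+1))) = -1 ∧ negForm N (v i) (e3 (v (i+1))) = 1) ∨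
           (negForm N (v i) (e2 (v (i+1))) = 1 ∧ negForm N (v i) (e3 (v (i+1))) = -1)) := by
        rw [h1] at hEq
        rcases hAr with hA | hA | hA <;> rcases hBr with hB | hB | hB <;>
          rcases hCr with hC | hC | hC <;> rcases h2nz with ⟨n1, n2⟩ | ⟨n1, n2⟩ | ⟨n1, n2⟩ <;>
          omega
      obtain ⟨hfull, hrest⟩ := hsol
      rcases hrest with ⟨hB, hC⟩ | ⟨hB, hC⟩
      · have heq := VLneg (v i) (hvZ i) _ (he2 _ (hvZ (i+1))) hB
        have hBwd : negForm N (v (i+1)) (e1 (v i)) = 1 := by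
          rw [← heq]
          exact VL2 _ (hvZ (i+1))
        exact core i hfull hBwd (e3 (v (i+1))) (he3 _ (hvZ (i+1))) hC (VL3 _ (hvZ (i+1)))
      · have heq := VLneg (v i) (hvZ i) _ (he3 _ (hvZ (i+1))) hC
        have hBwd : negForm N (v (i+1)) (e1 (v i)) = 1 := by
          rw [← heq]
          exact VL3 _ (hvZ (i+1))
        exact core i hfull hBwd (e2 (v (i+1))) (he2 _ (hvZ (i+1))) hB (VL2 _ (hvZ (i+1)))
    -- FB exclusion
    have FBex : ∀ i : ZMod p,
        negForm N (v i) (e1 (v (i + 1))) = 1 →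
        negForm N (v (i + 1 + 1)) (e1 (v (i + 1))) = 1 → False := by
      intro i hf hb
      have hu'Z := hvZ (i+1)
      have hAF := he1 _ hu'Z
      have hbF := he2 _ hu'Z
      have hcF := he3 _ hu'Z
      have hub : negForm N (v i) (e2 (v (i+1))) = 0 := by
        by_contra hcon
        exact SS i (e1 (v (i+1))) hAF (e2 (v (i+1))) hbF (hne12 _ hu'Z)
          (by rw [hf]; norm_num) (by rw [VL1 _ hu'Z]; norm_num) hcon
          (by rw [VL2 _ hu'Z]; norm_num)
      have huc : negForm N (v i) (e3 (v (i+1))) = 0 := by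
        by_contra hcon
        exact SS i (e1 (v (i+1))) hAF (e3 (v (i+1))) hcF (hne13 _ hu'Z)
          (by rw [hf]; norm_num) (by rw [VL1 _ hu'Z]; norm_num) hcon
          (by rw [VL3 _ hu'Z]; norm_num)
      have hu''b : negForm N (v (i+1+1)) (e2 (v (i+1))) = 0 := by
        by_contra hcon
        exact SS (i+1) (e1 (v (i+1))) hAF (e2 (v (i+1))) hbF (hne12 _ hu'Z)
          (by rw [VL1 _ hu'Z]; norm_num) (by rw [hb]; norm_num)
          (by rw [VL2 _ hu'Z]; norm_num) hcon
      have hu''c : negForm N (v (i+1+1)) (e3 (v (i+1))) = 0 := by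
        by_contra hcon
        exact SS (i+1) (e1 (v (i+1))) hAF (e3 (v (i+1))) hcF (hne13 _ hu'Z)
          (by rw [VL1 _ hu'Z]; norm_num) (by rw [hb]; norm_num)
          (by rw [VL3 _ hu'Z]; norm_num) hcon
      have hne_uu'' : v i ≠ v (i+1+1) := by
        intro h
        have := hvinj h
        exact aux_G 2 (by omega) (by omega) i (by push_cast; linear_combination -this)
      have husersA := users2 (e1 (v (i+1))) hAF (v i) (hvZ i) (v (i+1+1)) (hvZ (i+1+1))
        hne_uu'' hf hb
      -- w := plus-user of b
      obtain ⟨w, hwZ, hwb, hwe1⟩ := pexists (e2 (v (i+1))) hbF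
      have hwC : w ∈ C := hclosed' (v (i+1)) (hvC (i+1)) w hwZ _ hbF
        (by rw [VL2 _ hu'Z]; norm_num) (by rw [hwb]; norm_num)
      have hwA : negForm N w (e1 (v (i+1))) = 0 := by
        rcases VLrange w hwZ _ hAF with h | h | h
        · exfalso
          have h2 := VLneg w hwZ _ hAF h
          rw [hwe1] at h2
          exact hne12 _ hu'Z h2
        · exact h
        · exfalso
          rcases husersA w hwZ h with rfl | rfl
          · rw [hub] at hwb; omega
          · rw [hu''b] at hwb; omega
      have hwne_u' : w ≠ v (i+1) := by
        intro h
        rw [h] at hwb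
        have := VL2 _ hu'Z
        omega
      have hwc : negForm N w (e3 (v (i+1))) = 1 := by
        rcases VLrange w hwZ _ hcF with h | h | h
        · exfalso
          have h2 := VLneg w hwZ _ hcF h
          rw [hwe1] at h2
          exact hne23 _ hu'Z h2.symm
        · exfalso
          have hv1 : negForm N w (v (i+1)) = 1 := by
            rw [EXP (v (i+1)) hu'Z w, hwA, hwb, h]; ring
          obtain ⟨k, rfl⟩ := hvsurj w hwC
          have hkne : (i+1 : ZMod p) ≠ k := fun hh => hwne_u' (congrArg v hh.symm)
          have hn := hNE (i+1) k hkne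
          have hv1' : negForm N (v (i+1)) (v k) = 1 := by rw [aux_negForm_symm]; exact hv1
          have hd : k = i + 1 + 1 ∨ k = i + 1 - 1 := by
            by_cases c1 : k = i + 1 + 1
            · exact Or.inl c1
            by_cases c2 : k = i + 1 - 1
            · exact Or.inr c2
            · rw [if_neg c1, if_neg c2] at hn; omega
          rcases hd with rfl | hk
          · rw [hu''b] at hwb; omega
          · have hki : k = i := by rw [hk]; ring
            rw [hki, hub] at hwb
            omega
        · exact h
      -- w' := plus-user of c
      obtain ⟨w', hw'Z, hw'c, hw'e1⟩ := pexists (e3 (v (i+1))) hcF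
      have hw'C : w' ∈ C := hclosed' (v (i+1)) (hvC (i+1)) w' hw'Z _ hcF
        (by rw [VL3 _ hu'Z]; norm_num) (by rw [hw'c]; norm_num)
      have hw'A : negForm N w' (e1 (v (i+1))) = 0 := by
        rcases VLrange w' hw'Z _ hAF with h | h | h
        · exfalso
          have h2 := VLneg w' hw'Z _ hAF h
          rw [hw'e1] at h2
          exact hne13 _ hu'Z h2
        · exact h
        · exfalso
          rcases husersA w' hw'Z h with rfl | rfl
          · rw [huc] at hw'c; omega
          · rw [hu''c] at hw'c; omega
      have hw'ne_u' : w' ≠ v (i+1) := by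
        intro h
        rw [h] at hw'c
        have := VL3 _ hu'Z
        omega
      have hw'b : negForm N w' (e2 (v (i+1))) = 1 := by
        rcases VLrange w' hw'Z _ hbF with h | h | h
        · exfalso
          have h2 := VLneg w' hw'Z _ hbF h
          rw [hw'e1] at h2
          exact hne23 _ hu'Z h2
        · exfalso
          have hv1 : negForm N w' (v (i+1)) = 1 := by
            rw [EXP (v (i+1)) hu'Z w', hw'A, hw'c, h]; ring
          obtain ⟨k, rfl⟩ := hvsurj w' hw'C
          have hkne : (i+1 : ZMod p) ≠ k := fun hh => hw'ne_u' (congrArg v hh.symm)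
          have hn := hNE (i+1) k hkne
          have hv1' : negForm N (v (i+1)) (v k) = 1 := by rw [aux_negForm_symm]; exact hv1
          have hd : k = i + 1 + 1 ∨ k = i + 1 - 1 := by
            by_cases c1 : k = i + 1 + 1
            · exact Or.inl c1
            by_cases c2 : k = i + 1 - 1
            · exact Or.inr c2
            · rw [if_neg c1, if_neg c2] at hn; omega
          rcases hd with rfl | hk
          · rw [hu''c] at hw'c; omega
          · have hki : k = i := by rw [hk]; ring
            rw [hki, huc] at hw'c
            omega
        · exact h
      have hww' : w ≠ w' := by
        intro h
        rw [h, hw'e1] at hwe1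
        exact hne23 _ hu'Z hwe1.symm
      -- the fourth element y
      have hmw'b := VLpos w' hw'Z _ hbF hw'b
      obtain ⟨y, hyF, hy_b_ne, hw'y, hw'split⟩ :
          ∃ y, y ∈ F ∧ y ≠ e2 (v (i+1)) ∧ negForm N w' y = 1 ∧
            (e2 w' = e2 (v (i+1)) ∧ e3 w' = y ∨ e2 w' = y ∧ e3 w' = e2 (v (i+1))) := by
        rcases hmw'b with hc2 | hc2
        · exact ⟨e3 w', he3 _ hw'Z, (by rw [hc2]; exact fun h => hne23 _ hw'Z h.symm),
            VL3 _ hw'Z, Or.inl ⟨hc2.symm, rfl⟩⟩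
        · exact ⟨e2 w', he2 _ hw'Z, (by rw [hc2]; exact hne23 _ hw'Z),
            VL2 _ hw'Z, Or.inr ⟨rfl, hc2.symm⟩⟩
      have hs : negForm N w w' = negForm N w (e3 (v (i+1)))
          - negForm N w (e2 (v (i+1))) - negForm N w y := by
        rcases hw'split with ⟨q1, q2⟩ | ⟨q1, q2⟩ <;>
          rw [EXP w' hw'Z w, hw'e1, q1, q2] <;> ring
      have hr := PZ w hwZ w' hw'Z hww'
      have hwy : negForm N w y = 1 := by
        rcases VLrange w hwZ y hyF with h | h | h
        · exfalso
          have h2 := VLneg w hwZ y hyF h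
          rw [hwe1] at h2
          exact hy_b_ne h2
        · exfalso
          rw [hs, hwb, hwc, h] at hr
          omega
        · exact h
      have hww'1 : negForm N w w' = 1 := by rw [hs, hwb, hwc, hwy]; ring
      have hyc_ne : y ≠ e3 (v (i+1)) := by
        intro h
        rw [h, hw'c] at hw'y
        omega
      have hmwc := VLpos w hwZ _ hcF hwc
      have hmwy := VLpos w hwZ y hyF hwy
      have hsw : ∀ x : Fin N → ℤ, negForm N x w = negForm N x (e2 (v (i+1)))
          - negForm N x (e3 (v (i+1))) - negForm N x y := by
        intro x
        rcases aux_pair (hne23 w hwZ) (fun h => hyc_ne h.symm : e3 (v (i+1)) ≠ y)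
            hmwc hmwy with ⟨q1, q2⟩ | ⟨q1, q2⟩ <;>
          rw [EXP w hwZ x, hwe1, q1, q2] <;> ring
      -- q := plus-user of y
      obtain ⟨q, hqZ, hqy, hqe1⟩ := pexists y hyF
      have hqC : q ∈ C := hclosed' w hwC q hqZ y hyF
        (by rw [hwy]; norm_num) (by rw [hqy]; norm_num)
      have hu'w'ne : v (i+1) ≠ w' := fun h => hw'ne_u' h.symm
      have hu'wne : v (i+1) ≠ w := fun h => hwne_u' h.symm
      have husers_b := users2 (e2 (v (i+1))) hbF (v (i+1)) hu'Z w' hw'Z hu'w'ne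
        (VL2 _ hu'Z) hw'b
      have husers_c := users2 (e3 (v (i+1))) hcF (v (i+1)) hu'Z w hwZ hu'wne
        (VL3 _ hu'Z) hwc
      have hqb : negForm N q (e2 (v (i+1))) = 0 := by
        rcases VLrange q hqZ _ hbF with h | h | h
        · exfalso
          have h2 := VLneg q hqZ _ hbF h
          rw [hqe1] at h2
          exact hy_b_ne h2.symm
        · exact h
        · exfalso
          rcases husers_b q hqZ h with rfl | rfl
          · rw [← hqe1] at hwy
            rw [hwA] at hwy
            omega
          · exact hyc_ne (hqe1.symm.trans hw'e1)
      have hqc : negForm N q (e3 (v (i+1))) = 0 := by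
        rcases VLrange q hqZ _ hcF with h | h | h
        · exfalso
          have h2 := VLneg q hqZ _ hcF h
          rw [hqe1] at h2
          exact hyc_ne h2.symm
        · exact h
        · exfalso
          rcases husers_c q hqZ h with rfl | rfl
          · rw [← hqe1] at hwy
            rw [hwA] at hwy
            omega
          · exact hy_b_ne (hqe1.symm.trans hwe1)
      have hqw : negForm N q w = 1 := by rw [hsw q, hqb, hqc, hqy]; ring
      have hqw' : negForm N q w' = 1 := by
        have hh : negForm N q w' = negForm N q (e3 (v (i+1)))
            - negForm N q (e2 (v (i+1))) - negForm N q y := by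
          rcases hw'split with ⟨q1, q2⟩ | ⟨q1, q2⟩ <;>
            rw [EXP w' hw'Z q, hw'e1, q1, q2] <;> ring
        rw [hh, hqb, hqc, hqy]; ring
      have hqwne : q ≠ w := by
        intro h
        rw [h, hwe1] at hqe1
        exact hy_b_ne hqe1.symm
      have hqw'ne : q ≠ w' := by
        intro h
        rw [h, hw'e1] at hqe1
        exact hyc_ne hqe1.symm
      obtain ⟨s, rfl⟩ := hvsurj w hwC
      obtain ⟨s', rfl⟩ := hvsurj w' hw'C
      obtain ⟨s'', rfl⟩ := hvsurj q hqC
      have hss' : s ≠ s' := fun h => hww' (congrArg v h)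
      have hss'' : s ≠ s'' := fun h => hqwne (congrArg v h.symm)
      have hs's'' : s' ≠ s'' := fun h => hqw'ne (congrArg v h.symm)
      have hD1 : s' = s + 1 ∨ s' = s - 1 := by
        have hn := hNE s s' hss'
        rw [hww'1] at hn
        by_cases c1 : s' = s + 1
        · exact Or.inl c1
        by_cases c2 : s' = s - 1
        · exact Or.inr c2
        · rw [if_neg c1, if_neg c2] at hn; omega
      have hD2 : s'' = s + 1 ∨ s'' = s - 1 := by
        have hn := hNE s s'' (fun h => hss'' h)
        rw [aux_negForm_symm (v s) (v s''), hqw] at hn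
        by_cases c1 : s'' = s + 1
        · exact Or.inl c1
        by_cases c2 : s'' = s - 1
        · exact Or.inr c2
        · rw [if_neg c1, if_neg c2] at hn; omega
      have hD3 : s'' = s' + 1 ∨ s'' = s' - 1 := by
        have hn := hNE s' s'' (fun h => hs's'' h)
        rw [aux_negForm_symm (v s') (v s''), hqw'] at hn
        by_cases c1 : s'' = s' + 1
        · exact Or.inl c1
        by_cases c2 : s'' = s' - 1
        · exact Or.inr c2
        · rw [if_neg c1, if_neg c2] at hn; omega
      rcases hD1 with h1 | h1 <;> rcases hD2 with h2 | h2 <;> rcases hD3 with h3 | h3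
      · exact hs's'' (h1.trans h2.symm)
      · exact hs's'' (h1.trans h2.symm)
      · exact aux_zmod_nz (p := p) 3 (by omega) (by omega)
          (by push_cast; linear_combination -h1 + h2 - h3)
      · exact aux_G 1 (by omega) (by omega) (s - 1)
          (by push_cast; linear_combination h2 - h3 - h1)
      · exact aux_G 1 (by omega) (by omega) s
          (by push_cast; linear_combination h3 + h1 - h2)
      · exact aux_zmod_nz (p := p) 3 (by omega) (by omega)
          (by push_cast; linear_combination h1 - h2 + h3)
      · exact hs's'' (h1.trans h2.symm)
      · exact hs's'' (h1.trans h2.symm)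
    -- dichotomy
    have FoB : ∀ i : ZMod p, negForm N (v i) (e1 (v (i+1))) = 1 ∨
        negForm N (v (i+1)) (e1 (v i)) = 1 := by
      intro i
      by_contra hcon
      push_neg at hcon
      obtain ⟨hnf, hnb⟩ := hcon
      have hne' : v i ≠ v (i+1) := by
        intro h
        have := hvinj h
        exact aux_G 1 (by omega) (by omega) i (by push_cast; linear_combination -this)
      have h1 := (hvadj i).2.2
      have hE := EXP (v (i+1)) (hvZ (i+1)) (v i)
      have hA : negForm N (v i) (e1 (v (i+1))) = 0 := by
        rcases VLrange (v i) (hvZ i) _ (he1 _ (hvZ (i+1))) with h | h | h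
        · exfalso
          have heq := VLneg (v i) (hvZ i) _ (he1 _ (hvZ (i+1))) h
          exact hne' (e1inj _ (hvZ i) _ (hvZ (i+1)) heq.symm)
        · exact h
        · exact absurd h hnf
      have hB : negForm N (v i) (e2 (v (i+1))) ≠ -1 := by
        intro h
        have heq := VLneg (v i) (hvZ i) _ (he2 _ (hvZ (i+1))) h
        apply hnb
        rw [← heq]
        exact VL2 (v (i+1)) (hvZ (i+1))
      have hC : negForm N (v i) (e3 (v (i+1))) ≠ -1 := by
        intro h
        have heq := VLneg (v i) (hvZ i) _ (he3 _ (hvZ (i+1))) h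
        apply hnb
        rw [← heq]
        exact VL3 (v (i+1)) (hvZ (i+1))
      have hBr := VLrange (v i) (hvZ i) _ (he2 _ (hvZ (i+1)))
      have hCr := VLrange (v i) (hvZ i) _ (he3 _ (hvZ (i+1)))
      rw [hE, hA] at h1
      rcases hBr with h | h | h <;> rcases hCr with h' | h' | h' <;> omega
    -- building the decomposition data for a forward listing
    have build : ∀ (V : ZMod p → (Fin N → ℤ)),
        (∀ i, V i ∈ C) → (∀ x ∈ C, ∃ i, V i = x) → Function.Injective V →
        (∀ i, negForm N (V i) (e1 (V (i + 1))) = 1) →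
        ∀ i : ZMod p, ∃ j : ZMod p, j ≠ i ∧ j ≠ i + 1 ∧
          V i = e1 (V i) - e1 (V (i + 1)) - e1 (V j) ∧
          (∀ l : ZMod p, negForm N (V i) (e1 (V l)) =
            (if l = i then -1 else 0) + (if l = i + 1 then 1 else 0)
              + (if l = j then 1 else 0)) := by
      intro V hVC hVsurj hVinj hFwd i
      have hVZ : ∀ k, V k ∈ Z := fun k => CsubZ _ (hVC k)
      have hAinj : ∀ x y : ZMod p, e1 (V x) = e1 (V y) → x = y :=
        fun x y h => hVinj (e1inj _ (hVZ x) _ (hVZ y) h)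
      obtain ⟨om, homF, homval, homne, hosplit⟩ :
          ∃ om, om ∈ F ∧ negForm N (V i) om = 1 ∧ om ≠ e1 (V (i+1)) ∧
            (e2 (V i) = e1 (V (i+1)) ∧ e3 (V i) = om ∨
             e2 (V i) = om ∧ e3 (V i) = e1 (V (i+1))) := by
        rcases VLpos (V i) (hVZ i) _ (he1 _ (hVZ (i+1))) (hFwd i) with hc | hc
        · exact ⟨e3 (V i), he3 _ (hVZ i), VL3 _ (hVZ i),
            (by rw [hc]; exact fun h => hne23 (V i) (hVZ i) h.symm), Or.inl ⟨hc.symm, rfl⟩⟩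
        · exact ⟨e2 (V i), he2 _ (hVZ i), VL2 _ (hVZ i),
            (by rw [hc]; exact hne23 (V i) (hVZ i)), Or.inr ⟨rfl, hc.symm⟩⟩
      obtain ⟨w, hwZ, hwval, hwe1⟩ := pexists om homF
      have hwC : w ∈ C := hclosed' (V i) (hVC i) w hwZ om homF
        (by rw [homval]; norm_num) (by rw [hwval]; norm_num)
      obtain ⟨j, rfl⟩ := hVsurj w hwC
      have hji : j ≠ i := by
        intro h
        rw [h] at hwval
        omega
      have hji1 : j ≠ i + 1 := by
        intro h
        apply homne
        rw [← hwe1, h]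
      refine ⟨j, hji, hji1, ?_, ?_⟩
      · have hd := hzdec (V i) (hVZ i)
        rcases hosplit with ⟨q1, q2⟩ | ⟨q1, q2⟩
        · rw [q1, q2, ← hwe1] at hd
          exact hd
        · rw [q1, q2, ← hwe1] at hd
          exact hd.trans (sub_right_comm _ _ _)
      · intro l
        have hVLl := VL (V i) (hVZ i) (e1 (V l)) (he1 _ (hVZ l))
        have cv : ∀ (x : Fin N → ℤ) (y : ZMod p) (t e : ℤ), x = e1 (V y) →
            (if e1 (V l) = x then t else e) = (if l = y then t else e) := by
          intro x y t e hx
          subst hx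
          by_cases h : l = y
          · rw [if_pos (congrArg (fun z => e1 (V z)) h), if_pos h]
          · rw [if_neg (fun hh => h (hAinj _ _ hh)), if_neg h]
        rcases hosplit with ⟨q1, q2⟩ | ⟨q1, q2⟩
        · rw [hVLl, cv _ i _ _ rfl, cv _ (i+1) _ _ q1,
            cv _ j _ _ (q2.trans hwe1.symm)]
        · rw [hVLl, cv _ i _ _ rfl, cv _ j _ _ (q1.trans hwe1.symm),
            cv _ (i+1) _ _ q2]
          ring
    have prop : ∀ i : ZMod p, (negForm N (v i) (e1 (v (i+1))) = 1) →
        (negForm N (v (i+1)) (e1 (v (i+1+1))) = 1) := by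
      intro i hfw
      rcases FoB (i+1) with h | h
      · exact h
      · exact (FBex i hfw h).elim
    rcases em (∃ i : ZMod p, negForm N (v i) (e1 (v (i+1))) = 1) with ⟨i0, hi0⟩ | hno
    · have hall : ∀ i : ZMod p, negForm N (v i) (e1 (v (i+1))) = 1 :=
        aux_zmod_reach (fun i => negForm N (v i) (e1 (v (i+1))) = 1) i0 hi0 prop
      have hDEC := fun i => build v hvC hvsurj hvinj hall i
      obtain ⟨m, hm, f, hfinj, hfF, hfimg⟩ := aux_final hp4 v (fun l => e1 (v l))
        hvZ hvinj hainj haF hNE hDEC hhit2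
      subst hm
      exact ⟨m, by omega, f, hfinj, hfF, by rw [hCimg, hfimg]⟩
    · have hallB : ∀ i : ZMod p, negForm N (v (i+1)) (e1 (v i)) = 1 :=
        fun i => (FoB i).resolve_left (fun h => hno ⟨i, h⟩)
      have hv'C : ∀ i : ZMod p, v (-i) ∈ C := fun i => hvC (-i)
      have hv'surj : ∀ x ∈ C, ∃ i : ZMod p, v (-i) = x := by
        intro x hx
        obtain ⟨i, hi⟩ := hvsurj x hx
        exact ⟨-i, by rw [neg_neg]; exact hi⟩
      have hv'inj : Function.Injective (fun i : ZMod p => v (-i)) := by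
        intro x y h
        have := hvinj h
        exact neg_inj.1 this
      have hv'fwd : ∀ i : ZMod p, negForm N (v (-i)) (e1 (v (-(i+1)))) = 1 := by
        intro i
        have hh := hallB (-i - 1)
        rw [show (-i - 1 + 1 : ZMod p) = -i by ring] at hh
        rw [show (-(i+1) : ZMod p) = -i - 1 by ring]
        exact hh
      have hDEC' := fun i => build (fun k => v (-k)) hv'C hv'surj hv'inj hv'fwd i
      have hNE' : ∀ i k : ZMod p, i ≠ k → negForm N (v (-i)) (v (-k)) =
          (if k = i + 1 then 1 else 0) + (if k = i - 1 then 1 else 0) := by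
        intro i k hik
        have h := hNE (-i) (-k) (fun hh => hik (neg_inj.1 hh))
        rw [h]
        have ee1 : (if (-k : ZMod p) = -i + 1 then (1:ℤ) else 0)
            = (if k = i - 1 then 1 else 0) := by
          by_cases hc : k = i - 1
          · rw [if_pos (by linear_combination -hc), if_pos hc]
          · rw [if_neg (fun hh => hc (by linear_combination -hh)), if_neg hc]
        have ee2 : (if (-k : ZMod p) = -i - 1 then (1:ℤ) else 0)
            = (if k = i + 1 then 1 else 0) := by
          by_cases hc : k = i + 1
          · rw [if_pos (by linear_combination -hc), if_pos hc]
          · rw [if_neg (fun hh => hc (by linear_combination -hh)), if_neg hc]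
        rw [ee1, ee2]
        ring
      have ha'inj : Function.Injective (fun l : ZMod p => e1 (v (-l))) := by
        intro x y h
        exact neg_inj.1 (hvinj (e1inj _ (hvZ (-x)) _ (hvZ (-y)) h))
      obtain ⟨m, hm, f, hfinj, hfF, hfimg⟩ := aux_final hp4 (fun k : ZMod p => v (-k))
        (fun l : ZMod p => e1 (v (-l))) (fun i => hvZ (-i)) hv'inj ha'inj
        (fun l => haF (-l)) hNE' hDEC' hhit2
      have hCimg' : C = Finset.image (fun k : ZMod p => v (-k)) Finset.univ := by
        apply Finset.Subset.antisymm
        · intro x hx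
          obtain ⟨i, hi⟩ := hv'surj x hx
          exact Finset.mem_image.2 ⟨i, Finset.mem_univ i, hi⟩
        · intro x hx
          obtain ⟨i, -, rfl⟩ := Finset.mem_image.1 hx
          exact hv'C i
      subst hm
      exact ⟨m, by omega, f, hfinj, hfF, by rw [hCimg', hfimg]⟩
end

section
/- For all integers t ≥ 1, x_1,…,x_t ≥ 1, y_1,…,y_t ≥ 1 with ∑_{i=1}^t y_i ≥ 3 and d ∈ {0,1}, the lattice Λ_Γ is negative definite: every ξ ∈ Λ_Γ satisfies ξ·ξ ≤ 0, and ξ·ξ = 0 implies ξ = 0. -/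
open Finset

/-!
Write `s_i` for the squares `g_i·g_i` and `ε_i` for the sign of the edge from `g_i` to `g_{i+1}`
of the cycle. Since `ε_i² = 1` and `∑ ξ_{i+1}² = ∑ ξ_i²`, completing squares along the cycle gives
`ξ·ξ = ∑ (s_i + 2) ξ_i² - ∑ (ξ_i - ε_i ξ_{i+1})²`, and both terms are `≤ 0` because `s_i ≤ -2`.
If `ξ·ξ = 0`, the second sum vanishes, so `ξ_i²` is constant around the cycle, and the first
vanishes at `i = 0`, where `s_0 = -x_1 - 2 < -2`; hence `ξ = 0`.
-/

lemma apply_eq_apply_zero_of_apply_add_one {α : Type*} {m : ℕ} {f : Fin (m + 1) → α}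
    (h : ∀ i, f (i + 1) = f i) (i : Fin (m + 1)) : f i = f 0 := by
  induction i using Fin.induction with
  | zero => rfl
  | succ i ih => rw [← Fin.coeSucc_eq_succ, h, ih]

section CyclicForm

variable {R : Type*} [CommRing R] {m : ℕ} {c ε ξ : Fin (m + 1) → R}

lemma sum_sq_sub_mul_add_one (hε : ∀ i, ε i ^ 2 = 1) :
    ∑ i, (ξ i - ε i * ξ (i + 1)) ^ 2 =
      2 * ∑ i, ξ i ^ 2 - 2 * ∑ i, ε i * ξ i * ξ (i + 1) := by
  have hshift : ∑ i, ξ (i + 1) ^ 2 = ∑ i, ξ i ^ 2 :=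
    Equiv.sum_comp (Equiv.addRight 1) (fun i => ξ i ^ 2)
  have hterm : ∀ i, (ξ i - ε i * ξ (i + 1)) ^ 2 =
      ξ i ^ 2 + ξ (i + 1) ^ 2 - 2 * (ε i * ξ i * ξ (i + 1)) := fun i => by
    linear_combination ξ (i + 1) ^ 2 * hε i
  simp only [hterm, sum_sub_distrib, sum_add_distrib, hshift, ← mul_sum]
  ring

variable [LinearOrder R] [IsStrictOrderedRing R]

lemma sum_mul_sq_sub_sum_sq_nonpos (hc : ∀ i, c i ≤ 0) :
    ∑ i, c i * ξ i ^ 2 - ∑ i, (ξ i - ε i * ξ (i + 1)) ^ 2 ≤ 0 := by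
  have hdiag : ∑ i, c i * ξ i ^ 2 ≤ 0 :=
    sum_nonpos fun i _ => mul_nonpos_of_nonpos_of_nonneg (hc i) (sq_nonneg _)
  have hedges : 0 ≤ ∑ i, (ξ i - ε i * ξ (i + 1)) ^ 2 := sum_nonneg fun i _ => sq_nonneg _
  linarith

lemma eq_zero_of_sum_mul_sq_sub_sum_sq_eq_zero (hc : ∀ i, c i ≤ 0) {i₀ : Fin (m + 1)}
    (hi₀ : c i₀ ≠ 0) (hε : ∀ i, ε i ^ 2 = 1)
    (h : ∑ i, c i * ξ i ^ 2 - ∑ i, (ξ i - ε i * ξ (i + 1)) ^ 2 = 0) : ξ = 0 := by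
  have hterm : ∀ i, c i * ξ i ^ 2 ≤ 0 := fun i =>
    mul_nonpos_of_nonpos_of_nonneg (hc i) (sq_nonneg _)
  have hdiag : ∑ i, c i * ξ i ^ 2 ≤ 0 := sum_nonpos fun i _ => hterm i
  have hedges : 0 ≤ ∑ i, (ξ i - ε i * ξ (i + 1)) ^ 2 := sum_nonneg fun i _ => sq_nonneg _
  have hdiag₀ : ∑ i, c i * ξ i ^ 2 = 0 := by linarith
  have hedges₀ : ∑ i, (ξ i - ε i * ξ (i + 1)) ^ 2 = 0 := by linarith
  have hξi₀ : ξ i₀ = 0 := by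
    simpa [hi₀] using (sum_eq_zero_iff_of_nonpos fun i _ => hterm i).1 hdiag₀ i₀ (mem_univ _)
  have hedge : ∀ i, ξ i = ε i * ξ (i + 1) := fun i =>
    sub_eq_zero.1 <| pow_eq_zero_iff two_ne_zero |>.1 <|
      (sum_eq_zero_iff_of_nonneg fun i _ => sq_nonneg _).1 hedges₀ i (mem_univ _)
  have hsq : ∀ i, ξ (i + 1) ^ 2 = ξ i ^ 2 := fun i => by
    rw [hedge i, mul_pow, hε, one_mul]
  have hconst : ∀ i, ξ i ^ 2 = ξ i₀ ^ 2 := fun i =>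
    (apply_eq_apply_zero_of_apply_add_one (f := fun i => ξ i ^ 2) hsq i).trans
      (apply_eq_apply_zero_of_apply_add_one (f := fun i => ξ i ^ 2) hsq i₀).symm
  funext i
  simpa [hξi₀] using hconst i

end CyclicForm

def edgeSign (m d : ℕ) (i : Fin (m + 1)) : ℤ := if i = Fin.last m then (-1) ^ d else 1

lemma edgeSign_sq (m d : ℕ) (i : Fin (m + 1)) : edgeSign m d i ^ 2 = 1 := by
  unfold edgeSign
  split_ifs <;> simp [← pow_mul, pow_mul']

section Gram

variable {m : ℕ} (sq : Fin (m + 1) → ℤ) (d : ℕ)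

lemma gramOf_eq (hm : 2 ≤ m) (i j : Fin (m + 1)) :
    gramOf (m + 1) sq d i j =
      (if i = j then sq i else 0) + (if j = i + 1 then edgeSign m d i else 0) +
        (if i = j + 1 then edgeSign m d j else 0) := by
  have hi := i.isLt
  have hj := j.isLt
  simp only [gramOf, edgeSign, Fin.ext_iff, Fin.val_add_one, Fin.val_last, Nat.add_sub_cancel]
  split_ifs <;> first | ring1 | omega

lemma sum_sum_mul_gramOf (hm : 2 ≤ m) (ξ : Fin (m + 1) → ℤ) :
    ∑ i, ∑ j, ξ i * ξ j * gramOf (m + 1) sq d i j =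
      ∑ i, sq i * ξ i ^ 2 + 2 * ∑ i, edgeSign m d i * ξ i * ξ (i + 1) := by
  have hlower : ∑ i, ∑ j, ξ i * ξ j * (if i = j + 1 then edgeSign m d j else 0) =
      ∑ i, edgeSign m d i * ξ i * ξ (i + 1) := by
    rw [sum_comm]
    simp only [mul_ite, mul_zero, sum_ite_eq', mem_univ, if_true]
    exact sum_congr rfl fun i _ => by ring
  simp only [gramOf_eq sq d hm, mul_add, sum_add_distrib]
  rw [hlower]
  simp only [mul_ite, mul_zero, sum_ite_eq, sum_ite_eq', mem_univ, if_true, two_mul,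
    ← sum_add_distrib]
  exact sum_congr rfl fun i _ => by ring

lemma sum_sum_mul_gramOf_eq_sub (hm : 2 ≤ m) (ξ : Fin (m + 1) → ℤ) :
    ∑ i, ∑ j, ξ i * ξ j * gramOf (m + 1) sq d i j =
      ∑ i, (sq i + 2) * ξ i ^ 2 - ∑ i, (ξ i - edgeSign m d i * ξ (i + 1)) ^ 2 := by
  rw [sum_sum_mul_gramOf sq d hm, sum_sq_sub_mul_add_one (edgeSign_sq m d)]
  simp only [add_mul, sum_add_distrib, ← mul_sum]
  ring

end Gram

lemma sqOf_le_neg_two {t : ℕ} (x y : Fin t → ℕ) (n : ℕ) (j : Fin n) : sqOf x y n j ≤ -2 := by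
  have : 0 ≤ ∑ i : Fin t, if (j : ℕ) = blockStart y i then (x i : ℤ) else 0 :=
    sum_nonneg fun i _ => by split_ifs <;> positivity
  unfold sqOf
  linarith

lemma sqOf_le_of_eq_blockStart {t : ℕ} (x y : Fin t → ℕ) (n : ℕ) {i : Fin t} {j : Fin n}
    (h : (j : ℕ) = blockStart y i) : sqOf x y n j ≤ -2 - x i := by
  have : (x i : ℤ) ≤ ∑ i' : Fin t, if (j : ℕ) = blockStart y i' then (x i' : ℤ) else 0 := by
    simpa [h] using
      single_le_sum (f := fun i' => if (j : ℕ) = blockStart y i' then (x i' : ℤ) else 0)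
        (fun i' _ => by split_ifs <;> positivity) (mem_univ i)
  unfold sqOf
  linarith

lemma blockStart_zero {s : ℕ} (y : Fin (s + 1) → ℕ) : blockStart y 0 = 0 := by
  simp [blockStart]

theorem stmt_6_general (t : ℕ) (ht : 1 ≤ t) (x y : Fin t → ℕ)
    (hx : ∀ i, 1 ≤ x i)
    (n : ℕ) (hn3 : 3 ≤ n)
    (d : ℕ) (ξ : Fin n → ℤ) :
    (∑ i, ∑ j, ξ i * ξ j * gramOf n (sqOf x y n) d i j) ≤ 0 ∧
      ((∑ i, ∑ j, ξ i * ξ j * gramOf n (sqOf x y n) d i j) = 0 → ξ = 0) := by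
  obtain ⟨s, rfl⟩ : ∃ s, t = s + 1 := ⟨t - 1, by omega⟩
  obtain ⟨m, rfl⟩ : ∃ m, n = m + 1 := ⟨n - 1, by omega⟩
  have hc : ∀ j, sqOf x y (m + 1) j + 2 ≤ 0 := fun j => by
    linarith [sqOf_le_neg_two x y (m + 1) j]
  have hc₀ : sqOf x y (m + 1) 0 + 2 ≠ 0 := by
    have := sqOf_le_of_eq_blockStart x y (m + 1) (i := 0) (j := 0) (blockStart_zero y).symm
    have := hx 0
    omega
  rw [sum_sum_mul_gramOf_eq_sub _ _ (by omega)]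
  exact ⟨sum_mul_sq_sub_sum_sq_nonpos hc,
    eq_zero_of_sum_mul_sq_sub_sum_sq_eq_zero hc hc₀ (edgeSign_sq m d)⟩

/-- the lattice `Λ_Γ` (realized as `Fin n → ℤ` with the bilinear
form given by the Gram matrix `gramOf`) is negative definite. -/
theorem stmt_6 (t : ℕ) (ht : 1 ≤ t) (x y : Fin t → ℕ)
    (hx : ∀ i, 1 ≤ x i) (hy : ∀ i, 1 ≤ y i)
    (n : ℕ) (hn : n = ∑ i, y i) (hn3 : 3 ≤ n)
    (d : ℕ) (hd : d = 0 ∨ d = 1) (ξ : Fin n → ℤ) :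
    (∑ i, ∑ j, ξ i * ξ j * gramOf n (sqOf x y n) d i j) ≤ 0 ∧
      ((∑ i, ∑ j, ξ i * ξ j * gramOf n (sqOf x y n) d i j) = 0 → ξ = 0) :=
  stmt_6_general t ht x y hx n hn3 d ξ
end

section
/- Let V ⊂ Z^N be a circular subset such that Λ_V ⊂ Z^N has finite and odd index and whose Wu element W = ∑_{v∈V} v satisfies W·W = -N. Then there exists a canonical basis E of Z^N adapted to V. In particular, for each e ∈ E one has ∑_{v∈V} v·e = 1. -/
open Finset

/-!
Every `v ∈ V` has exactly two neighbours, each pairing with it to `±1`, so `W·v + v·v` is even: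
`W` is characteristic for `Λ_V`. Since the index `n` of `Λ_V` is odd, `n eᵢ ∈ Λ_V` for each
standard basis vector, and characteristicity gives `n Wᵢ + n²` even, i.e. every coordinate `Wᵢ`
is odd. Then `∑ Wᵢ² = -W·W = N` forces `Wᵢ = ±1`, and `E = {-Wᵢ eᵢ}` is the adapted basis.
-/

lemma negForm_eq_neg_dotProduct (N : ℕ) (u v : Fin N → ℤ) : negForm N u v = -(u ⬝ᵥ v) := rfl

def IsCharacteristic {ι : Type*} [Fintype ι] (Λ : AddSubgroup (ι → ℤ)) (w : ι → ℤ) : Prop :=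
  ∀ x ∈ Λ, Even (w ⬝ᵥ x + x ⬝ᵥ x)

section Characteristic

variable {ι : Type*} [Fintype ι]

lemma isCharacteristic_closure {S : Set (ι → ℤ)} {w : ι → ℤ}
    (h : ∀ v ∈ S, Even (w ⬝ᵥ v + v ⬝ᵥ v)) : IsCharacteristic (AddSubgroup.closure S) w := by
  intro x hx
  induction hx using AddSubgroup.closure_induction with
  | mem v hv => exact h v hv
  | zero => simp
  | add x y _ _ hx hy =>
    have : w ⬝ᵥ (x + y) + (x + y) ⬝ᵥ (x + y) =
        (w ⬝ᵥ x + x ⬝ᵥ x) + (w ⬝ᵥ y + y ⬝ᵥ y) + 2 * (x ⬝ᵥ y) := by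
      simp only [dotProduct_add, add_dotProduct, dotProduct_comm y x]
      ring
    rw [this]
    exact (hx.add hy).add (even_two_mul _)
  | neg x _ hx =>
    have : w ⬝ᵥ (-x) + (-x) ⬝ᵥ (-x) = (w ⬝ᵥ x + x ⬝ᵥ x) - 2 * (w ⬝ᵥ x) := by
      simp only [dotProduct_neg, neg_dotProduct, neg_neg]
      ring
    rw [this]
    exact hx.sub (even_two_mul _)

-- Test the characteristic property on `Λ.index • eᵢ`, which lies in `Λ`.
lemma IsCharacteristic.odd_apply [DecidableEq ι] {Λ : AddSubgroup (ι → ℤ)} {w : ι → ℤ}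
    (hw : IsCharacteristic Λ w) (hΛ : Odd Λ.index) (i : ι) : Odd (w i) := by
  have h := hw _ (Λ.nsmul_index_mem (Pi.single i 1))
  have hn : Odd (Λ.index : ℤ) := by exact_mod_cast hΛ
  rw [dotProduct_smul, smul_dotProduct, dotProduct_smul] at h
  have : Odd ((Λ.index : ℤ) * w i) := by
    simpa [dotProduct_single] using h.sub_odd (hn.mul hn)
  exact (Int.odd_mul.1 this).2

lemma mul_self_eq_one_of_odd_of_dotProduct_self {w : ι → ℤ} (hodd : ∀ i, Odd (w i))
    (hw : w ⬝ᵥ w = Fintype.card ι) (i : ι) : w i * w i = 1 := by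
  have hle : ∀ j ∈ (Finset.univ : Finset ι), (1 : ℤ) ≤ w j * w j := fun j _ => by
    have hj : w j ≠ 0 := by rintro h0; simpa [h0] using hodd j
    exact mul_self_pos.2 hj
  have hsum : ∑ j : ι, (1 : ℤ) = ∑ j : ι, w j * w j := by simpa [dotProduct] using hw.symm
  exact ((Finset.sum_eq_sum_iff_of_le hle).1 hsum i (Finset.mem_univ i)).symm

end Characteristic

section Circular

variable {N : ℕ} {V : Finset (Fin N → ℤ)}

lemma IsCircular.even_sum_negForm_erase (hV : IsCircular N V) {v : Fin N → ℤ} (hv : v ∈ V) :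
    Even (∑ u ∈ V.erase v, negForm N u v) := by
  obtain ⟨a, b, hab, hnbrs⟩ := Finset.card_eq_two.1 (hV.2.2 v hv)
  have hnbrs_erase : (V.erase v).filter (fun u => negForm N u v = 1 ∨ negForm N u v = -1) =
      {a, b} := by
    rw [← hnbrs]
    ext u
    simp only [Finset.mem_filter, Finset.mem_erase]
    tauto
  have hsum : ∑ u ∈ V.erase v, negForm N u v = negForm N a v + negForm N b v := by
    rw [← Finset.sum_filter_of_ne (p := fun u => negForm N u v = 1 ∨ negForm N u v = -1),
      hnbrs_erase, Finset.sum_pair hab]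
    intro u hu h0
    rcases hV.2.1 u (Finset.mem_of_mem_erase hu) v hv (Finset.ne_of_mem_erase hu) with h | h | h
    · exact Or.inr h
    · exact absurd h h0
    · exact Or.inl h
  have hodd : ∀ u ∈ ({a, b} : Finset (Fin N → ℤ)), Odd (negForm N u v) := by
    intro u hu
    rw [← hnbrs_erase] at hu
    rcases (Finset.mem_filter.1 hu).2 with h | h <;> rw [h] <;> decide
  rw [hsum]
  exact (hodd a (by simp)).add_odd (hodd b (by simp))

lemma IsCircular.even_wu_dotProduct_add_self (hV : IsCircular N V) {v : Fin N → ℤ}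
    (hv : v ∈ V) : Even ((∑ u ∈ V, u) ⬝ᵥ v + v ⬝ᵥ v) := by
  have hsplit : (∑ u ∈ V, u) ⬝ᵥ v + v ⬝ᵥ v =
      2 * (v ⬝ᵥ v) - ∑ u ∈ V.erase v, negForm N u v := by
    rw [sum_dotProduct, ← Finset.add_sum_erase _ _ hv]
    simp only [negForm_eq_neg_dotProduct, Finset.sum_neg_distrib]
    ring
  rw [hsplit]
  exact (even_two_mul _).sub (hV.even_sum_negForm_erase hv)

end Circular

lemma injective_single_of_ne_zero {ι M : Type*} [DecidableEq ι] [Zero M] {c : ι → M}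
    (hc : ∀ i, c i ≠ 0) : Function.Injective fun i => Pi.single i (c i) := by
  intro i j h
  by_contra hij
  exact hc i (by simpa [hij] using congrFun h i)

section SingleBasis

variable {N : ℕ} {c : Fin N → ℤ}

lemma negForm_single_single (i j : Fin N) (a b : ℤ) :
    negForm N (Pi.single i a) (Pi.single j b) = if i = j then -(a * b) else 0 := by
  rw [negForm_eq_neg_dotProduct, single_dotProduct]
  split_ifs with h
  · rw [h, Pi.single_eq_same]
  · rw [Pi.single_eq_of_ne h, mul_zero, neg_zero]

lemma isCanonicalBasis_image_single (hc : ∀ i, c i * c i = 1) :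
    IsCanonicalBasis N (Finset.univ.image fun i => Pi.single i (c i)) := by
  have hinj := injective_single_of_ne_zero (c := c) fun i h0 => by simpa [h0] using hc i
  refine ⟨by simp [Finset.card_image_of_injective _ hinj], ?_, ?_⟩
  · simp [negForm_single_single, hc]
  · simp only [Finset.mem_image, Finset.mem_univ, true_and]
    rintro _ ⟨i, rfl⟩ _ ⟨j, rfl⟩ hij
    rw [negForm_single_single, if_neg (fun h : i = j => hij (h ▸ rfl))]

lemma sum_image_single (hc : ∀ i, c i ≠ 0) :
    ∑ e ∈ Finset.univ.image (fun i => Pi.single i (c i)), e = c := by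
  rw [Finset.sum_image fun i _ j _ h => injective_single_of_ne_zero hc h]
  exact Finset.univ_sum_single c

end SingleBasis

/-- a circular subset `V ⊂ ℤ^N` such that `Λ_V` has finite and odd
index and whose Wu element `W` satisfies `W·W = -N` admits an adapted canonical
basis `E`; in particular `∑_{v ∈ V} v·e = 1` for each `e ∈ E`. -/
theorem stmt_7 (N : ℕ) (V : Finset (Fin N → ℤ))
    (hcirc : IsCircular N V)
    (hodd : Odd (AddSubgroup.closure (V : Set (Fin N → ℤ))).index)
    (hW : negForm N (∑ v ∈ V, v) (∑ v ∈ V, v) = -(N : ℤ)) :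
    ∃ E : Finset (Fin N → ℤ), IsAdaptedBasis N E V ∧
      ∀ e ∈ E, (∑ v ∈ V, negForm N v e) = 1 := by
  set W := ∑ v ∈ V, v
  have hchar : IsCharacteristic (AddSubgroup.closure (V : Set (Fin N → ℤ))) W :=
    isCharacteristic_closure fun v hv => hcirc.even_wu_dotProduct_add_self hv
  have hunit : ∀ i, W i * W i = 1 :=
    mul_self_eq_one_of_odd_of_dotProduct_self (hchar.odd_apply hodd)
      (by simpa [negForm_eq_neg_dotProduct] using hW)
  have hunit_neg : ∀ i, (-W) i * (-W) i = 1 := by simpa using hunit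
  refine ⟨Finset.univ.image fun i => Pi.single i ((-W) i),
    ⟨isCanonicalBasis_image_single hunit_neg, ?_⟩, ?_⟩
  · rw [sum_image_single fun i h0 => by simpa [h0] using hunit_neg i, neg_neg]
  · simp only [Finset.mem_image, Finset.mem_univ, true_and, forall_exists_index,
      forall_apply_eq_imp_iff]
    intro i
    calc ∑ v ∈ V, negForm N v (Pi.single i ((-W) i))
        = -(W ⬝ᵥ Pi.single i ((-W) i)) := by
          simp only [negForm_eq_neg_dotProduct, Finset.sum_neg_distrib, W, sum_dotProduct]
      _ = W i * W i := by rw [dotProduct_single, Pi.neg_apply, mul_neg, neg_neg]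
      _ = 1 := hunit i
end

section
/- Let V ⊂ Z^N be a circular subset and E a canonical basis adapted to V, with Wu element W. Then v·e ∈ {-1,0,1,2} for every v ∈ V and e ∈ E. Moreover, for every v ∈ V with W·v = v·v + 2 there exists exactly one e ∈ E with v·e ∈ {-1,2}. -/
open Finset

lemma negForm_sum_left' (N : ℕ) (V : Finset (Fin N → ℤ)) (v : Fin N → ℤ) :
    negForm N (∑ u ∈ V, u) v = ∑ u ∈ V, negForm N u v := by
  simp only [negForm, Finset.sum_apply, Finset.sum_mul, ← Finset.sum_neg_distrib]
  rw [Finset.sum_comm]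

lemma int_interval_cases (x : ℤ) (h1 : -1 ≤ x) (h2 : x ≤ 2) :
    x = -1 ∨ x = 0 ∨ x = 1 ∨ x = 2 := by omega

/-- for a circular subset `V` with adapted canonical basis `E`, one
has `v·e ∈ {-1,0,1,2}` for all `v ∈ V`, `e ∈ E`; moreover every `v ∈ V` with
`W·v = v·v + 2` determines a unique `e ∈ E` with `v·e ∈ {-1,2}`. -/
theorem stmt_9 (N : ℕ) (V E : Finset (Fin N → ℤ))
    (hcirc : IsCircular N V) (hE : IsAdaptedBasis N E V) :
    (∀ v ∈ V, ∀ e ∈ E,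
      negForm N v e = -1 ∨ negForm N v e = 0 ∨ negForm N v e = 1 ∨
        negForm N v e = 2) ∧
    ∀ v ∈ V, negForm N (∑ u ∈ V, u) v = negForm N v v + 2 →
      ∃! e, e ∈ E ∧ (negForm N v e = -1 ∨ negForm N v e = 2) := by
  classical
  rcases Nat.eq_zero_or_pos N with hN | hN
  · -- degenerate case `N = 0`: `V` must be empty
    subst hN
    have hVfalse : ∀ v ∈ V, False := by
      intro v hv
      have h3 := hcirc.1 v hv
      have hsub : compOf 0 V v ⊆ V := Finset.filter_subset _ _
      have hle : (compOf 0 V v).card ≤ V.card := Finset.card_le_card hsub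
      have hV1 : V.card ≤ 1 := Finset.card_le_one.mpr
        (fun a _ b _ => funext fun i => i.elim0)
      omega
    exact ⟨fun v hv => (hVfalse v hv).elim, fun v hv => (hVfalse v hv).elim⟩
  have : NeZero N := ⟨hN.ne'⟩
  obtain ⟨⟨hcard, hnorm, horth⟩, hadapt⟩ := hE
  set W : Fin N → ℤ := ∑ u ∈ V, u with hWdef
  -- structure of elements of E: each is `±` a standard basis vector
  have hstruct : ∀ e : Fin N → ℤ, e ∈ E →
      ∃ j : Fin N, (∀ i, i ≠ j → e i = 0) ∧ (e j = 1 ∨ e j = -1) := by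
    intro e he
    have h1 : ∑ i, e i * e i = 1 := by
      have := hnorm e he; simp only [negForm] at this; linarith
    have hterm : ∀ i, 0 ≤ e i * e i := fun i => mul_self_nonneg _
    have hex : ∃ j, e j ≠ 0 := by
      by_contra h; push_neg at h
      simp [h] at h1
    obtain ⟨j, hj⟩ := hex
    have hj1 : 1 ≤ e j * e j := by
      rcases lt_trichotomy (e j) 0 with h | h | h
      · nlinarith
      · exact absurd h hj
      · nlinarith
    have hsplit : e j * e j + ∑ x ∈ Finset.univ.erase j, e x * e x = 1 := by
      have := Finset.add_sum_erase Finset.univ (fun i => e i * e i)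
        (Finset.mem_univ j)
      simpa using this.trans h1
    have hnn : 0 ≤ ∑ i ∈ Finset.univ.erase j, e i * e i :=
      Finset.sum_nonneg fun i _ => hterm i
    have hzsum : ∑ i ∈ Finset.univ.erase j, e i * e i = 0 := by linarith
    have hzero : ∀ i ∈ Finset.univ.erase j, e i * e i = 0 :=
      (Finset.sum_eq_zero_iff_of_nonneg (fun i _ => hterm i)).mp hzsum
    refine ⟨j, fun i hi => ?_, ?_⟩
    · exact mul_self_eq_zero.mp (hzero i (Finset.mem_erase.mpr ⟨hi, Finset.mem_univ i⟩))
    · have : e j * e j = 1 := by linarith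
      exact mul_self_eq_one_iff.mp this
  choose! J hJ0 hJ1 using hstruct
  have hJinj : ∀ e ∈ E, ∀ f ∈ E, J e = J f → e = f := by
    intro e he f hf hJ
    by_contra hne
    have h0 := horth e he f hf hne
    have hs : ∑ i, e i * f i = e (J e) * f (J e) :=
      Finset.sum_eq_single_of_mem (J e) (Finset.mem_univ _)
        (fun i _ hi => by rw [hJ0 e he i hi, zero_mul])
    have h0' : -(e (J e) * f (J e)) = 0 := by rw [negForm, hs] at h0; exact h0
    rcases hJ1 e he with h1 | h1 <;> rcases (hJ ▸ hJ1 f hf) with h2 | h2 <;>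
      rw [h1, h2] at h0' <;> omega
  have hJsurj : ∀ i : Fin N, ∃ e ∈ E, J e = i := by
    have himg : E.image J = Finset.univ := by
      apply Finset.eq_univ_of_card
      rw [Finset.card_image_of_injOn (fun e he f hf h => hJinj e he f hf h), hcard,
        Fintype.card_fin]
    intro i
    have : i ∈ E.image J := by rw [himg]; exact Finset.mem_univ i
    simpa using this
  have hWe : ∀ e ∈ E, W (J e) = -(e (J e)) := by
    intro e he
    rw [hadapt]
    have h1 : (∑ f ∈ E, f) (J e) = e (J e) := by
      rw [Finset.sum_apply]
      exact Finset.sum_eq_single_of_mem e he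
        (fun f hf hfe => hJ0 f hf (J e) (fun h => hfe (hJinj f hf e he h.symm)))
    simp only [Pi.neg_apply, h1]
  have hW : ∀ i, W i = 1 ∨ W i = -1 := by
    intro i
    obtain ⟨e, he, hJe⟩ := hJsurj i
    rw [← hJe, hWe e he]
    rcases hJ1 e he with h | h <;> rw [h] <;> norm_num
  have hform : ∀ (v e : Fin N → ℤ), e ∈ E → negForm N v e = W (J e) * v (J e) := by
    intro v e he
    have hs : ∑ i, v i * e i = v (J e) * e (J e) :=
      Finset.sum_eq_single_of_mem (J e) (Finset.mem_univ _)
        (fun i _ hi => by rw [hJ0 e he i hi, mul_zero])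
    rw [negForm, hs, hWe e he]; ring
  -- the circularity bound `W·v ≤ v·v + 2`
  have hbound : ∀ v ∈ V, negForm N W v ≤ negForm N v v + 2 := by
    intro v hv
    rw [hWdef, negForm_sum_left']
    have hsplit := Finset.add_sum_erase V (fun u => negForm N u v) hv
    have h1 : ∀ u ∈ V.erase v, negForm N u v ≤
        if (negForm N u v = 1 ∨ negForm N u v = -1) then 1 else 0 := by
      intro u hu
      rw [Finset.mem_erase] at hu
      split
      · next h => rcases h with h | h <;> omega
      · next h =>
        push_neg at h
        rcases hcirc.2.1 u hu.2 v hv hu.1 with h' | h' | h' <;> omega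
    have h2 : ∑ u ∈ V.erase v,
        (if (negForm N u v = 1 ∨ negForm N u v = -1) then (1 : ℤ) else 0) = 2 := by
      rw [Finset.sum_boole]
      have hfe : (V.erase v).filter (fun u => negForm N u v = 1 ∨ negForm N u v = -1)
          = V.filter (fun u => u ≠ v ∧ (negForm N u v = 1 ∨ negForm N u v = -1)) := by
        ext u
        simp only [Finset.mem_filter, Finset.mem_erase]
        tauto
      rw [hfe, hcirc.2.2 v hv]
      norm_num
    have h3 := Finset.sum_le_sum h1
    linarith
  -- key identity: `∑ᵢ (wᵢ² - wᵢ) = W·v - v·v` where `wᵢ = Wᵢvᵢ`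
  have key : ∀ v : Fin N → ℤ,
      (∑ i, ((W i * v i) * (W i * v i) - W i * v i)) = negForm N W v - negForm N v v := by
    intro v
    have h1 : ∀ i, (W i * v i) * (W i * v i) = v i * v i := by
      intro i; rcases hW i with h | h <;> rw [h] <;> ring
    rw [Finset.sum_sub_distrib]
    simp only [h1, negForm]
    ring
  have tnonneg : ∀ (v : Fin N → ℤ) (i : Fin N),
      0 ≤ (W i * v i) * (W i * v i) - W i * v i := by
    intro v i
    rcases le_or_gt (W i * v i) 0 with h | h <;> nlinarith
  have tle : ∀ v ∈ V, ∀ i : Fin N, (W i * v i) * (W i * v i) - W i * v i ≤ 2 := by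
    intro v hv i
    have h1 : (W i * v i) * (W i * v i) - W i * v i ≤
        ∑ j, ((W j * v j) * (W j * v j) - W j * v j) :=
      Finset.single_le_sum (fun j _ => tnonneg v j) (Finset.mem_univ i)
    have h2 := key v
    have h3 := hbound v hv
    linarith
  have hbnds : ∀ v ∈ V, ∀ i : Fin N, -1 ≤ W i * v i ∧ W i * v i ≤ 2 := by
    intro v hv i
    have := tle v hv i
    constructor <;> nlinarith [sq_nonneg (W i * v i + 1), sq_nonneg (W i * v i - 2)]
  constructor
  · intro v hv e he
    rw [hform v e he]
    exact int_interval_cases _ (hbnds v hv (J e)).1 (hbnds v hv (J e)).2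
  · intro v hv hWv
    have hS : (∑ i, ((W i * v i) * (W i * v i) - W i * v i)) = 2 := by
      rw [key v]; rw [hWv]; ring
    have hex : ∃ i, W i * v i = -1 ∨ W i * v i = 2 := by
      by_contra h
      push_neg at h
      have hz : ∀ i ∈ (Finset.univ : Finset (Fin N)),
          (W i * v i) * (W i * v i) - W i * v i = 0 := by
        intro i _
        have hb := hbnds v hv i
        have hn := h i
        have h01 : W i * v i = 0 ∨ W i * v i = 1 := by
          rcases int_interval_cases _ hb.1 hb.2 with h' | h' | h' | h'
          · exact absurd h' hn.1
          · exact Or.inl h'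
          · exact Or.inr h'
          · exact absurd h' hn.2
        rcases h01 with h' | h' <;> rw [h'] <;> ring
      rw [Finset.sum_eq_zero hz] at hS
      exact absurd hS (by norm_num)
    obtain ⟨i₀, hi₀⟩ := hex
    have ht : ∀ i, (W i * v i = -1 ∨ W i * v i = 2) →
        (W i * v i) * (W i * v i) - W i * v i = 2 := by
      intro i h; rcases h with h | h <;> rw [h] <;> ring
    have huniq : ∀ i, (W i * v i = -1 ∨ W i * v i = 2) → i = i₀ := by
      intro i hi
      by_contra hne
      have hpair := Finset.sum_le_sum_of_subset_of_nonneg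
        (Finset.subset_univ ({i, i₀} : Finset (Fin N))) (fun j _ _ => tnonneg v j)
      rw [Finset.sum_pair hne, hS, ht i hi, ht i₀ hi₀] at hpair
      linarith
    obtain ⟨e₀, he₀, hJe₀⟩ := hJsurj i₀
    refine ⟨e₀, ⟨he₀, ?_⟩, ?_⟩
    · rw [hform v e₀ he₀, hJe₀]; exact hi₀
    · rintro e' ⟨he', hval⟩
      rw [hform v e' he'] at hval
      exact hJinj e' he' e₀ he₀ ((huniq (J e') hval).trans hJe₀.symm)
end
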